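/- arXiv:2411.05637 — 9 statements merged into one kernel-verified Lean document; each statement's English description precedes it below -/
import Mathlib

section
/- Suppose a ∈ C²(ℝ) satisfies a' > 0 and a'' > 0 on ℝ, and F satisfies F' = a. Let N ≥ 6 and let X = {X_1,…,X_N} ⊂ K_a be a set of N distinct points with X_i = P(u_i, v_i). If there exists Q ∈ ℝ^{3×2} such that rank(A_X − Π^N(Q)) = 2, then X does not have an order that forms a T_N configuration. -/
open Matrix

noncomputable section

/-- The map `P(u,v)` into `ℝ^{3×2}` from the paper. -/
def Pmat (a F : ℝ → ℝ) (u v : ℝ) : Matrix (Fin 3) (Fin 2) ℝ :=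
  !![u, v; a v, u; u * a v, u ^ 2 / 2 + F v]

/-- The ordered family `X` forms a `T_N` configuration. -/
def IsTNConfig {m n N : ℕ} (X : Fin N → Matrix (Fin m) (Fin n) ℝ) : Prop :=
  4 ≤ N ∧ Function.Injective X ∧
    (∀ i j, i ≠ j → (X i - X j).rank ≠ 1) ∧
    ∃ (B : Matrix (Fin m) (Fin n) ℝ) (C : Fin N → Matrix (Fin m) (Fin n) ℝ)
      (κ : Fin N → ℝ),
      (∀ i, 1 < κ i) ∧ (∀ i, (C i).rank = 1) ∧ (∑ i, C i = 0) ∧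
      ∀ i, X i = B + (∑ j ∈ Finset.univ.filter (fun j => j < i), C j) + κ i • C i

/-- The family `X` has an order (enumeration) that forms a `T_N` configuration. -/
def HasTNOrder {m n N : ℕ} (X : Fin N → Matrix (Fin m) (Fin n) ℝ) : Prop :=
  ∃ σ : Equiv.Perm (Fin N), IsTNConfig (X ∘ σ)

/-- The matrix `A_X - Π^N(Q) ∈ ℝ^{3 × 2N}`, with the `2N` columns indexed by
`Fin N ⊕ Fin N`: the first `N` columns are `(u_j, a(v_j), u_j a(v_j))ᵀ - (first column of Q)`
and the last `N` columns are `(v_j, u_j, u_j²/2 + F(v_j))ᵀ - (second column of Q)`. -/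
def AmatDiff (a F : ℝ → ℝ) {N : ℕ} (u v : Fin N → ℝ)
    (Q : Matrix (Fin 3) (Fin 2) ℝ) : Matrix (Fin 3) (Fin N ⊕ Fin N) ℝ :=
  Matrix.of fun i => Sum.elim
    (fun j => Pmat a F (u j) (v j) i 0 - Q i 0)
    (fun j => Pmat a F (u j) (v j) i 1 - Q i 1)

namespace TNAux

open Module Submodule Set

def qf (n : Fin 3 → ℝ) (Z : Matrix (Fin 3) (Fin 2) ℝ) : ℝ :=
  n 0 * (Z 1 0 * Z 2 1 - Z 2 0 * Z 1 1)
  + n 1 * (Z 2 0 * Z 0 1 - Z 0 0 * Z 2 1)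
  + n 2 * (Z 0 0 * Z 1 1 - Z 1 0 * Z 0 1)

lemma qf_affine (n : Fin 3 → ℝ) (Z C : Matrix (Fin 3) (Fin 2) ℝ) (c : ℝ) :
    qf n (Z + c • C) = (1 - c) * qf n Z + c * qf n (Z + C) + (c ^ 2 - c) * qf n C := by
  simp only [qf, Matrix.add_apply, Matrix.smul_apply, smul_eq_mul]
  ring

lemma qf_smul (n : Fin 3 → ℝ) (C : Matrix (Fin 3) (Fin 2) ℝ) (c : ℝ) :
    qf n (c • C) = c ^ 2 * qf n C := by
  simp only [qf, Matrix.smul_apply, smul_eq_mul]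
  ring

lemma fin3cast0 : ((⟨0, by omega⟩ : Fin 3)) = 0 := rfl
lemma fin3cast1 : ((⟨1, by omega⟩ : Fin 3)) = 1 := rfl
lemma fin3cast2 : ((⟨2, by omega⟩ : Fin 3)) = 2 := rfl

/-- two vectors in ℝ³ with vanishing cross product are proportional -/
lemma dep_of_cross_eq_zero (z w : Fin 3 → ℝ)
    (h0 : z 1 * w 2 - z 2 * w 1 = 0)
    (h1 : z 2 * w 0 - z 0 * w 2 = 0)
    (h2 : z 0 * w 1 - z 1 * w 0 = 0) :
    (∃ c : ℝ, w = c • z) ∨ (∃ c : ℝ, z = c • w) := by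
  by_cases hz0 : z 0 ≠ 0
  · left; refine ⟨w 0 / z 0, ?_⟩
    funext i
    fin_cases i <;>
      simp only [fin3cast0, fin3cast1, fin3cast2, Pi.smul_apply, smul_eq_mul] <;>
      field_simp <;> nlinarith [h0, h1, h2]
  push_neg at hz0
  by_cases hz1 : z 1 ≠ 0
  · left; refine ⟨w 1 / z 1, ?_⟩
    funext i
    fin_cases i <;>
      simp only [fin3cast0, fin3cast1, fin3cast2, Pi.smul_apply, smul_eq_mul] <;>
      field_simp <;> nlinarith [h0, h1, h2]
  push_neg at hz1
  by_cases hz2 : z 2 ≠ 0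
  · left; refine ⟨w 2 / z 2, ?_⟩
    funext i
    fin_cases i <;>
      simp only [fin3cast0, fin3cast1, fin3cast2, Pi.smul_apply, smul_eq_mul] <;>
      field_simp <;> nlinarith [h0, h1, h2]
  push_neg at hz2
  right
  exact ⟨0, by funext i; fin_cases i <;>
    simp only [fin3cast0, fin3cast1, fin3cast2, Pi.smul_apply, smul_eq_mul] <;>
    simp [hz0, hz1, hz2]⟩

lemma norm2_pos {n : Fin 3 → ℝ} (hn : n ≠ 0) : 0 < n 0 ^ 2 + n 1 ^ 2 + n 2 ^ 2 := by
  obtain ⟨k, hk⟩ := Function.ne_iff.mp hn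
  fin_cases k <;>
    simp only [fin3cast0, fin3cast1, fin3cast2, Pi.zero_apply] at hk <;>
    nlinarith [sq_nonneg (n 0), sq_nonneg (n 1), sq_nonneg (n 2), mul_self_pos.mpr hk]

lemma finrank_span_single_le (x : Fin 3 → ℝ) :
    finrank ℝ (Submodule.span ℝ ({x} : Set (Fin 3 → ℝ))) ≤ 1 := by
  rcases eq_or_ne x 0 with rfl | hx
  · rw [Submodule.span_zero_singleton]; simp
  · rw [finrank_span_singleton hx]

lemma rank_le_one_of_dep (Z : Matrix (Fin 3) (Fin 2) ℝ)
    (h : (∃ c : ℝ, Zᵀ 1 = c • Zᵀ 0) ∨ (∃ c : ℝ, Zᵀ 0 = c • Zᵀ 1)) : Z.rank ≤ 1 := by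
  rcases h with ⟨c, hc⟩ | ⟨c, hc⟩
  · have hle : Submodule.span ℝ (Set.range Zᵀ) ≤ Submodule.span ℝ {Zᵀ 0} := by
      rw [Submodule.span_le]
      rintro x ⟨j, rfl⟩
      fin_cases j
      · exact Submodule.subset_span rfl
      · rw [show Zᵀ ⟨1, by omega⟩ = Zᵀ 1 from rfl, hc]
        exact Submodule.smul_mem _ _ (Submodule.subset_span rfl)
    calc Z.rank = finrank ℝ (Submodule.span ℝ (Set.range Zᵀ)) := Z.rank_eq_finrank_span_cols
    _ ≤ finrank ℝ (Submodule.span ℝ {Zᵀ 0}) := Submodule.finrank_mono hle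
    _ ≤ 1 := finrank_span_single_le _
  · have hle : Submodule.span ℝ (Set.range Zᵀ) ≤ Submodule.span ℝ {Zᵀ 1} := by
      rw [Submodule.span_le]
      rintro x ⟨j, rfl⟩
      fin_cases j
      · rw [show Zᵀ ⟨0, by omega⟩ = Zᵀ 0 from rfl, hc]
        exact Submodule.smul_mem _ _ (Submodule.subset_span rfl)
      · exact Submodule.subset_span rfl
    calc Z.rank = finrank ℝ (Submodule.span ℝ (Set.range Zᵀ)) := Z.rank_eq_finrank_span_cols
    _ ≤ finrank ℝ (Submodule.span ℝ {Zᵀ 1}) := Submodule.finrank_mono hle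
    _ ≤ 1 := finrank_span_single_le _

lemma dep_of_rank_le_one (Z : Matrix (Fin 3) (Fin 2) ℝ) (h : Z.rank ≤ 1) :
    (∃ c : ℝ, Zᵀ 1 = c • Zᵀ 0) ∨ (∃ c : ℝ, Zᵀ 0 = c • Zᵀ 1) := by
  by_contra hcon
  push_neg at hcon
  have hli : LinearIndependent ℝ ![Zᵀ 0, Zᵀ 1] := by
    rw [LinearIndependent.pair_iff]
    intro s t hst
    by_contra hno
    rcases eq_or_ne t 0 with rfl | ht
    · have hs : s ≠ 0 := fun hs => hno ⟨hs, rfl⟩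
      have hz : s • Zᵀ 0 = 0 := by simpa using hst
      have hz0 : Zᵀ 0 = 0 := by
        rcases smul_eq_zero.mp hz with h' | h'
        · exact absurd h' hs
        · exact h'
      exact hcon.2 0 (by rw [hz0, zero_smul])
    · have h1 : t • Zᵀ 1 = -(s • Zᵀ 0) :=
        eq_neg_of_add_eq_zero_left (by rw [add_comm]; exact hst)
      refine hcon.1 (-s/t) ?_
      apply smul_right_injective (Fin 3 → ℝ) ht
      show t • Zᵀ 1 = t • ((-s / t) • Zᵀ 0)
      rw [h1, smul_smul, show t * (-s/t) = -s by field_simp [mul_comm], neg_smul]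
  have h2 : 2 ≤ Z.rank := by
    have hsub : Submodule.span ℝ (Set.range ![Zᵀ 0, Zᵀ 1]) ≤ Submodule.span ℝ (Set.range Zᵀ) := by
      apply Submodule.span_mono
      rintro x ⟨j, rfl⟩
      fin_cases j
      · exact ⟨0, rfl⟩
      · exact ⟨1, rfl⟩
    have hcard := finrank_span_eq_card hli
    rw [Z.rank_eq_finrank_span_cols]
    calc 2 = finrank ℝ (Submodule.span ℝ (Set.range ![Zᵀ 0, Zᵀ 1])) := by rw [hcard]; simp
    _ ≤ _ := Submodule.finrank_mono hsub
  omega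

lemma rank_pos_of_ne_zero (Z : Matrix (Fin 3) (Fin 2) ℝ) (h : Z ≠ 0) : Z.rank ≠ 0 := by
  intro h0
  apply h
  have h1 : finrank ℝ (Submodule.span ℝ (Set.range Zᵀ)) = 0 := by
    exact Z.rank_eq_finrank_span_cols.symm.trans h0
  rw [Submodule.finrank_eq_zero] at h1
  have hcol : ∀ j, Zᵀ j = 0 := by
    intro j
    have : Zᵀ j ∈ (⊥ : Submodule ℝ (Fin 3 → ℝ)) := by
      rw [← h1]; exact Submodule.subset_span ⟨j, rfl⟩
    simpa using this
  ext i j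
  have := congrFun (hcol j) i
  simpa using this

lemma qf_eq_zero_of_rank_le_one (n : Fin 3 → ℝ) (C : Matrix (Fin 3) (Fin 2) ℝ)
    (h : C.rank ≤ 1) : qf n C = 0 := by
  rcases dep_of_rank_le_one C h with ⟨c, hc⟩ | ⟨c, hc⟩
  · have h0 := congrFun hc 0
    have h1 := congrFun hc 1
    have h2 := congrFun hc 2
    simp only [Matrix.transpose_apply, Pi.smul_apply, smul_eq_mul] at h0 h1 h2
    simp only [qf, h0, h1, h2]
    ring
  · have h0 := congrFun hc 0
    have h1 := congrFun hc 1
    have h2 := congrFun hc 2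
    simp only [Matrix.transpose_apply, Pi.smul_apply, smul_eq_mul] at h0 h1 h2
    simp only [qf, h0, h1, h2]
    ring

lemma rank_eq_one_of_qf_eq_zero {n : Fin 3 → ℝ} (hn : n ≠ 0)
    (Z : Matrix (Fin 3) (Fin 2) ℝ) (hZ : Z ≠ 0)
    (horth0 : n 0 * Z 0 0 + n 1 * Z 1 0 + n 2 * Z 2 0 = 0)
    (horth1 : n 0 * Z 0 1 + n 1 * Z 1 1 + n 2 * Z 2 1 = 0)
    (hq : qf n Z = 0) : Z.rank = 1 := by
  have hqe : n 0 * (Z 1 0 * Z 2 1 - Z 2 0 * Z 1 1) + n 1 * (Z 2 0 * Z 0 1 - Z 0 0 * Z 2 1)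
      + n 2 * (Z 0 0 * Z 1 1 - Z 1 0 * Z 0 1) = 0 := hq
  have hf0 : n 1 * (Z 0 0 * Z 1 1 - Z 1 0 * Z 0 1) - n 2 * (Z 2 0 * Z 0 1 - Z 0 0 * Z 2 1) = 0 := by
    linear_combination (Z 0 0) * horth1 - (Z 0 1) * horth0
  have hf1 : n 2 * (Z 1 0 * Z 2 1 - Z 2 0 * Z 1 1) - n 0 * (Z 0 0 * Z 1 1 - Z 1 0 * Z 0 1) = 0 := by
    linear_combination (Z 1 0) * horth1 - (Z 1 1) * horth0
  have hf2 : n 0 * (Z 2 0 * Z 0 1 - Z 0 0 * Z 2 1) - n 1 * (Z 1 0 * Z 2 1 - Z 2 0 * Z 1 1) = 0 := by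
    linear_combination (Z 2 0) * horth1 - (Z 2 1) * horth0
  have hnp := norm2_pos hn
  have hn2 : (n 0 ^ 2 + n 1 ^ 2 + n 2 ^ 2) ≠ 0 := ne_of_gt hnp
  have hc0 : Z 1 0 * Z 2 1 - Z 2 0 * Z 1 1 = 0 := by
    have key : (n 0 ^ 2 + n 1 ^ 2 + n 2 ^ 2) * (Z 1 0 * Z 2 1 - Z 2 0 * Z 1 1) = 0 := by
      linear_combination (n 0) * hqe - (n 1) * hf2 + (n 2) * hf1
    exact (mul_eq_zero.mp key).resolve_left hn2
  have hc1 : Z 2 0 * Z 0 1 - Z 0 0 * Z 2 1 = 0 := by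
    have key : (n 0 ^ 2 + n 1 ^ 2 + n 2 ^ 2) * (Z 2 0 * Z 0 1 - Z 0 0 * Z 2 1) = 0 := by
      linear_combination (n 1) * hqe + (n 0) * hf2 - (n 2) * hf0
    exact (mul_eq_zero.mp key).resolve_left hn2
  have hc2 : Z 0 0 * Z 1 1 - Z 1 0 * Z 0 1 = 0 := by
    have key : (n 0 ^ 2 + n 1 ^ 2 + n 2 ^ 2) * (Z 0 0 * Z 1 1 - Z 1 0 * Z 0 1) = 0 := by
      linear_combination (n 2) * hqe + (n 1) * hf0 - (n 0) * hf1
    exact (mul_eq_zero.mp key).resolve_left hn2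
  have hdep := dep_of_cross_eq_zero (fun k => Z k 0) (fun k => Z k 1) hc0 hc1 hc2
  have hle : Z.rank ≤ 1 := by
    apply rank_le_one_of_dep
    rcases hdep with ⟨c, hc⟩ | ⟨c, hc⟩
    · exact Or.inl ⟨c, by funext k; exact congrFun hc k⟩
    · exact Or.inr ⟨c, by funext k; exact congrFun hc k⟩
  have hne := rank_pos_of_ne_zero Z hZ
  omega

/-- the linear functional z ↦ n·z -/
def dotL (n : Fin 3 → ℝ) : (Fin 3 → ℝ) →ₗ[ℝ] ℝ where
  toFun z := n 0 * z 0 + n 1 * z 1 + n 2 * z 2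
  map_add' x y := by simp [Pi.add_apply]; ring
  map_smul' c x := by simp [Pi.smul_apply, smul_eq_mul]; ring

lemma exists_normal {J : Type*} [Fintype J] (M : Matrix (Fin 3) J ℝ) (h : M.rank = 2) :
    ∃ n : Fin 3 → ℝ, n ≠ 0 ∧ ∀ j, n 0 * M 0 j + n 1 * M 1 j + n 2 * M 2 j = 0 := by
  classical
  set p := Submodule.span ℝ (Set.range Mᵀ) with hp
  have hfr : finrank ℝ p = 2 := M.rank_eq_finrank_span_cols.symm.trans h
  let b : Basis (Fin 2) ℝ p := finBasisOfFinrankEq ℝ p hfr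
  set z : Fin 3 → ℝ := (b 0 : Fin 3 → ℝ) with hz
  set w : Fin 3 → ℝ := (b 1 : Fin 3 → ℝ) with hw
  have hli : LinearIndependent ℝ ![z, w] := by
    have h1 := b.linearIndependent.map' p.subtype (Submodule.ker_subtype p)
    have h2 : ![z, w] = p.subtype ∘ b := by
      funext i; fin_cases i <;> rfl
    rw [h2]; exact h1
  set n : Fin 3 → ℝ := ![z 1 * w 2 - z 2 * w 1, z 2 * w 0 - z 0 * w 2, z 0 * w 1 - z 1 * w 0]
    with hncross
  have hn0 : n ≠ 0 := by
    intro hzero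
    have e0 : z 1 * w 2 - z 2 * w 1 = 0 := by
      have := congrFun hzero 0; simpa [hncross] using this
    have e1 : z 2 * w 0 - z 0 * w 2 = 0 := by
      have := congrFun hzero 1; simpa [hncross] using this
    have e2 : z 0 * w 1 - z 1 * w 0 = 0 := by
      have := congrFun hzero 2; simpa [hncross] using this
    have hdep := dep_of_cross_eq_zero z w e0 e1 e2
    rw [LinearIndependent.pair_iff] at hli
    rcases hdep with ⟨c, hc⟩ | ⟨c, hc⟩
    · have := hli c (-1) (by rw [hc]; module)
      exact absurd this.2 (by norm_num)
    · have := hli (-1) c (by rw [hc]; module)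
      exact absurd this.1 (by norm_num)
  refine ⟨n, hn0, ?_⟩
  have hnc0 : n 0 = z 1 * w 2 - z 2 * w 1 := rfl
  have hnc1 : n 1 = z 2 * w 0 - z 0 * w 2 := rfl
  have hnc2 : n 2 = z 0 * w 1 - z 1 * w 0 := rfl
  have hφ : (dotL n).comp p.subtype = 0 := by
    apply b.ext
    intro i
    fin_cases i
    · show dotL n z = 0
      show n 0 * z 0 + n 1 * z 1 + n 2 * z 2 = 0
      rw [hnc0, hnc1, hnc2]; ring
    · show dotL n w = 0
      show n 0 * w 0 + n 1 * w 1 + n 2 * w 2 = 0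
      rw [hnc0, hnc1, hnc2]; ring
  intro j
  have hmem : Mᵀ j ∈ p := Submodule.subset_span ⟨j, rfl⟩
  have hcf := LinearMap.congr_fun hφ ⟨Mᵀ j, hmem⟩
  have : n 0 * Mᵀ j 0 + n 1 * Mᵀ j 1 + n 2 * Mᵀ j 2 = 0 := hcf
  simpa [Matrix.transpose_apply] using this

/-- a function whose derivative is strictly monotone has at most two zeros -/
lemma no_three_zeros (g g' : ℝ → ℝ) (hg : ∀ x, HasDerivAt g (g' x) x)
    (hg' : StrictMono g') {x y z : ℝ} (hxy : x < y) (hyz : y < z)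
    (h0x : g x = 0) (h0y : g y = 0) (h0z : g z = 0) : False := by
  have hcont : ∀ s t : ℝ, ContinuousOn g (Icc s t) :=
    fun s t => fun r _ => (hg r).continuousAt.continuousWithinAt
  obtain ⟨c1, hc1, hc1'⟩ := exists_hasDerivAt_eq_zero hxy (hcont x y) (by rw [h0x, h0y])
    (fun r _ => hg r)
  obtain ⟨c2, hc2, hc2'⟩ := exists_hasDerivAt_eq_zero hyz (hcont y z) (by rw [h0y, h0z])
    (fun r _ => hg r)
  have hlt : c1 < c2 := lt_trans hc1.2 hc2.1
  have := hg' hlt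
  rw [hc1', hc2'] at this
  exact lt_irrefl 0 this

/-- strict trapezoid inequality -/
lemma trapezoid_strict (f f' g : ℝ → ℝ)
    (hf : ∀ x, HasDerivAt f (f' x) x)
    (hf' : StrictMono f')
    (hg : ∀ x, HasDerivAt g (f x) x)
    {x y : ℝ} (hxy : x < y) :
    2 * (g y - g x) - (f x + f y) * (y - x) < 0 := by
  set H : ℝ → ℝ := fun t => 2 * (g t - g x) - (f t + f x) * (t - x) with hH
  have hH' : ∀ t, HasDerivAt H (2 * f t - (f' t * (t - x) + (f t + f x))) t := by
    intro t
    have h1 : HasDerivAt (fun t => 2 * (g t - g x)) (2 * f t) t :=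
      (((hg t).sub_const (g x)).const_mul 2)
    have h2 : HasDerivAt (fun t => (f t + f x) * (t - x)) (f' t * (t - x) + (f t + f x) * 1) t :=
      ((hf t).add_const (f x)).mul ((hasDerivAt_id t).sub_const x)
    have h3 := h1.sub h2; rw [mul_one] at h3; exact h3
  have hneg : ∀ t ∈ Ioo x y, deriv H t < 0 := by
    intro t ht
    have hd := (hH' t).deriv
    rw [hd]
    obtain ⟨c, hc, hc'⟩ := exists_hasDerivAt_eq_slope f f' ht.1
      (fun r _ => (hf r).continuousAt.continuousWithinAt) (fun r _ => hf r)
    have hne : t - x ≠ 0 := sub_ne_zero.mpr (ne_of_gt ht.1)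
    rw [eq_div_iff hne] at hc'
    have hft : f t - f x = f' c * (t - x) := by linarith [hc']
    have : f' c < f' t := hf' hc.2
    nlinarith [ht.1]
  have hanti : StrictAntiOn H (Icc x y) := by
    apply strictAntiOn_of_deriv_neg (convex_Icc x y)
    · exact fun r _ => (hH' r).continuousAt.continuousWithinAt
    · intro t ht
      rw [interior_Icc] at ht
      exact hneg t ht
  have hHx : H x = 0 := by simp [hH]
  have := hanti (left_mem_Icc.mpr hxy.le) (right_mem_Icc.mpr hxy.le) hxy
  rw [hHx] at this
  have h2 : 2 * (g y - g x) - (f y + f x) * (y - x) < 0 := by simpa [hH] using this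
  linarith [h2]

/-- sort three distinct reals satisfying a predicate -/
lemma sort3 {x y z : ℝ} (hxy : x ≠ y) (hxz : x ≠ z) (hyz : y ≠ z)
    (P : ℝ → Prop) (hx : P x) (hy : P y) (hz : P z) :
    ∃ p q r : ℝ, p < q ∧ q < r ∧ P p ∧ P q ∧ P r := by
  rcases lt_trichotomy x y with h1 | h1 | h1
  · rcases lt_trichotomy y z with h2 | h2 | h2
    · exact ⟨x, y, z, h1, h2, hx, hy, hz⟩
    · exact absurd h2 hyz
    · rcases lt_trichotomy x z with h3 | h3 | h3
      · exact ⟨x, z, y, h3, h2, hx, hz, hy⟩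
      · exact absurd h3 hxz
      · exact ⟨z, x, y, h3, h1, hz, hx, hy⟩
  · exact absurd h1 hxy
  · rcases lt_trichotomy x z with h2 | h2 | h2
    · exact ⟨y, x, z, h1, h2, hy, hx, hz⟩
    · exact absurd h2 hxz
    · rcases lt_trichotomy y z with h3 | h3 | h3
      · exact ⟨y, z, x, h3, h2, hy, hz, hx⟩
      · exact absurd h3 hyz
      · exact ⟨z, y, x, h3, h1, hz, hy, hx⟩

/-- extract three distinct elements from a finset of card ≥ 3 -/
lemma exists_three {ι : Type*} [DecidableEq ι] (s : Finset ι) (h : 3 ≤ s.card) :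
    ∃ a b c, a ∈ s ∧ b ∈ s ∧ c ∈ s ∧ a ≠ b ∧ a ≠ c ∧ b ≠ c := by
  obtain ⟨t, hts, htc⟩ := Finset.exists_subset_card_eq h
  obtain ⟨a, b, c, hab, hac, hbc, rfl⟩ := Finset.card_eq_three.mp htc
  exact ⟨a, b, c, hts (by simp), hts (by simp), hts (by simp), hab, hac, hbc⟩

/-- walking around the `T_N` loop -/
lemma cyclic_contra {N : ℕ} (hN : 2 ≤ N) (W d κ' : ℕ → ℝ)
    (hκ : ∀ k, 1 < κ' k)
    (hstep : ∀ k, d k = (1 - κ' k) * W k + κ' k * W (k + 1))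
    (s : ℕ) (hWs : W s = 0) (hWe : W (s + (N - 1)) = 0)
    (hd : ∀ t, t ≤ N - 2 → 0 < d (s + t)) : False := by
  have key : ∀ t, 1 ≤ t → t ≤ N - 1 → 0 < W (s + t) := by
    intro t
    induction t with
    | zero => omega
    | succ t ih =>
      intro _ h
      have hκt := hκ (s + t)
      have hdp : 0 < d (s + t) := hd t (by omega)
      have hst : d (s + t) = (1 - κ' (s + t)) * W (s + t) + κ' (s + t) * W (s + t + 1) :=
        hstep (s + t)
      have hWnn : 0 ≤ W (s + t) := by
        rcases Nat.eq_zero_or_pos t with rfl | ht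
        · rw [Nat.add_zero, hWs]
        · exact (ih ht (by omega)).le
      have h1 : κ' (s + t) * W (s + t + 1) = d (s + t) + (κ' (s + t) - 1) * W (s + t) := by
        linarith [hst]
      have h3 : 0 ≤ (κ' (s + t) - 1) * W (s + t) := mul_nonneg (by linarith) hWnn
      have h4 : 0 < κ' (s + t) * W (s + t + 1) := by linarith
      show 0 < W (s + t + 1)
      by_contra hc
      push_neg at hc
      have h5 : κ' (s + t) * W (s + t + 1) ≤ 0 :=
        mul_nonpos_of_nonneg_of_nonpos (by linarith) hc
      linarith
  have hfin := key (N - 1) (by omega) le_rfl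
  rw [hWe] at hfin
  exact lt_irrefl 0 hfin

end TNAux

set_option maxHeartbeats 1600000 in
/-- **Theorem 1 (main theorem).** If `a ∈ C²` with `a' > 0`, `a'' > 0`, `F' = a`,
`N ≥ 6`, `X = {X_i} ⊂ K_a` are `N` distinct points with `X_i = P(u_i, v_i)`, and there is
`Q ∈ ℝ^{3×2}` with `rank(A_X - Π^N(Q)) = 2`, then `X` has no order forming a `T_N`
configuration. -/
theorem stmt_0 (a F : ℝ → ℝ)
    (ha : ContDiff ℝ 2 a)
    (ha' : ∀ x : ℝ, 0 < deriv a x)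
    (ha'' : ∀ x : ℝ, 0 < deriv (deriv a) x)
    (hF : ∀ x : ℝ, HasDerivAt F (a x) x)
    (N : ℕ) (hN : 6 ≤ N)
    (u v : Fin N → ℝ)
    (X : Fin N → Matrix (Fin 3) (Fin 2) ℝ)
    (hX : ∀ i, X i = Pmat a F (u i) (v i))
    (hdist : Function.Injective X)
    (Q : Matrix (Fin 3) (Fin 2) ℝ)
    (hrank : (AmatDiff a F u v Q).rank = 2) :
    ¬ HasTNOrder X := by
  intro hTN
  obtain ⟨σ, hN4, hinjY, hnorank, B, Cm, kap, hkap, hCrank, hCsum, hrep⟩ := hTN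
  classical
  have hNpos : 0 < N := by omega
  have hPinj : ∀ i j : Fin N, u i = u j → v i = v j → i = j := by
    intro i j h1 h2
    apply hdist
    rw [hX i, hX j, h1, h2]
  have hadiff : Differentiable ℝ a := ha.differentiable (by norm_num)
  have haD : ∀ x : ℝ, HasDerivAt a (deriv a x) x := fun x => (hadiff x).hasDerivAt
  have hamono : StrictMono a := strictMono_of_deriv_pos ha'
  have ha'mono : StrictMono (deriv a) := strictMono_of_deriv_pos ha''
  obtain ⟨n, hn0, hperp⟩ := TNAux.exists_normal (AmatDiff a F u v Q) hrank
  have hP00 : ∀ (U V : ℝ), Pmat a F U V 0 0 = U := fun U V => by simp [Pmat]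
  have hP10 : ∀ (U V : ℝ), Pmat a F U V 1 0 = a V := fun U V => by simp [Pmat]
  have hP20 : ∀ (U V : ℝ), Pmat a F U V 2 0 = U * a V := fun U V => by simp [Pmat]
  have hP01 : ∀ (U V : ℝ), Pmat a F U V 0 1 = V := fun U V => by simp [Pmat]
  have hP11 : ∀ (U V : ℝ), Pmat a F U V 1 1 = U := fun U V => by simp [Pmat]
  have hP21 : ∀ (U V : ℝ), Pmat a F U V 2 1 = U ^ 2 / 2 + F V := fun U V => by simp [Pmat]
  have hE1 : ∀ i, n 0 * u i + n 1 * a (v i) + n 2 * (u i * a (v i))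
      = n 0 * Q 0 0 + n 1 * Q 1 0 + n 2 * Q 2 0 := by
    intro i
    have h := hperp (Sum.inl i)
    simp only [AmatDiff, Matrix.of_apply, Sum.elim_inl, hP00, hP10, hP20] at h
    linear_combination h
  have hE2 : ∀ i, n 0 * v i + n 1 * u i + n 2 * (u i ^ 2 / 2 + F (v i))
      = n 0 * Q 0 1 + n 1 * Q 1 1 + n 2 * Q 2 1 := by
    intro i
    have h := hperp (Sum.inr i)
    simp only [AmatDiff, Matrix.of_apply, Sum.elim_inr, hP01, hP11, hP21] at h
    linear_combination h
  -- the entries of differences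
  have hd00 : ∀ i j : Fin N, (X i - X j) 0 0 = u i - u j := by
    intro i j; simp only [Matrix.sub_apply, hX, hP00]
  have hd10 : ∀ i j : Fin N, (X i - X j) 1 0 = a (v i) - a (v j) := by
    intro i j; simp only [Matrix.sub_apply, hX, hP10]
  have hd20 : ∀ i j : Fin N, (X i - X j) 2 0 = u i * a (v i) - u j * a (v j) := by
    intro i j; simp only [Matrix.sub_apply, hX, hP20]
  have hd01 : ∀ i j : Fin N, (X i - X j) 0 1 = v i - v j := by
    intro i j; simp only [Matrix.sub_apply, hX, hP01]
  have hd11 : ∀ i j : Fin N, (X i - X j) 1 1 = u i - u j := by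
    intro i j; simp only [Matrix.sub_apply, hX, hP11]
  have hd21 : ∀ i j : Fin N, (X i - X j) 2 1
      = (u i ^ 2 / 2 + F (v i)) - (u j ^ 2 / 2 + F (v j)) := by
    intro i j; simp only [Matrix.sub_apply, hX, hP21]
  -- pairwise qf's are nonzero
  have hqne : ∀ k j : Fin N, k ≠ j → TNAux.qf n (X k - X j) ≠ 0 := by
    intro k j hkj h0
    have hZ : X k - X j ≠ 0 := sub_ne_zero.mpr (fun he => hkj (hdist he))
    have hor0 : n 0 * (X k - X j) 0 0 + n 1 * (X k - X j) 1 0 + n 2 * (X k - X j) 2 0 = 0 := by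
      rw [hd00, hd10, hd20]
      linear_combination hE1 k - hE1 j
    have hor1 : n 0 * (X k - X j) 0 1 + n 1 * (X k - X j) 1 1 + n 2 * (X k - X j) 2 1 = 0 := by
      rw [hd01, hd11, hd21]
      linear_combination hE2 k - hE2 j
    have hr := TNAux.rank_eq_one_of_qf_eq_zero hn0 (X k - X j) hZ hor0 hor1 h0
    have hne' : σ.symm k ≠ σ.symm j := fun he => hkj (by
      have := congrArg σ he; simpa using this)
    have hcontra := hnorank (σ.symm k) (σ.symm j) hne'
    simp only [Function.comp_apply, Equiv.apply_symm_apply] at hcontra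
    exact hcontra hr
  -- the key identity: n2 * qf = ‖n‖² * D
  have hQD : ∀ i j : Fin N, n 2 * TNAux.qf n (X i - X j)
      = (n 0 ^ 2 + n 1 ^ 2 + n 2 ^ 2)
        * ((u i - u j) ^ 2 - (a (v i) - a (v j)) * (v i - v j)) := by
    intro i j
    simp only [TNAux.qf, hd00, hd10, hd20, hd01, hd11, hd21]
    linear_combination (n 0 * (a (v i) - a (v j)) - n 1 * (u i - u j)) * hE2 i
      - (n 0 * (a (v i) - a (v j)) - n 1 * (u i - u j)) * hE2 j
      + (n 1 * (v i - v j) - n 0 * (u i - u j)) * hE1 i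
      - (n 1 * (v i - v j) - n 0 * (u i - u j)) * hE1 j
  -- T_N structure: for every j, the values qf (X k - X j) take both signs
  have hF2 : ∀ j : Fin N, (∃ k, k ≠ j ∧ 0 < TNAux.qf n (X k - X j))
      ∧ (∃ k, k ≠ j ∧ TNAux.qf n (X k - X j) < 0) := by
    intro j
    set jj : Fin N := σ.symm j with hjjdef
    have hσjj : σ jj = j := Equiv.apply_symm_apply σ j
    set S : ℕ → Matrix (Fin 3) (Fin 2) ℝ :=
      fun k => B + ∑ i ∈ Finset.univ.filter (fun i : Fin N => (i : ℕ) < k), Cm i with hSdef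
    have hS0 : S 0 = B := by
      have he : (Finset.univ.filter (fun i : Fin N => (i : ℕ) < 0)) = (∅ : Finset (Fin N)) := by
        ext i; simp
      simp [hSdef, he]
    have hSN : S N = B := by
      have he : (Finset.univ.filter (fun i : Fin N => (i : ℕ) < N)) = Finset.univ := by
        ext i; simp [i.isLt]
      simp [hSdef, he, hCsum]
    have hSsucc : ∀ (k : ℕ) (hk : k < N), S (k + 1) = S k + Cm ⟨k, hk⟩ := by
      intro k hk
      have hfil : (Finset.univ.filter (fun i : Fin N => (i : ℕ) < k + 1))
          = insert (⟨k, hk⟩ : Fin N) (Finset.univ.filter (fun i : Fin N => (i : ℕ) < k)) := by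
        ext i
        simp only [Finset.mem_filter, Finset.mem_univ, true_and, Finset.mem_insert, Fin.ext_iff]
        omega
      simp only [hSdef, hfil]
      rw [Finset.sum_insert (by simp)]
      abel
    have hYk : ∀ (k : ℕ) (hk : k < N), X (σ ⟨k, hk⟩) = S k + kap ⟨k, hk⟩ • Cm ⟨k, hk⟩ := by
      intro k hk
      have h := hrep ⟨k, hk⟩
      simp only [Function.comp_apply] at h
      have hfil : Finset.univ.filter (fun j' : Fin N => j' < (⟨k, hk⟩ : Fin N))
          = Finset.univ.filter (fun j' : Fin N => (j' : ℕ) < k) := by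
        ext i; simp [Fin.lt_def]
      rw [h, hfil]
    set W : ℕ → ℝ := fun k => TNAux.qf n (S (k % N) - X j) with hWdef
    have haux : ∀ k : ℕ, S ((k + 1) % N) = S (k % N + 1) := by
      intro k
      have hk1 : k % N < N := Nat.mod_lt k hNpos
      rcases Nat.lt_or_ge (k % N + 1) N with h | h
      · have he : (k + 1) % N = k % N + 1 := by
          conv_lhs => rw [Nat.add_mod, Nat.mod_eq_of_lt (show 1 < N by omega)]
          exact Nat.mod_eq_of_lt h
        rw [he]
      · have h2 : k % N + 1 = N := by omega
        have he : (k + 1) % N = 0 := by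
          rw [Nat.add_mod, Nat.mod_eq_of_lt (show 1 < N by omega), h2, Nat.mod_self]
        rw [he, h2, hS0, hSN]
    have hstep : ∀ k : ℕ, TNAux.qf n (X (σ ⟨k % N, Nat.mod_lt k hNpos⟩) - X j)
        = (1 - kap ⟨k % N, Nat.mod_lt k hNpos⟩) * W k
          + kap ⟨k % N, Nat.mod_lt k hNpos⟩ * W (k + 1) := by
      intro k
      have hk1 : k % N < N := Nat.mod_lt k hNpos
      have hY := hYk (k % N) hk1
      have hS1 := hSsucc (k % N) hk1
      have e1 : X (σ ⟨k % N, hk1⟩) - X j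
          = (S (k % N) - X j) + kap ⟨k % N, hk1⟩ • Cm ⟨k % N, hk1⟩ := by
        rw [hY]; abel
      have e2 : (S (k % N) - X j) + Cm ⟨k % N, hk1⟩ = S (k % N + 1) - X j := by
        rw [hS1]; abel
      have hq0 : TNAux.qf n (Cm ⟨k % N, hk1⟩) = 0 :=
        TNAux.qf_eq_zero_of_rank_le_one n _ (le_of_eq (hCrank _))
      rw [e1, TNAux.qf_affine, e2, hq0]
      have hW1 : W (k + 1) = TNAux.qf n (S (k % N + 1) - X j) := by
        simp only [hWdef]
        rw [haux k]
      have hW0 : W k = TNAux.qf n (S (k % N) - X j) := rfl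
      rw [hW1, hW0]
      ring
    have hjlt : (jj : ℕ) < N := jj.isLt
    have hq0jj : TNAux.qf n (Cm jj) = 0 :=
      TNAux.qf_eq_zero_of_rank_le_one n _ (le_of_eq (hCrank _))
    have hYjj : X j = S (jj : ℕ) + kap jj • Cm jj := by
      have := hYk (jj : ℕ) hjlt
      rw [Fin.eta, hσjj] at this
      exact this
    have hWjn : W (jj : ℕ) = 0 := by
      simp only [hWdef]
      rw [Nat.mod_eq_of_lt hjlt]
      have he : S (jj : ℕ) - X j = (-(kap jj)) • Cm jj := by
        rw [hYjj]; module
      rw [he, TNAux.qf_smul, hq0jj]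
      ring
    have hWs : W ((jj : ℕ) + 1) = 0 := by
      simp only [hWdef]
      rw [haux (jj : ℕ), Nat.mod_eq_of_lt hjlt]
      have hS1 := hSsucc (jj : ℕ) hjlt
      rw [Fin.eta] at hS1
      have he : S ((jj : ℕ) + 1) - X j = (1 - kap jj) • Cm jj := by
        rw [hS1, hYjj]; module
      rw [he, TNAux.qf_smul, hq0jj]
      ring
    have hsign : ∀ ε : ℝ, (∀ k : Fin N, k ≠ jj → 0 < ε * TNAux.qf n (X (σ k) - X j)) → False := by
      intro ε hall
      refine TNAux.cyclic_contra (show 2 ≤ N by omega) (fun k => ε * W k)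
        (fun k => ε * TNAux.qf n (X (σ ⟨k % N, Nat.mod_lt k hNpos⟩) - X j))
        (fun k => kap ⟨k % N, Nat.mod_lt k hNpos⟩)
        (fun k => hkap _)
        (fun k => by have := hstep k; linear_combination ε * this)
        ((jj : ℕ) + 1)
        (by show ε * W ((jj : ℕ) + 1) = 0; rw [hWs]; ring)
        ?_ ?_
      · show ε * W ((jj : ℕ) + 1 + (N - 1)) = 0
        rw [show (jj : ℕ) + 1 + (N - 1) = (jj : ℕ) + N by omega]
        have he : W ((jj : ℕ) + N) = W (jj : ℕ) := by
          simp only [hWdef, Nat.add_mod_right]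
        rw [he, hWjn]; ring
      · intro t ht
        have hne : ((jj : ℕ) + 1 + t) % N ≠ (jj : ℕ) := by
          rcases Nat.lt_or_ge ((jj : ℕ) + 1 + t) N with h | h
          · rw [Nat.mod_eq_of_lt h]; omega
          · have hlt2 : (jj : ℕ) + 1 + t - N < N := by omega
            rw [Nat.mod_eq_sub_mod h, Nat.mod_eq_of_lt hlt2]
            omega
        exact hall _ (Fin.ne_of_val_ne hne)
    constructor
    · by_contra hcon
      push_neg at hcon
      refine hsign (-1) ?_
      intro k hk
      have hk' : σ k ≠ j := by
        intro he
        apply hk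
        apply σ.injective
        rw [hσjj]; exact he
      have h1 := hcon (σ k) hk'
      have h2 := hqne (σ k) j hk'
      have h3 : TNAux.qf n (X (σ k) - X j) < 0 := lt_of_le_of_ne h1 h2
      linarith
    · by_contra hcon
      push_neg at hcon
      refine hsign 1 ?_
      intro k hk
      have hk' : σ k ≠ j := by
        intro he
        apply hk
        apply σ.injective
        rw [hσjj]; exact he
      have h1 := hcon (σ k) hk'
      have h2 := hqne (σ k) j hk'
      have h3 : 0 < TNAux.qf n (X (σ k) - X j) := lt_of_le_of_ne h1 (Ne.symm h2)
      linarith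
  -- now the case analysis on n 2
  rcases eq_or_ne (n 2) 0 with hn2 | hn2
  · -- degenerate: third component of the normal vanishes
    rcases eq_or_ne (n 1) 0 with hn1 | hn1
    · -- n 0 ≠ 0 : all points coincide
      have hn0' : n 0 ≠ 0 := by
        intro h0
        apply hn0
        funext k
        fin_cases k
        · exact h0
        · exact hn1
        · exact hn2
      have hueq : ∀ i i' : Fin N, u i = u i' := by
        intro i i'
        have e1 := hE1 i
        have e2 := hE1 i'
        rw [hn1, hn2] at e1 e2
        have h3 : n 0 * (u i - u i') = 0 := by linarith
        rcases mul_eq_zero.mp h3 with h | h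
        · exact absurd h hn0'
        · linarith
      have hveq : ∀ i i' : Fin N, v i = v i' := by
        intro i i'
        have e1 := hE2 i
        have e2 := hE2 i'
        rw [hn1, hn2] at e1 e2
        have h3 : n 0 * (v i - v i') = 0 := by linarith
        rcases mul_eq_zero.mp h3 with h | h
        · exact absurd h hn0'
        · linarith
      have hne01 : (⟨0, by omega⟩ : Fin N) ≠ (⟨1, by omega⟩ : Fin N) := by
        intro he
        have := Fin.mk.injEq 0 (by omega : (0:ℕ) < N) 1 (by omega : (1:ℕ) < N) ▸ he
        simp at this
      exact hne01 (hPinj _ _ (hueq _ _) (hveq _ _))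
    · -- n 1 ≠ 0 : a is affine on three distinct points
      have hn1sq : (0:ℝ) < n 1 ^ 2 := by positivity
      have key : ∀ i, n 1 ^ 2 * a (v i)
          = (n 1 * (n 0 * Q 0 0 + n 1 * Q 1 0) - n 0 * (n 0 * Q 0 1 + n 1 * Q 1 1))
            + n 0 ^ 2 * v i := by
        intro i
        have e1 := hE1 i
        have e2 := hE2 i
        rw [hn2] at e1 e2
        linear_combination (n 1) * e1 - (n 0) * e2
      have hvinj : ∀ i i' : Fin N, v i = v i' → i = i' := by
        intro i i' hv
        have e1 := hE2 i
        have e2 := hE2 i'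
        rw [hn2] at e1 e2
        have h3 : n 1 * (u i - u i') = 0 := by rw [hv] at e1; linarith
        rcases mul_eq_zero.mp h3 with h | h
        · exact absurd h hn1
        · exact hPinj i i' (by linarith) hv
      set c0 : ℝ := (n 1 * (n 0 * Q 0 0 + n 1 * Q 1 0) - n 0 * (n 0 * Q 0 1 + n 1 * Q 1 1))
        with hc0def
      set g : ℝ → ℝ := fun t => n 1 ^ 2 * a t - (c0 + n 0 ^ 2 * t) with hgdef
      have hgD : ∀ x : ℝ, HasDerivAt g (n 1 ^ 2 * deriv a x - n 0 ^ 2) x := by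
        intro x
        have h1 : HasDerivAt (fun t : ℝ => n 1 ^ 2 * a t) (n 1 ^ 2 * deriv a x) x :=
          (haD x).const_mul _
        have h2 : HasDerivAt (fun t : ℝ => c0 + n 0 ^ 2 * t) (n 0 ^ 2) x := by
          simpa using ((hasDerivAt_id x).const_mul (n 0 ^ 2)).const_add c0
        exact h1.sub h2
      have hg'mono : StrictMono (fun x : ℝ => n 1 ^ 2 * deriv a x - n 0 ^ 2) := by
        intro x y hxy
        have := ha'mono hxy
        have := mul_lt_mul_of_pos_left this hn1sq
        simpa using by linarith
      have hne01 : (⟨0, by omega⟩ : Fin N) ≠ (⟨1, by omega⟩ : Fin N) :=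
        Fin.ne_of_val_ne (by norm_num)
      have hne02 : (⟨0, by omega⟩ : Fin N) ≠ (⟨2, by omega⟩ : Fin N) :=
        Fin.ne_of_val_ne (by norm_num)
      have hne12 : (⟨1, by omega⟩ : Fin N) ≠ (⟨2, by omega⟩ : Fin N) :=
        Fin.ne_of_val_ne (by norm_num)
      have hv01 : v ⟨0, by omega⟩ ≠ v ⟨1, by omega⟩ := fun h => hne01 (hvinj _ _ h)
      have hv02 : v ⟨0, by omega⟩ ≠ v ⟨2, by omega⟩ := fun h => hne02 (hvinj _ _ h)
      have hv12 : v ⟨1, by omega⟩ ≠ v ⟨2, by omega⟩ := fun h => hne12 (hvinj _ _ h)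
      have hz : ∀ i : Fin N, g (v i) = 0 := by
        intro i
        simp only [hgdef]
        linarith [key i]
      obtain ⟨p, q, r, hpq, hqr, hp, hq, hr0⟩ := TNAux.sort3 hv01 hv02 hv12
        (fun t => g t = 0) (hz _) (hz _) (hz _)
      exact TNAux.no_three_zeros g _ hgD hg'mono hpq hqr hp hq hr0
  · -- main case : n 2 ≠ 0
    set al : ℝ := n 0 / n 2 with hal
    set be : ℝ := n 1 / n 2 with hbe
    set C1 : ℝ := (n 0 * Q 0 0 + n 1 * Q 1 0 + n 2 * Q 2 0) / n 2 + al * be with hC1def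
    set C2 : ℝ := (n 0 * Q 0 1 + n 1 * Q 1 1 + n 2 * Q 2 1) / n 2 + be ^ 2 / 2 with hC2def
    have h1 : ∀ i, (u i + be) * (a (v i) + al) = C1 := by
      intro i
      have e := hE1 i
      have hexp : (u i + be) * (a (v i) + al) - C1
          = (n 0 * u i + n 1 * a (v i) + n 2 * (u i * a (v i))
             - (n 0 * Q 0 0 + n 1 * Q 1 0 + n 2 * Q 2 0)) / n 2 := by
        rw [hC1def, hal, hbe]
        field_simp
        ring
      have hz0 : (u i + be) * (a (v i) + al) - C1 = 0 := by
        rw [hexp, e]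
        simp
      linarith
    have h2 : ∀ i, (u i + be) ^ 2 / 2 + (F (v i) + al * v i) = C2 := by
      intro i
      have e := hE2 i
      have hexp : (u i + be) ^ 2 / 2 + (F (v i) + al * v i) - C2
          = (n 0 * v i + n 1 * u i + n 2 * (u i ^ 2 / 2 + F (v i))
             - (n 0 * Q 0 1 + n 1 * Q 1 1 + n 2 * Q 2 1)) / n 2 := by
        rw [hC2def, hal, hbe]
        field_simp
        ring
      have hz0 : (u i + be) ^ 2 / 2 + (F (v i) + al * v i) - C2 = 0 := by
        rw [hexp, e]
        simp
      linarith
    rcases eq_or_ne C1 0 with hC1z | hC1z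
    · -- C1 = 0 : at most four points possible
      set Sp := Finset.univ.filter (fun i : Fin N => u i + be = 0) with hSp
      set Sa := Finset.univ.filter (fun i : Fin N => a (v i) + al = 0) with hSa
      have hunion : Sp ∪ Sa = Finset.univ := by
        ext i
        simp only [hSp, hSa, Finset.mem_union, Finset.mem_filter, Finset.mem_univ, true_and,
          iff_true]
        have hmul := h1 i
        rw [hC1z] at hmul
        exact mul_eq_zero.mp hmul
      have hcard : N ≤ Sp.card + Sa.card := by
        have h3 := Finset.card_union_le Sp Sa
        rw [hunion] at h3
        simpa using h3
      rcases le_or_gt 3 Sp.card with hSp3 | hSp3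
      · obtain ⟨x, y, z2, hx, hy, hz2, hxy, hxz, hyz⟩ := TNAux.exists_three Sp hSp3
        have hux : u x + be = 0 := (Finset.mem_filter.mp hx).2
        have huy : u y + be = 0 := (Finset.mem_filter.mp hy).2
        have huz : u z2 + be = 0 := (Finset.mem_filter.mp hz2).2
        have hvxy : v x ≠ v y := fun h => hxy (hPinj _ _ (by linarith) h)
        have hvxz : v x ≠ v z2 := fun h => hxz (hPinj _ _ (by linarith) h)
        have hvyz : v y ≠ v z2 := fun h => hyz (hPinj _ _ (by linarith) h)
        have hzero : ∀ i : Fin N, u i + be = 0 → F (v i) + al * v i - C2 = 0 := by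
          intro i hi
          have e := h2 i
          rw [hi] at e
          norm_num at e
          linarith [e]
        obtain ⟨p, q, r, hpq, hqr, hp, hq, hr0⟩ := TNAux.sort3 hvxy hvxz hvyz
          (fun t => F t + al * t - C2 = 0) (hzero x hux) (hzero y huy) (hzero z2 huz)
        refine TNAux.no_three_zeros (fun t => F t + al * t - C2) (fun t => a t + al)
          ?_ ?_ hpq hqr hp hq hr0
        · intro x0
          simpa using ((hF x0).add ((hasDerivAt_id x0).const_mul al)).sub_const C2
        · intro x0 y0 hlt
          have := hamono hlt
          simp only []
          linarith
      · have hSa3 : 3 ≤ Sa.card := by omega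
        obtain ⟨x, y, z2, hx, hy, hz2, hxy, hxz, hyz⟩ := TNAux.exists_three Sa hSa3
        have hax : a (v x) + al = 0 := (Finset.mem_filter.mp hx).2
        have hay : a (v y) + al = 0 := (Finset.mem_filter.mp hy).2
        have haz : a (v z2) + al = 0 := (Finset.mem_filter.mp hz2).2
        have hvxy : v x = v y := hamono.injective (by linarith)
        have hvxz : v x = v z2 := hamono.injective (by linarith)
        have huxy : u x ≠ u y := fun h => hxy (hPinj _ _ h hvxy)
        have huxz : u x ≠ u z2 := fun h => hxz (hPinj _ _ h hvxz)
        have huyz : u y ≠ u z2 := fun h => hyz (hPinj _ _ h (hvxy.symm.trans hvxz))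
        have hsq1 : (u x + be) ^ 2 = (u y + be) ^ 2 := by
          have e1 := h2 x
          have e2 := h2 y
          rw [hvxy] at e1
          linarith
        have hsq2 : (u x + be) ^ 2 = (u z2 + be) ^ 2 := by
          have e1 := h2 x
          have e2 := h2 z2
          rw [hvxz] at e1
          linarith
        have hxy' : u x + be = -(u y + be) := by
          have hmul : (u x + be - (u y + be)) * (u x + be + (u y + be)) = 0 := by
            linear_combination hsq1
          rcases mul_eq_zero.mp hmul with h | h
          · exact absurd (by linarith : u x = u y) huxy
          · linarith
        have hxz' : u x + be = -(u z2 + be) := by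
          have hmul : (u x + be - (u z2 + be)) * (u x + be + (u z2 + be)) = 0 := by
            linear_combination hsq2
          rcases mul_eq_zero.mp hmul with h | h
          · exact absurd (by linarith : u x = u z2) huxz
          · linarith
        exact huyz (by linarith)
    · -- C1 ≠ 0 : the genuinely T_N-using case
      have hA0 : ∀ i, a (v i) + al ≠ 0 := by
        intro i h
        apply hC1z
        rw [← h1 i, h, mul_zero]
      have hvinj : ∀ i i' : Fin N, v i = v i' → i = i' := by
        intro i i' hv
        have e1 := h1 i
        have e2 := h1 i'
        rw [hv] at e1
        have hcanc : u i + be = u i' + be := mul_right_cancel₀ (hA0 i') (e1.trans e2.symm)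
        exact hPinj i i' (by linarith) hv
      have hmain : ∀ i i' : Fin N, v i' < v i →
          ((u i - u i') ^ 2 - (a (v i) - a (v i')) * (v i - v i'))
            * ((a (v i) + al) + (a (v i') + al)) < 0 := by
        intro i i' hv
        have hDA : 0 < a (v i) - a (v i') := sub_pos.mpr (hamono hv)
        have hR : 2 * ((F (v i) + al * v i) - (F (v i') + al * v i'))
            - ((a (v i') + al) + (a (v i) + al)) * (v i - v i') < 0 := by
          have := TNAux.trapezoid_strict (fun t => a t + al) (deriv a) (fun t => F t + al * t)
            (fun t => (haD t).add_const al) ha'mono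
            (fun t => by have h := (hF t).add ((hasDerivAt_id t).const_mul al); rw [mul_one] at h; exact h) hv
          linarith
        have hiden : ((u i - u i') ^ 2 - (a (v i) - a (v i')) * (v i - v i'))
            * ((a (v i) + al) + (a (v i') + al))
            = (a (v i) - a (v i'))
              * (2 * ((F (v i) + al * v i) - (F (v i') + al * v i'))
                 - ((a (v i) + al) + (a (v i') + al)) * (v i - v i')) := by
          linear_combination (2 * (u i - u i')) * h1 i - (2 * (u i - u i')) * h1 i'
            - (2 * (a (v i) - a (v i'))) * h2 i + (2 * (a (v i) - a (v i'))) * h2 i'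
        rw [hiden]
        apply mul_neg_of_pos_of_neg hDA
        linarith
      have hsignD : ∀ i i' : Fin N, i ≠ i' →
          ((u i - u i') ^ 2 - (a (v i) - a (v i')) * (v i - v i'))
            * ((a (v i) + al) + (a (v i') + al)) < 0 := by
        intro i i' hne
        have hvne : v i ≠ v i' := fun h => hne (hvinj _ _ h)
        rcases lt_or_gt_of_ne hvne with h | h
        · have hswap := hmain i' i h
          nlinarith [hswap]
        · exact hmain i i' h
      have hnp := TNAux.norm2_pos hn0
      have hsignQ : ∀ i i' : Fin N, i ≠ i' →
          ((a (v i) + al) + (a (v i') + al)) * (n 2 * TNAux.qf n (X i - X i')) < 0 := by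
        intro i i' hne
        rw [hQD i i']
        nlinarith [hsignD i i' hne, hnp]
      obtain ⟨M, hMmem, hM⟩ := Finset.exists_max_image Finset.univ (fun i => a (v i) + al)
        ⟨⟨0, by omega⟩, Finset.mem_univ _⟩
      obtain ⟨m, hmmem, hm⟩ := Finset.exists_min_image Finset.univ (fun i => a (v i) + al)
        ⟨⟨0, by omega⟩, Finset.mem_univ _⟩
      rcases lt_or_gt_of_ne hn2 with hneg | hpos
      · obtain ⟨k, hkM, hk⟩ := (hF2 M).2
        have h6 := hsignQ k M hkM
        have h7 : 0 < n 2 * TNAux.qf n (X k - X M) := mul_pos_of_neg_of_neg hneg hk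
        have h8 : (a (v k) + al) + (a (v M) + al) < 0 := by nlinarith [h6, h7]
        obtain ⟨k', hk'm, hk'⟩ := (hF2 m).1
        have h9 := hsignQ k' m hk'm
        have h10 : n 2 * TNAux.qf n (X k' - X m) < 0 := mul_neg_of_neg_of_pos hneg hk'
        have h11 : 0 < (a (v k') + al) + (a (v m) + al) := by nlinarith [h9, h10]
        have h12 := hm k (Finset.mem_univ _)
        have h13 := hM k' (Finset.mem_univ _)
        linarith
      · obtain ⟨k, hkM, hk⟩ := (hF2 M).1
        have h6 := hsignQ k M hkM
        have h7 : 0 < n 2 * TNAux.qf n (X k - X M) := mul_pos hpos hk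
        have h8 : (a (v k) + al) + (a (v M) + al) < 0 := by nlinarith [h6, h7]
        obtain ⟨k', hk'm, hk'⟩ := (hF2 m).2
        have h9 := hsignQ k' m hk'm
        have h10 : n 2 * TNAux.qf n (X k' - X m) < 0 := mul_neg_of_pos_of_neg hpos hk'
        have h11 : 0 < (a (v k') + al) + (a (v m) + al) := by nlinarith [h9, h10]
        have h12 := hm k (Finset.mem_univ _)
        have h13 := hM k' (Finset.mem_univ _)
        linarith
end
end

section
/- Suppose a ∈ C²(ℝ) satisfies a' > 0 and a'' > 0 on ℝ, and F satisfies F' = a. Let N ≥ 6 and let X = {X_1,…,X_N} ⊂ K_a be a set of N distinct points. If there exists a two-dimensional affine plane 𝒫 ⊂ ℝ^{3×2} such that X ⊂ K_a ∩ 𝒫, then X does not have an order that forms a T_N configuration. -/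
open Matrix

noncomputable section

namespace TNaux


def m12 (A : Matrix (Fin 3) (Fin 2) ℝ) : ℝ := A 0 0 * A 1 1 - A 0 1 * A 1 0
def m13 (A : Matrix (Fin 3) (Fin 2) ℝ) : ℝ := A 0 0 * A 2 1 - A 0 1 * A 2 0
def m23 (A : Matrix (Fin 3) (Fin 2) ℝ) : ℝ := A 1 0 * A 2 1 - A 1 1 * A 2 0

lemma matrix_eq_zero_of_rank_eq_zero {A : Matrix (Fin 3) (Fin 2) ℝ} (h : A.rank = 0) :
    A = 0 := by
  have h1 : LinearMap.range A.mulVecLin = ⊥ := by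
    have := (Submodule.finrank_eq_zero (R := ℝ) (M := Fin 3 → ℝ)
      (S := LinearMap.range A.mulVecLin)).mp h
    exact this
  have h2 : A.mulVecLin = 0 := LinearMap.range_eq_bot.mp h1
  ext i j
  have : A.mulVecLin (Pi.single j 1) i = 0 := by rw [h2]; rfl
  simpa [Matrix.mulVecLin_apply, Matrix.mulVec, dotProduct, Pi.single_apply] using this

lemma rank_le_one_of_minors {A : Matrix (Fin 3) (Fin 2) ℝ}
    (h12 : m12 A = 0) (h13 : m13 A = 0) (h23 : m23 A = 0) : A.rank ≤ 1 := by
  have key : ∀ i k : Fin 3, A i 1 * A k 0 = A k 1 * A i 0 := by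
    intro i k
    simp only [m12, m13, m23] at h12 h13 h23
    fin_cases i <;> fin_cases k <;> simp <;> linarith
  have hspan : ∃ w : Fin 3 → ℝ, Submodule.span ℝ (Set.range Aᵀ) ≤ Submodule.span ℝ {w} := by
    by_cases hc0 : Aᵀ 0 = 0
    · refine ⟨Aᵀ 1, Submodule.span_le.mpr ?_⟩
      rintro x ⟨j, rfl⟩
      fin_cases j
      · show Aᵀ 0 ∈ _
        rw [hc0]; exact Submodule.zero_mem _
      · exact Submodule.subset_span rfl
    · have : ∃ k, A k 0 ≠ 0 := by
        by_contra hall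
        push_neg at hall
        apply hc0
        funext i
        exact hall i
      obtain ⟨k, hk⟩ := this
      refine ⟨Aᵀ 0, Submodule.span_le.mpr ?_⟩
      rintro x ⟨j, rfl⟩
      fin_cases j
      · exact Submodule.subset_span rfl
      · show Aᵀ 1 ∈ _
        have : Aᵀ 1 = (A k 1 / A k 0) • Aᵀ 0 := by
          funext i
          simp only [Matrix.transpose_apply, Pi.smul_apply, smul_eq_mul]
          field_simp
          linarith [key i k]
        rw [this]
        exact Submodule.smul_mem _ _ (Submodule.subset_span rfl)
  obtain ⟨w, hw⟩ := hspan
  rw [Matrix.rank_eq_finrank_span_cols]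
  refine le_trans (Submodule.finrank_mono hw) ?_
  by_cases hw0 : w = 0
  · rw [hw0, Submodule.span_zero_singleton]
    simp
  · rw [finrank_span_singleton hw0]

lemma rank_two_of_minor {A : Matrix (Fin 3) (Fin 2) ℝ} (r r' : Fin 3)
    (h : A r 0 * A r' 1 - A r 1 * A r' 0 ≠ 0) : 2 ≤ A.rank := by
  have hli : LinearIndependent ℝ Aᵀ := by
    have h2 : (fun j => Aᵀ j) = ![Aᵀ 0, Aᵀ 1] := by
      funext j; fin_cases j <;> simp
    rw [show Aᵀ = ![Aᵀ 0, Aᵀ 1] by funext j; fin_cases j <;> simp]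
    rw [linearIndependent_fin2]
    constructor
    · intro hz
      apply h
      have h1 : A r 1 = 0 := by
        have := congrFun hz r; simpa using this
      have h2 : A r' 1 = 0 := by
        have := congrFun hz r'; simpa using this
      simp [h1, h2]
    · intro t ht
      apply h
      have h1 : A r 0 = t * A r 1 := by
        have := congrFun ht r; simpa using this.symm
      have h2 : A r' 0 = t * A r' 1 := by
        have := congrFun ht r'; simpa using this.symm
      rw [h1, h2]; ring
  rw [Matrix.rank_eq_finrank_span_cols]
  change 2 ≤ Module.finrank ℝ (Submodule.span ℝ (Set.range Aᵀ))
  rw [finrank_span_eq_card hli]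
  simp

lemma minors_zero_of_rank_one {A : Matrix (Fin 3) (Fin 2) ℝ} (h : A.rank = 1) :
    m12 A = 0 ∧ m13 A = 0 ∧ m23 A = 0 := by
  refine ⟨?_, ?_, ?_⟩
  · by_contra hm
    have := rank_two_of_minor (A := A) 0 1 (by unfold m12 at hm; intro hc; apply hm; linarith)
    omega
  · by_contra hm
    have := rank_two_of_minor (A := A) 0 2 (by unfold m13 at hm; intro hc; apply hm; linarith)
    omega
  · by_contra hm
    have := rank_two_of_minor (A := A) 1 2 (by unfold m23 at hm; intro hc; apply hm; linarith)
    omega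



lemma m12_expand (d₁ d₂ : Matrix (Fin 3) (Fin 2) ℝ) (p q : ℝ)
    (h1 : m12 d₁ = 0) (h2 : m12 d₂ = 0) :
    m12 (p • d₁ + q • d₂) = p * q * m12 (d₁ + d₂) := by
  simp only [m12, Matrix.add_apply, Matrix.smul_apply, smul_eq_mul] at *
  linear_combination (p ^ 2 - p * q) * h1 + (q ^ 2 - p * q) * h2

lemma m13_expand (d₁ d₂ : Matrix (Fin 3) (Fin 2) ℝ) (p q : ℝ)
    (h1 : m13 d₁ = 0) (h2 : m13 d₂ = 0) :
    m13 (p • d₁ + q • d₂) = p * q * m13 (d₁ + d₂) := by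
  simp only [m13, Matrix.add_apply, Matrix.smul_apply, smul_eq_mul] at *
  linear_combination (p ^ 2 - p * q) * h1 + (q ^ 2 - p * q) * h2

lemma m23_expand (d₁ d₂ : Matrix (Fin 3) (Fin 2) ℝ) (p q : ℝ)
    (h1 : m23 d₁ = 0) (h2 : m23 d₂ = 0) :
    m23 (p • d₁ + q • d₂) = p * q * m23 (d₁ + d₂) := by
  simp only [m23, Matrix.add_apply, Matrix.smul_apply, smul_eq_mul] at *
  linear_combination (p ^ 2 - p * q) * h1 + (q ^ 2 - p * q) * h2

lemma m12_smul (t : ℝ) (A : Matrix (Fin 3) (Fin 2) ℝ) : m12 (t • A) = t ^ 2 * m12 A := by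
  simp only [m12, Matrix.smul_apply, smul_eq_mul]; ring

lemma m13_smul (t : ℝ) (A : Matrix (Fin 3) (Fin 2) ℝ) : m13 (t • A) = t ^ 2 * m13 A := by
  simp only [m13, Matrix.smul_apply, smul_eq_mul]; ring

lemma m23_smul (t : ℝ) (A : Matrix (Fin 3) (Fin 2) ℝ) : m23 (t • A) = t ^ 2 * m23 A := by
  simp only [m23, Matrix.smul_apply, smul_eq_mul]; ring

lemma Pmat_entries (a F : ℝ → ℝ) (u v : ℝ) :
    Pmat a F u v 0 0 = u ∧ Pmat a F u v 0 1 = v ∧ Pmat a F u v 1 0 = a v ∧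
    Pmat a F u v 1 1 = u ∧ Pmat a F u v 2 0 = u * a v ∧
    Pmat a F u v 2 1 = u ^ 2 / 2 + F v := by
  unfold Pmat
  norm_num [Matrix.cons_val_zero, Matrix.cons_val_one]
  exact ⟨rfl, rfl⟩

lemma m12_Pmat (a F : ℝ → ℝ) (u v u' v' : ℝ) :
    m12 (Pmat a F u v - Pmat a F u' v') =
      (u - u') ^ 2 - (v - v') * (a v - a v') := by
  obtain ⟨e1, e2, e3, e4, e5, e6⟩ := Pmat_entries a F u v
  obtain ⟨f1, f2, f3, f4, f5, f6⟩ := Pmat_entries a F u' v'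
  simp only [m12, Matrix.sub_apply, e1, e2, e3, e4, f1, f2, f3, f4]
  ring

lemma m23_Pmat (a F : ℝ → ℝ) (u v u' v' : ℝ) :
    m23 (Pmat a F u v - Pmat a F u' v') =
      (a v - a v') * (F v - F v') - ((a v + a v') / 2) * (u - u') ^ 2 := by
  obtain ⟨e1, e2, e3, e4, e5, e6⟩ := Pmat_entries a F u v
  obtain ⟨f1, f2, f3, f4, f5, f6⟩ := Pmat_entries a F u' v'
  simp only [m23, Matrix.sub_apply, e3, e4, e5, e6, f3, f4, f5, f6]
  ring

section Analytic

variable {a F : ℝ → ℝ}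

lemma diff_a (ha' : ∀ x : ℝ, 0 < deriv a x) : Differentiable ℝ a :=
  fun x => differentiableAt_of_deriv_ne_zero (ha' x).ne'

lemma slope_mvt (ha' : ∀ x : ℝ, 0 < deriv a x) {x y : ℝ} (hxy : x < y) :
    ∃ ζ ∈ Set.Ioo x y, a y - a x = deriv a ζ * (y - x) := by
  obtain ⟨ζ, hζ, hs⟩ := exists_hasDerivAt_eq_slope a (deriv a) hxy
    ((diff_a ha').continuous.continuousOn)
    (fun t _ => ((diff_a ha') t).hasDerivAt)
  refine ⟨ζ, hζ, ?_⟩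
  rw [hs]
  have hne : y - x ≠ 0 := by linarith
  field_simp

/-- secant slopes strictly increase -/
lemma slope_strict (ha' : ∀ x : ℝ, 0 < deriv a x) (ha'' : ∀ x : ℝ, 0 < deriv (deriv a) x)
    {x y z : ℝ} (hxy : x < y) (hyz : y < z) :
    (a y - a x) * (z - y) < (a z - a y) * (y - x) := by
  obtain ⟨ζ₁, hζ₁, h1⟩ := slope_mvt ha' hxy
  obtain ⟨ζ₂, hζ₂, h2⟩ := slope_mvt ha' hyz
  have hmono : StrictMono (deriv a) := strictMono_of_deriv_pos ha''
  have hζ : deriv a ζ₁ < deriv a ζ₂ := hmono (lt_trans hζ₁.2 hζ₂.1)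
  rw [h1, h2]
  have hy : 0 < y - x := by linarith
  have hz : 0 < z - y := by linarith
  nlinarith [mul_lt_mul_of_pos_right hζ (mul_pos hy hz)]

/-- strict Hermite–Hadamard (trapezoid strictly overestimates): for `x < y`,
`F y - F x < (a x + a y)/2 * (y - x)` where `F' = a`, `a` strictly convex. -/
lemma hermite_hadamard (hF : ∀ x : ℝ, HasDerivAt F (a x) x)
    (ha' : ∀ x : ℝ, 0 < deriv a x) (ha'' : ∀ x : ℝ, 0 < deriv (deriv a) x)
    {x y : ℝ} (hxy : x < y) :
    F y - F x < (a y + a x) / 2 * (y - x) := by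
  set D : ℝ → ℝ := fun t => F t - F x - (t - x) * ((a t + a x) / 2) with hD
  have hmono : StrictMono (deriv a) := strictMono_of_deriv_pos ha''
  have hDd : ∀ t : ℝ, HasDerivAt D
      (a t - (1 * ((a t + a x) / 2) + (t - x) * (deriv a t / 2))) t := by
    intro t
    have h1 : HasDerivAt (fun t : ℝ => (t - x) * ((a t + a x) / 2))
        (1 * ((a t + a x) / 2) + (t - x) * (deriv a t / 2)) t := by
      exact ((hasDerivAt_id t).sub_const x).mul
        (((((diff_a ha') t).hasDerivAt).add_const (a x)).div_const 2)
    exact ((hF t).sub_const (F x)).sub h1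
  have hanti : StrictAntiOn D (Set.Ici x) := by
    apply strictAntiOn_of_deriv_neg (convex_Ici x)
    · apply Continuous.continuousOn
      have hdF : Differentiable ℝ F := fun t => (hF t).differentiableAt
      have hFc : Continuous F := hdF.continuous
      exact (hFc.sub continuous_const).sub
        (((continuous_id.sub continuous_const).mul
          (((diff_a ha').continuous.add continuous_const).div_const 2)))
    · intro t ht
      rw [interior_Ici] at ht
      rw [(hDd t).deriv]
      have ht' : x < t := Set.mem_Ioi.mp ht
      obtain ⟨ζ, hζ, hs⟩ := slope_mvt ha' ht'
      have : deriv a ζ < deriv a t := hmono hζ.2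
      have htx : 0 < t - x := by linarith [ht']
      have := mul_lt_mul_of_pos_right this htx
      linarith
  have h2 := hanti (Set.self_mem_Ici) (Set.mem_Ici.mpr hxy.le) hxy
  have h2' : F y - F x - (y - x) * ((a y + a x) / 2) <
      F x - F x - (x - x) * ((a x + a x) / 2) := h2
  nlinarith [h2']

end Analytic


lemma argmax_step_ne_zero {N : ℕ} (hN : 2 ≤ N) (x κ : Fin N → ℝ)
    (hκ : ∀ i, 1 < κ i) (hsum : ∑ i, x i = 0)
    (ξ : Fin N → ℝ)
    (hξ : ∀ i, ξ i = (∑ j ∈ Finset.univ.filter (fun j => j < i), x j) + κ i * x i)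
    (hdist : ∀ i j : Fin N, i ≠ j → ξ i ≠ ξ j)
    (i₀ : Fin N) (hmax : ∀ j, ξ j ≤ ξ i₀) : x i₀ ≠ 0 := by
  intro hx0
  have hNpos : 0 < N := by omega
  set x' : ℕ → ℝ := fun k => if h : k < N then x ⟨k, h⟩ else 0 with hx'
  set s : ℕ → ℝ := fun k => ∑ j ∈ Finset.range k, x' j with hs
  have hstep : ∀ k, s (k + 1) = s k + x' k := by
    intro k; simp only [hs]; rw [Finset.sum_range_succ]
  have hx'v : ∀ i : Fin N, x' i.val = x i := by
    intro i; simp only [hx', i.isLt, dif_pos]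
  have hsN : s N = 0 := by
    simp only [hs]
    rw [← Fin.sum_univ_eq_sum_range]
    rw [← hsum]
    exact Finset.sum_congr rfl fun i _ => hx'v i
  have hfil : ∀ i : Fin N, (∑ j ∈ Finset.univ.filter (fun j => j < i), x j) = s i.val := by
    intro i
    rw [Finset.sum_filter]
    have h1 : ∀ j : Fin N, (if j < i then x j else 0) =
        (fun k => if k < i.val then x' k else 0) j.val := by
      intro j
      simp only [Fin.lt_def]
      by_cases h :j.val < i.val
      · simp [h, hx'v j]
      · simp [h]
    rw [Finset.sum_congr rfl fun j _ => h1 j]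
    rw [Fin.sum_univ_eq_sum_range (fun k => if k < i.val then x' k else 0) N]
    rw [← Finset.sum_filter]
    congr 1
    ext k
    simp only [Finset.mem_filter, Finset.mem_range]
    have := i.isLt
    omega
  have hξs : ∀ i : Fin N, ξ i = s i.val + κ i * x i := by
    intro i; rw [hξ i, hfil i]
  set M := ξ i₀ with hM
  -- M ≥ 0
  have hM0 : 0 ≤ M := by
    by_contra hMneg
    push_neg at hMneg
    have A0 : ∀ k, k ≤ N → s k ≤ 0 := by
      intro k
      induction k with
      | zero => intro _; simp [hs]
      | succ n ih =>
        intro hn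
        have hnN : n < N := by omega
        set i : Fin N := ⟨n, hnN⟩
        rw [hstep n]
        have hxv : x' n = x i := hx'v i
        rcases le_or_gt 0 (x i) with hxi | hxi
        · have h1 : s n + x i ≤ s n + κ i * x i := by
            nlinarith [hκ i]
          have h2 : s n + κ i * x i = ξ i := by rw [hξs i]
          have := hmax i
          rw [hxv]; linarith [h2 ▸ this]
        · have := ih (by omega)
          rw [hxv]; linarith
    -- last step contradiction
    have hlast : N - 1 < N := by omega
    set p : Fin N := ⟨N - 1, hlast⟩
    have hsplit : s (N - 1) + x p = 0 := by
      have := hstep (N - 1)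
      rw [hx'v p] at this
      have hN1 : N - 1 + 1 = N := by omega
      rw [hN1] at this
      rw [← this, hsN]
    have hξp := hξs p
    have hmp := hmax p
    rcases lt_trichotomy (x p) 0 with hxp | hxp | hxp
    · have : 0 < s (N - 1) := by linarith
      have := A0 (N - 1) (by omega)
      linarith
    · have : s (N - 1) = 0 := by rw [hxp] at hsplit; linarith
      rw [hξp] at hmp
      simp only [hxp, mul_zero, add_zero] at hmp
      rw [this] at hmp
      linarith
    · have h1 : ξ p = s (N - 1) + κ p * x p := hξp
      have h2 : s (N - 1) + κ p * x p > s (N - 1) + x p := by nlinarith [hκ p]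
      rw [h1] at hmp
      nlinarith
  -- Claim A
  have hA : ∀ k, k ≤ N → s k ≤ M := by
    intro k
    induction k with
    | zero => intro _; simpa [hs] using hM0
    | succ n ih =>
      intro hn
      have hnN : n < N := by omega
      set i : Fin N := ⟨n, hnN⟩
      rw [hstep n, hx'v i]
      rcases le_or_gt 0 (x i) with hxi | hxi
      · have h2 : s n + κ i * x i = ξ i := (hξs i).symm
        have := hmax i
        nlinarith [hκ i]
      · have := ih (by omega)
        linarith
  -- predecessor analysis
  have hMi : M = s i₀.val := by
    rw [hM, hξs i₀, hx0, mul_zero, add_zero]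
  obtain ⟨p, hpne, hpe⟩ : ∃ p : Fin N, p ≠ i₀ ∧ s p.val + x p = M := by
    rcases Nat.eq_zero_or_pos i₀.val with h0 | hpos
    · have hM00 : M = 0 := by rw [hMi, h0]; simp [hs]
      have hlast : N - 1 < N := by omega
      refine ⟨⟨N - 1, hlast⟩, ?_, ?_⟩
      · intro hc
        have : N - 1 = i₀.val := congrArg Fin.val hc
        omega
      · have := hstep (N - 1)
        rw [hx'v ⟨N - 1, hlast⟩] at this
        have hN1 : N - 1 + 1 = N := by omega
        rw [hN1, hsN] at this
        rw [hM00]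
        linarith
    · have hr : i₀.val - 1 < N := by omega
      refine ⟨⟨i₀.val - 1, hr⟩, ?_, ?_⟩
      · intro hc
        have : i₀.val - 1 = i₀.val := congrArg Fin.val hc
        omega
      · have := hstep (i₀.val - 1)
        rw [hx'v ⟨i₀.val - 1, hr⟩] at this
        have hN1 : i₀.val - 1 + 1 = i₀.val := by omega
        rw [hN1] at this
        rw [hMi]
        linarith
  have hsp : s p.val ≤ M := hA p.val (by omega)
  have hξp : ξ p = s p.val + κ p * x p := hξs p
  have hmp : ξ p ≤ M := hmax p
  have hne : ξ p ≠ M := hdist p i₀ hpne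
  rcases lt_trichotomy (x p) 0 with hxp | hxp | hxp
  · have : M < s p.val := by linarith
    linarith
  · apply hne
    rw [hξp, hxp, mul_zero, add_zero]
    rw [hxp] at hpe; linarith
  · have : M < ξ p := by rw [hξp]; nlinarith [hκ p]
    linarith


end TNaux

set_option maxHeartbeats 4000000 in
open TNaux in
/-- **Corollary 2.** If `a ∈ C²` with `a' > 0`, `a'' > 0`, `F' = a`, `N ≥ 6`, and
`X ⊂ K_a` consists of `N` distinct points lying in a two-dimensional affine plane
`𝒫 ⊂ ℝ^{3×2}` (i.e. a translate `p + W` of a two-dimensional linear subspace `W`),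
then `X` has no order forming a `T_N` configuration. -/
theorem stmt_1 (a F : ℝ → ℝ)
    (ha : ContDiff ℝ 2 a)
    (ha' : ∀ x : ℝ, 0 < deriv a x)
    (ha'' : ∀ x : ℝ, 0 < deriv (deriv a) x)
    (hF : ∀ x : ℝ, HasDerivAt F (a x) x)
    (N : ℕ) (hN : 6 ≤ N)
    (u v : Fin N → ℝ)
    (X : Fin N → Matrix (Fin 3) (Fin 2) ℝ)
    (hX : ∀ i, X i = Pmat a F (u i) (v i))
    (hdist : Function.Injective X)
    (hplane : ∃ (p : Matrix (Fin 3) (Fin 2) ℝ)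
      (W : Submodule ℝ (Matrix (Fin 3) (Fin 2) ℝ)),
      Module.finrank ℝ W = 2 ∧ ∀ i, X i - p ∈ W) :
    ¬ HasTNOrder X := by
  rintro ⟨σ, hN4, hInj, hRank, B, C, κ, hκ, hCrank, hCsum, hXeq⟩
  obtain ⟨p, W, hW2, hpW⟩ := hplane
  -- notation
  set uu : Fin N → ℝ := fun i => u (σ i) with huu
  set vv : Fin N → ℝ := fun i => v (σ i) with hvv
  have hZP : ∀ i, (X ∘ σ) i = Pmat a F (uu i) (vv i) := fun i => hX (σ i)
  have hamono : StrictMono a := strictMono_of_deriv_pos ha'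
  have hNpos : 0 < N := by omega
  have hZne : ∀ i j : Fin N, i ≠ j → (X ∘ σ) i ≠ (X ∘ σ) j := by
    intro i j hij hc
    exact hij (hInj hc)
  have hZuv : ∀ i j : Fin N, uu i = uu j → vv i = vv j → i = j := by
    intro i j h1 h2
    by_contra hij
    exact hZne i j hij (by rw [hZP i, hZP j, h1, h2])
  -- nondegeneracy of pairs: not all minors vanish
  have rank2 : ∀ i j : Fin N, i ≠ j →
      ¬ (m12 ((X ∘ σ) i - (X ∘ σ) j) = 0 ∧ m13 ((X ∘ σ) i - (X ∘ σ) j) = 0 ∧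
         m23 ((X ∘ σ) i - (X ∘ σ) j) = 0) := by
    intro i j hij ⟨h12, h13, h23⟩
    have hr1 := rank_le_one_of_minors h12 h13 h23
    have hr2 := hRank i j hij
    have hr0 : ((X ∘ σ) i - (X ∘ σ) j).rank = 0 := by omega
    have := matrix_eq_zero_of_rank_eq_zero hr0
    exact hZne i j hij (by rwa [sub_eq_zero] at this)
  -- all C i lie in W
  have hdiffW : ∀ i j : Fin N, (X ∘ σ) i - (X ∘ σ) j ∈ W := by
    intro i j
    have h1 := hpW (σ i)
    have h2 := hpW (σ j)
    have := W.sub_mem h1 h2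
    simpa using this
  have hsumlt : ∀ (f : Fin N → Matrix (Fin 3) (Fin 2) ℝ) (i : Fin N),
      (∑ j ∈ Finset.univ.filter (fun j => j < i), f j)
        = ∑ k ∈ Finset.range i.val, (if h : k < N then f ⟨k, h⟩ else 0) := by
    intro f i
    rw [Finset.sum_filter]
    have h1 : ∀ j : Fin N, (if j < i then f j else 0) =
        (fun k => if k < i.val then (if h : k < N then f ⟨k, h⟩ else 0) else 0) j.val := by
      intro j
      simp only [Fin.lt_def]
      by_cases h : j.val < i.val
      · simp [h, j.isLt]
      · simp [h]
    rw [Finset.sum_congr rfl fun j _ => h1 j]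
    rw [Fin.sum_univ_eq_sum_range (fun k => if k < i.val then (if h : k < N then f ⟨k, h⟩ else 0) else 0) N]
    rw [← Finset.sum_filter]
    congr 1
    ext k
    simp only [Finset.mem_filter, Finset.mem_range]
    have := i.isLt
    omega
  have hCW : ∀ i : Fin N, C i ∈ W := by
    -- consecutive difference identities
    have hcons : ∀ k : ℕ, ∀ hk1 : k + 1 < N,
        (X ∘ σ) ⟨k + 1, hk1⟩ - (X ∘ σ) ⟨k, by omega⟩ =
          C ⟨k, by omega⟩ + κ ⟨k + 1, hk1⟩ • C ⟨k + 1, hk1⟩ -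
            κ ⟨k, by omega⟩ • C ⟨k, by omega⟩ := by
      intro k hk1
      rw [hXeq ⟨k + 1, hk1⟩, hXeq ⟨k, by omega⟩]
      rw [hsumlt C ⟨k + 1, hk1⟩, hsumlt C ⟨k, by omega⟩]
      simp only
      rw [Finset.sum_range_succ]
      rw [dif_pos (show k < N by omega)]
      abel
    have hind : ∀ k : ℕ, ∀ hk : k < N, ∃ α : ℝ, 0 < α ∧
        κ ⟨k, hk⟩ * α ≤ κ ⟨0, hNpos⟩ ∧ C ⟨k, hk⟩ - α • C ⟨0, hNpos⟩ ∈ W := by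
      intro k
      induction k with
      | zero =>
        intro hk
        exact ⟨1, one_pos, by norm_num, by simp⟩
      | succ n ih =>
        intro hk
        obtain ⟨α, hα, hκα, hmem⟩ := ih (by omega)
        have hκn := hκ ⟨n, by omega⟩
        have hκn1 := hκ ⟨n + 1, hk⟩
        have hκne : κ ⟨n + 1, hk⟩ ≠ 0 := by linarith
        refine ⟨(κ ⟨n, by omega⟩ - 1) * α / κ ⟨n + 1, hk⟩, div_pos (mul_pos (by linarith) hα) (by linarith), ?_, ?_⟩
        · rw [mul_div_assoc']
          rw [mul_comm (κ ⟨n + 1, hk⟩)]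
          rw [mul_div_assoc]
          rw [div_self hκne, mul_one]
          nlinarith
        · have hD := hdiffW ⟨n + 1, hk⟩ ⟨n, by omega⟩
          rw [hcons n hk] at hD
          have hkey : κ ⟨n + 1, hk⟩ •
              (C ⟨n + 1, hk⟩ - ((κ ⟨n, by omega⟩ - 1) * α / κ ⟨n + 1, hk⟩) • C ⟨0, hNpos⟩) =
              (C ⟨n, by omega⟩ + κ ⟨n + 1, hk⟩ • C ⟨n + 1, hk⟩ -
                κ ⟨n, by omega⟩ • C ⟨n, by omega⟩) +
              (κ ⟨n, by omega⟩ - 1) • (C ⟨n, by omega⟩ - α • C ⟨0, hNpos⟩) := by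
            rw [smul_sub, smul_smul]
            rw [mul_div_cancel₀ _ hκne]
            rw [smul_sub, smul_smul]
            rw [sub_smul, one_smul]
            abel
          have hmem2 : κ ⟨n + 1, hk⟩ •
              (C ⟨n + 1, hk⟩ - ((κ ⟨n, by omega⟩ - 1) * α / κ ⟨n + 1, hk⟩) • C ⟨0, hNpos⟩) ∈ W := by
            rw [hkey]
            exact W.add_mem hD (W.smul_mem _ hmem)
          have := W.smul_mem (κ ⟨n + 1, hk⟩)⁻¹ hmem2
          rwa [inv_smul_smul₀ hκne] at this
    -- wrap-around
    have hwrap : (X ∘ σ) ⟨0, hNpos⟩ - (X ∘ σ) ⟨N - 1, by omega⟩ =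
        κ ⟨0, hNpos⟩ • C ⟨0, hNpos⟩ - (κ ⟨N - 1, by omega⟩ - 1) • C ⟨N - 1, by omega⟩ := by
      have hsN : ∑ k ∈ Finset.range N, (if h : k < N then C ⟨k, h⟩ else 0) = 0 := by
        rw [← Fin.sum_univ_eq_sum_range (fun k => if h : k < N then C ⟨k, h⟩ else 0) N]
        rw [← hCsum]
        apply Finset.sum_congr rfl
        intro i _
        simp [i.isLt]
      have hs1 : (∑ k ∈ Finset.range (N - 1), if h : k < N then C ⟨k, h⟩ else 0) =
          - C ⟨N - 1, by omega⟩ := by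
        have h2 : (∑ k ∈ Finset.range (N - 1), if h : k < N then C ⟨k, h⟩ else 0) +
            (if h : N - 1 < N then C ⟨N - 1, h⟩ else 0) =
            ∑ k ∈ Finset.range N, if h : k < N then C ⟨k, h⟩ else 0 := by
          rw [← Finset.sum_range_succ]
          have hN1 : N - 1 + 1 = N := by omega
          rw [hN1]
        rw [hsN, dif_pos (show N - 1 < N by omega)] at h2
        exact eq_neg_of_add_eq_zero_left h2
      rw [hXeq ⟨0, hNpos⟩, hXeq ⟨N - 1, by omega⟩]
      rw [hsumlt C ⟨0, hNpos⟩, hsumlt C ⟨N - 1, by omega⟩]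
      simp only
      rw [Finset.range_zero, Finset.sum_empty, hs1]
      rw [sub_smul, one_smul]
      abel
    have hC0W : C ⟨0, hNpos⟩ ∈ W := by
      obtain ⟨α, hα, hκα, hmem⟩ := hind (N - 1) (by omega)
      have hD := hdiffW ⟨0, hNpos⟩ ⟨N - 1, by omega⟩
      rw [hwrap] at hD
      have hkey : (κ ⟨0, hNpos⟩ - (κ ⟨N - 1, by omega⟩ - 1) * α) • C ⟨0, hNpos⟩ =
          (κ ⟨0, hNpos⟩ • C ⟨0, hNpos⟩ - (κ ⟨N - 1, by omega⟩ - 1) • C ⟨N - 1, by omega⟩) +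
            (κ ⟨N - 1, by omega⟩ - 1) • (C ⟨N - 1, by omega⟩ - α • C ⟨0, hNpos⟩) := by
        rw [smul_sub, smul_smul, sub_smul]
        abel
      have hmem2 : (κ ⟨0, hNpos⟩ - (κ ⟨N - 1, by omega⟩ - 1) * α) • C ⟨0, hNpos⟩ ∈ W := by
        rw [hkey]
        exact W.add_mem hD (W.smul_mem _ hmem)
      have hcoef : κ ⟨0, hNpos⟩ - (κ ⟨N - 1, by omega⟩ - 1) * α ≠ 0 := by
        have := hκ ⟨N - 1, by omega⟩
        nlinarith
      have := W.smul_mem (κ ⟨0, hNpos⟩ - (κ ⟨N - 1, by omega⟩ - 1) * α)⁻¹ hmem2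
      rwa [inv_smul_smul₀ hcoef] at this
    intro i
    obtain ⟨α, hα, hκα, hmem⟩ := hind i.val i.isLt
    have : C ⟨i.val, i.isLt⟩ = (C ⟨i.val, i.isLt⟩ - α • C ⟨0, hNpos⟩) + α • C ⟨0, hNpos⟩ := by
      abel
    rw [Fin.eta] at this
    rw [this]
    exact W.add_mem (by rw [← Fin.eta i i.isLt]; exact hmem) (W.smul_mem _ hC0W)
  -- basis dichotomy
  have hC0 : ∀ i : Fin N, C i ≠ 0 := by
    intro i hc
    have := hCrank i
    rw [hc] at this
    simp at this
  set i0 : Fin N := ⟨0, hNpos⟩ with hi0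
  set i1 : Fin N := ⟨1, by omega⟩ with hi1
  have hne10 : i1 ≠ i0 := by
    intro h
    have := congrArg Fin.val h
    simp [hi0, hi1] at this
  by_cases hall : ∀ i : Fin N, C i ∈ Submodule.span ℝ {C i0}
  · -- all C parallel: contradiction
    have hDspan : (X ∘ σ) i1 - (X ∘ σ) i0 ∈ Submodule.span ℝ {C i0} := by
      have heq : (X ∘ σ) i1 - (X ∘ σ) i0 =
          ((∑ j ∈ Finset.univ.filter (fun j => j < i1), C j) + κ i1 • C i1)
          - ((∑ j ∈ Finset.univ.filter (fun j => j < i0), C j) + κ i0 • C i0) := by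
        rw [hXeq i1, hXeq i0]; abel
      rw [heq]
      apply Submodule.sub_mem
      · exact Submodule.add_mem _ (Submodule.sum_mem _ fun j _ => hall j)
          (Submodule.smul_mem _ _ (hall i1))
      · exact Submodule.add_mem _ (Submodule.sum_mem _ fun j _ => hall j)
          (Submodule.smul_mem _ _ (hall i0))
    obtain ⟨t, ht⟩ := Submodule.mem_span_singleton.mp hDspan
    obtain ⟨q12, q13, q23⟩ := minors_zero_of_rank_one (hCrank i0)
    refine rank2 i1 i0 hne10 ⟨?_, ?_, ?_⟩ <;> rw [← ht]
    · rw [m12_smul, q12, mul_zero]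
    · rw [m13_smul, q13, mul_zero]
    · rw [m23_smul, q23, mul_zero]
  push_neg at hall
  obtain ⟨iw, hiw⟩ := hall
  set d₁ : Matrix (Fin 3) (Fin 2) ℝ := C iw with hd₁
  set d₂ : Matrix (Fin 3) (Fin 2) ℝ := C i0 with hd₂
  have hd₂ne : d₂ ≠ 0 := hC0 i0
  have hli : LinearIndependent ℝ ![d₁, d₂] := by
    rw [linearIndependent_fin2]
    refine ⟨by simpa using hd₂ne, ?_⟩
    intro t ht
    apply hiw
    rw [Submodule.mem_span_singleton]
    exact ⟨t, by simpa using ht⟩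
  have hrange : Set.range ![d₁, d₂] = {d₁, d₂} := by
    ext z
    simp [Fin.exists_fin_two]
    tauto
  have hfr : Module.finrank ℝ (Submodule.span ℝ ({d₁, d₂} : Set (Matrix (Fin 3) (Fin 2) ℝ))) = 2 := by
    rw [← hrange, finrank_span_eq_card hli]
    simp
  have hle : Submodule.span ℝ ({d₁, d₂} : Set (Matrix (Fin 3) (Fin 2) ℝ)) ≤ W := by
    rw [Submodule.span_le]
    intro z hz
    simp only [Set.mem_insert_iff, Set.mem_singleton_iff] at hz
    rcases hz with rfl | rfl
    · exact hCW iw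
    · exact hCW i0
  have hWspan : Submodule.span ℝ ({d₁, d₂} : Set (Matrix (Fin 3) (Fin 2) ℝ)) = W :=
    Submodule.eq_of_le_of_finrank_le hle (le_of_eq (by rw [hfr, hW2]))
  have hspan : ∀ z ∈ W, ∃ x y : ℝ, x • d₁ + y • d₂ = z := by
    intro z hz
    rw [← hWspan] at hz
    exact Submodule.mem_span_pair.mp hz
  have huniq : ∀ x y : ℝ, x • d₁ + y • d₂ = 0 → x = 0 ∧ y = 0 := by
    intro x y h
    by_cases hx : x = 0
    · subst hx
      rw [zero_smul, zero_add] at h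
      rcases smul_eq_zero.mp h with h' | h'
      · exact ⟨rfl, h'⟩
      · exact absurd h' hd₂ne
    · exfalso
      apply hiw
      rw [Submodule.mem_span_singleton]
      refine ⟨-y / x, ?_⟩
      have h1 : x • d₁ = (-y) • d₂ := by
        rw [neg_smul]
        exact eq_neg_of_add_eq_zero_left h
      calc (-y / x) • d₂ = x⁻¹ • ((-y) • d₂) := by
            rw [smul_smul, div_eq_inv_mul]
        _ = x⁻¹ • (x • d₁) := by rw [← h1]
        _ = d₁ := inv_smul_smul₀ hx d₁
  choose xc yc hxy using fun i => hspan (C i) (hCW i)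
  obtain ⟨hm112, hm113, hm123⟩ := minors_zero_of_rank_one (hCrank iw)
  obtain ⟨hm212, hm213, hm223⟩ := minors_zero_of_rank_one (hCrank i0)
  -- coordinates of the points
  set ξ : Fin N → ℝ :=
    fun i => (∑ j ∈ Finset.univ.filter (fun j => j < i), xc j) + κ i * xc i with hξdef
  set η : Fin N → ℝ :=
    fun i => (∑ j ∈ Finset.univ.filter (fun j => j < i), yc j) + κ i * yc i with hηdef
  have hZpt : ∀ i : Fin N, (X ∘ σ) i = B + (ξ i • d₁ + η i • d₂) := by
    intro i
    rw [hXeq i]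
    have hsum1 : (∑ j ∈ Finset.univ.filter (fun j => j < i), C j) =
        (∑ j ∈ Finset.univ.filter (fun j => j < i), xc j) • d₁ +
        (∑ j ∈ Finset.univ.filter (fun j => j < i), yc j) • d₂ := by
      rw [Finset.sum_smul, Finset.sum_smul, ← Finset.sum_add_distrib]
      exact Finset.sum_congr rfl fun j _ => (hxy j).symm
    rw [hsum1, ← hxy i]
    simp only [hξdef, hηdef]
    module
  have hZdiff : ∀ i j : Fin N,
      (X ∘ σ) i - (X ∘ σ) j = (ξ i - ξ j) • d₁ + (η i - η j) • d₂ := by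
    intro i j
    rw [hZpt i, hZpt j]
    module
  set c12 : ℝ := m12 (d₁ + d₂) with hc12def
  set c13 : ℝ := m13 (d₁ + d₂) with hc13def
  set c23 : ℝ := m23 (d₁ + d₂) with hc23def
  have hmm12 : ∀ i j : Fin N, m12 ((X ∘ σ) i - (X ∘ σ) j) = (ξ i - ξ j) * (η i - η j) * c12 := by
    intro i j
    rw [hZdiff i j]
    exact m12_expand d₁ d₂ _ _ hm112 hm212
  have hmm13 : ∀ i j : Fin N, m13 ((X ∘ σ) i - (X ∘ σ) j) = (ξ i - ξ j) * (η i - η j) * c13 := by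
    intro i j
    rw [hZdiff i j]
    exact m13_expand d₁ d₂ _ _ hm113 hm213
  have hmm23 : ∀ i j : Fin N, m23 ((X ∘ σ) i - (X ∘ σ) j) = (ξ i - ξ j) * (η i - η j) * c23 := by
    intro i j
    rw [hZdiff i j]
    exact m23_expand d₁ d₂ _ _ hm123 hm223
  have hprodne : ∀ i j : Fin N, i ≠ j → (ξ i - ξ j) * (η i - η j) ≠ 0 := by
    intro i j hij h0
    exact rank2 i j hij ⟨by rw [hmm12 i j, h0, zero_mul],
      by rw [hmm13 i j, h0, zero_mul], by rw [hmm23 i j, h0, zero_mul]⟩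
  have hξne : ∀ i j : Fin N, i ≠ j → ξ i ≠ ξ j := by
    intro i j hij hc
    exact hprodne i j hij (by rw [hc, sub_self, zero_mul])
  have hηne : ∀ i j : Fin N, i ≠ j → η i ≠ η j := by
    intro i j hij hc
    exact hprodne i j hij (by rw [hc, sub_self, mul_zero])
  -- the RH-minor values
  have hm12v : ∀ i j : Fin N, m12 ((X ∘ σ) i - (X ∘ σ) j) =
      (uu i - uu j) ^ 2 - (vv i - vv j) * (a (vv i) - a (vv j)) := by
    intro i j
    rw [hZP i, hZP j]
    exact m12_Pmat a F _ _ _ _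
  have hm23v : ∀ i j : Fin N, m23 ((X ∘ σ) i - (X ∘ σ) j) =
      (a (vv i) - a (vv j)) * (F (vv i) - F (vv j)) -
        ((a (vv i) + a (vv j)) / 2) * (uu i - uu j) ^ 2 := by
    intro i j
    rw [hZP i, hZP j]
    exact m23_Pmat a F _ _ _ _
  by_cases hc12 : c12 = 0
  · -- degenerate case: all pairs satisfy RH; three points give contradiction
    have hRH : ∀ i j : Fin N, (uu i - uu j) ^ 2 = (vv i - vv j) * (a (vv i) - a (vv j)) := by
      intro i j
      have h2 : (uu i - uu j) ^ 2 - (vv i - vv j) * (a (vv i) - a (vv j)) = 0 := by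
        rw [← hm12v i j, hmm12 i j, hc12, mul_zero]
      linarith
    have hvne : ∀ i j : Fin N, i ≠ j → vv i ≠ vv j := by
      intro i j hij hv
      have h := hRH i j
      rw [hv, sub_self, zero_mul] at h
      have h2 : uu i - uu j = 0 := pow_eq_zero_iff two_ne_zero |>.mp h
      exact hij (hZuv i j (by linarith) hv)
    have key : ∀ w1 w2 w3 u1 u2 u3 : ℝ, w1 < w2 → w2 < w3 →
        (u2 - u1) ^ 2 = (w2 - w1) * (a w2 - a w1) →
        (u3 - u2) ^ 2 = (w3 - w2) * (a w3 - a w2) →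
        (u3 - u1) ^ 2 = (w3 - w1) * (a w3 - a w1) → False := by
      intro w1 w2 w3 u1 u2 u3 h12 h23 e1 e2 e3
      have hs := slope_strict ha' ha'' h12 h23
      have e4 : 2 * ((u2 - u1) * (u3 - u2)) =
          (w2 - w1) * (a w3 - a w2) + (w3 - w2) * (a w2 - a w1) := by
        linear_combination e3 - e1 - e2
      have e5 : ((w2 - w1) * (a w3 - a w2) - (w3 - w2) * (a w2 - a w1)) ^ 2 = 0 := by
        linear_combination (4 * (u3 - u2) ^ 2) * e1 + (4 * (w2 - w1) * (a w2 - a w1)) * e2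
          + (-(2 * ((u2 - u1) * (u3 - u2)) + (w2 - w1) * (a w3 - a w2)
              + (w3 - w2) * (a w2 - a w1))) * e4
      have e6 : (w2 - w1) * (a w3 - a w2) = (w3 - w2) * (a w2 - a w1) := by
        have := pow_eq_zero_iff two_ne_zero |>.mp e5
        linarith
      nlinarith [hs, e6]
    have key2 : ∀ i j k : Fin N, vv i < vv j → vv j < vv k → False := fun i j k h1 h2 =>
      key (vv i) (vv j) (vv k) (uu i) (uu j) (uu k) h1 h2 (hRH j i) (hRH k j) (hRH k i)
    set i2 : Fin N := ⟨2, by omega⟩ with hi2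
    have hne02 : i0 ≠ i2 := by
      intro h; have := congrArg Fin.val h; simp [hi0, hi2] at this
    have hne12 : i1 ≠ i2 := by
      intro h; have := congrArg Fin.val h; simp [hi1, hi2] at this
    rcases lt_trichotomy (vv i0) (vv i1) with h01 | h01 | h01
    · rcases lt_trichotomy (vv i2) (vv i0) with h20 | h20 | h20
      · exact key2 i2 i0 i1 h20 h01
      · exact absurd h20.symm (hvne i0 i2 hne02)
      · rcases lt_trichotomy (vv i2) (vv i1) with h21 | h21 | h21
        · exact key2 i0 i2 i1 h20 h21
        · exact absurd h21 (hvne i2 i1 fun h => hne12 h.symm)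
        · exact key2 i0 i1 i2 h01 h21
    · exact absurd h01 (hvne i0 i1 (Ne.symm hne10))
    · rcases lt_trichotomy (vv i2) (vv i1) with h21 | h21 | h21
      · exact key2 i2 i1 i0 h21 h01
      · exact absurd h21 (hvne i2 i1 fun h => hne12 h.symm)
      · rcases lt_trichotomy (vv i2) (vv i0) with h20 | h20 | h20
        · exact key2 i1 i2 i0 h21 h20
        · exact absurd h20 (hvne i2 i0 fun h => hne02 h.symm)
        · exact key2 i1 i0 i2 h01 h20
  · -- main case: c12 ≠ 0
    have hxyzero : ∀ i : Fin N, xc i * yc i = 0 := by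
      intro i
      obtain ⟨q12, q13, q23⟩ := minors_zero_of_rank_one (hCrank i)
      have h := m12_expand d₁ d₂ (xc i) (yc i) hm112 hm212
      rw [hxy i, q12] at h
      rcases mul_eq_zero.mp h.symm with h' | h'
      · exact h'
      · exact absurd h' hc12
    set bb : Fin N → ℝ := fun i => a (vv i) + c23 / c12 with hbbdef
    have iffhelper : ∀ s m : ℝ, s * m < 0 → (0 < m ↔ s ≤ 0) := by
      intro s m h
      constructor
      · intro hm; nlinarith
      · intro hs
        rcases lt_trichotomy 0 m with h1 | h1 | h1
        · exact h1
        · rw [← h1, mul_zero] at h; exact absurd h (lt_irrefl 0)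
        · nlinarith
    have hordsign : ∀ i j : Fin N, i ≠ j → vv j < vv i →
        (bb i + bb j) * m12 ((X ∘ σ) i - (X ∘ σ) j) < 0 := by
      intro i j hij hvlt
      have hEm : c12 * m23 ((X ∘ σ) i - (X ∘ σ) j) = c23 * m12 ((X ∘ σ) i - (X ∘ σ) j) := by
        rw [hmm12 i j, hmm23 i j]; ring
      have hHH := hermite_hadamard hF ha' ha'' hvlt
      have hda : a (vv j) < a (vv i) := hamono hvlt
      have hθm : (2 * (c23 / c12)) * m12 ((X ∘ σ) i - (X ∘ σ) j) =
          2 * m23 ((X ∘ σ) i - (X ∘ σ) j) := by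
        calc (2 * (c23 / c12)) * m12 ((X ∘ σ) i - (X ∘ σ) j)
            = 2 * (c23 * m12 ((X ∘ σ) i - (X ∘ σ) j)) / c12 := by ring
          _ = 2 * (c12 * m23 ((X ∘ σ) i - (X ∘ σ) j)) / c12 := by rw [hEm]
          _ = 2 * m23 ((X ∘ σ) i - (X ∘ σ) j) := by
              rw [mul_comm c12, mul_div_assoc, mul_div_assoc, div_self hc12, mul_one]
      rw [hm12v i j, hm23v i j] at hθm
      have hkey : (bb i + bb j) * m12 ((X ∘ σ) i - (X ∘ σ) j) =
          (a (vv i) - a (vv j)) *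
            (2 * (F (vv i) - F (vv j)) - (a (vv i) + a (vv j)) * (vv i - vv j)) := by
        rw [hm12v i j]
        simp only [hbbdef]
        linear_combination hθm
      have hneg : 2 * (F (vv i) - F (vv j)) - (a (vv i) + a (vv j)) * (vv i - vv j) < 0 := by
        nlinarith [hHH]
      rw [hkey]
      exact mul_neg_of_pos_of_neg (by linarith) hneg
    have hsign : ∀ i j : Fin N, i ≠ j →
        (0 < m12 ((X ∘ σ) i - (X ∘ σ) j) ↔ bb i + bb j ≤ 0) := by
      intro i j hij
      rcases lt_trichotomy (vv i) (vv j) with hv | hv | hv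
      · have h := hordsign j i (Ne.symm hij) hv
        have hflip : m12 ((X ∘ σ) j - (X ∘ σ) i) = m12 ((X ∘ σ) i - (X ∘ σ) j) := by
          rw [hm12v i j, hm12v j i]; ring
        rw [hflip] at h
        have h2 : (bb i + bb j) * m12 ((X ∘ σ) i - (X ∘ σ) j) < 0 := by
          rw [show bb i + bb j = bb j + bb i by ring]
          exact h
        exact iffhelper _ _ h2
      · -- tie case
        have huune : uu i ≠ uu j := fun h => hij (hZuv i j h hv)
        have huu0 : uu i - uu j ≠ 0 := sub_ne_zero.mpr huune
        have hP12 : m12 ((X ∘ σ) i - (X ∘ σ) j) = (uu i - uu j) ^ 2 := by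
          rw [hm12v i j, hv]; ring
        have hpos : 0 < m12 ((X ∘ σ) i - (X ∘ σ) j) := by
          rw [hP12]; positivity
        have hEm : c12 * m23 ((X ∘ σ) i - (X ∘ σ) j) = c23 * m12 ((X ∘ σ) i - (X ∘ σ) j) := by
          rw [hmm12 i j, hmm23 i j]; ring
        rw [hm12v i j, hm23v i j, hv] at hEm
        have h3 : (c23 + c12 * a (vv j)) * (uu i - uu j) ^ 2 = 0 := by
          linear_combination -hEm
        have h4 : c23 = -(a (vv j)) * c12 := by
          rcases mul_eq_zero.mp h3 with h' | h'
          · linarith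
          · exact absurd h' (pow_ne_zero 2 huu0)
        have hbval : bb i + bb j = 0 := by
          simp only [hbbdef, hv, h4]
          field_simp
          ring
        constructor
        · intro _; rw [hbval]
        · intro _; exact hpos
      · exact iffhelper _ _ (hordsign i j hij hv)
    -- coordinate sums vanish
    have hsums : (∑ i, xc i) = 0 ∧ (∑ i, yc i) = 0 := by
      apply huniq
      rw [Finset.sum_smul, Finset.sum_smul, ← Finset.sum_add_distrib]
      rw [Finset.sum_congr rfl fun j _ => (hxy j)]
      exact hCsum
    -- extremal indices
    have hnonempty : (Finset.univ : Finset (Fin N)).Nonempty := ⟨i0, Finset.mem_univ _⟩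
    obtain ⟨iX, _, hiX⟩ := Finset.exists_max_image Finset.univ ξ hnonempty
    obtain ⟨iY, _, hiY⟩ := Finset.exists_min_image Finset.univ ξ hnonempty
    obtain ⟨iU, _, hiU⟩ := Finset.exists_max_image Finset.univ η hnonempty
    obtain ⟨iV, _, hiV⟩ := Finset.exists_min_image Finset.univ η hnonempty
    have hmaxX : ∀ j, ξ j ≤ ξ iX := fun j => hiX j (Finset.mem_univ _)
    have hminY : ∀ j, ξ iY ≤ ξ j := fun j => hiY j (Finset.mem_univ _)
    have hmaxU : ∀ j, η j ≤ η iU := fun j => hiU j (Finset.mem_univ _)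
    have hminV : ∀ j, η iV ≤ η j := fun j => hiV j (Finset.mem_univ _)
    have hN2 : 2 ≤ N := by omega
    have hxX : xc iX ≠ 0 :=
      argmax_step_ne_zero hN2 xc κ hκ hsums.1 ξ (fun i => rfl) hξne iX hmaxX
    have hxY : xc iY ≠ 0 := by
      have hsum' : (∑ i, (fun i => -xc i) i) = 0 := by
        simp only
        rw [Finset.sum_neg_distrib, hsums.1, neg_zero]
      have h := argmax_step_ne_zero hN2 (fun i => -xc i) κ hκ hsum' (fun i => -ξ i)
        (fun i => by
          simp only [hξdef]
          rw [Finset.sum_neg_distrib]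
          ring)
        (fun i j hij => by simpa using hξne i j hij)
        iY (fun j => neg_le_neg (hminY j))
      simpa using h
    have hyU : yc iU ≠ 0 :=
      argmax_step_ne_zero hN2 yc κ hκ hsums.2 η (fun i => rfl) hηne iU hmaxU
    have hyV : yc iV ≠ 0 := by
      have hsum' : (∑ i, (fun i => -yc i) i) = 0 := by
        simp only
        rw [Finset.sum_neg_distrib, hsums.2, neg_zero]
      have h := argmax_step_ne_zero hN2 (fun i => -yc i) κ hκ hsum' (fun i => -η i)
        (fun i => by
          simp only [hηdef]
          rw [Finset.sum_neg_distrib]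
          ring)
        (fun i j hij => by simpa using hηne i j hij)
        iV (fun j => neg_le_neg (hminV j))
      simpa using h
    have hxU : xc iU = 0 := by
      rcases mul_eq_zero.mp (hxyzero iU) with h' | h'
      · exact h'
      · exact absurd h' hyU
    have hxV : xc iV = 0 := by
      rcases mul_eq_zero.mp (hxyzero iV) with h' | h'
      · exact h'
      · exact absurd h' hyV
    -- distinctness
    have hXU : iX ≠ iU := fun h => hxX (h ▸ hxU)
    have hXV : iX ≠ iV := fun h => hxX (h ▸ hxV)
    have hYU : iY ≠ iU := fun h => hxY (h ▸ hxU)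
    have hYV : iY ≠ iV := fun h => hxY (h ▸ hxV)
    have hXY : iX ≠ iY := by
      intro h
      have h1 : ξ i0 = ξ iX := le_antisymm (hmaxX i0) (h ▸ hminY i0)
      have h2 : ξ i1 = ξ iX := le_antisymm (hmaxX i1) (h ▸ hminY i1)
      exact hξne i1 i0 hne10 (by rw [h1, h2])
    have hUV : iU ≠ iV := by
      intro h
      have h1 : η i0 = η iU := le_antisymm (hmaxU i0) (h ▸ hminV i0)
      have h2 : η i1 = η iU := le_antisymm (hmaxU i1) (h ▸ hminV i1)
      exact hηne i1 i0 hne10 (by rw [h1, h2])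
    -- strict extremality
    have hXs : ∀ j, j ≠ iX → ξ j < ξ iX := fun j hj => lt_of_le_of_ne (hmaxX j) (hξne j iX hj)
    have hYs : ∀ j, j ≠ iY → ξ iY < ξ j := fun j hj => lt_of_le_of_ne (hminY j) (hξne iY j (Ne.symm hj))
    have hUs : ∀ j, j ≠ iU → η j < η iU := fun j hj => lt_of_le_of_ne (hmaxU j) (hηne j iU hj)
    have hVs : ∀ j, j ≠ iV → η iV < η j := fun j hj => lt_of_le_of_ne (hminV j) (hηne iV j (Ne.symm hj))
    -- the four sign relations
    have dXV1 : 0 < ξ iX - ξ iV := by have := hXs iV (Ne.symm hXV); linarith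
    have dXV2 : 0 < η iX - η iV := by have := hVs iX hXV; linarith
    have dXU1 : 0 < ξ iX - ξ iU := by have := hXs iU (Ne.symm hXU); linarith
    have dXU2 : η iX - η iU < 0 := by have := hUs iX hXU; linarith
    have dYU1 : ξ iY - ξ iU < 0 := by have := hYs iU (Ne.symm hYU); linarith
    have dYU2 : η iY - η iU < 0 := by have := hUs iY hYU; linarith
    have dYV1 : ξ iY - ξ iV < 0 := by have := hYs iV (Ne.symm hYV); linarith
    have dYV2 : 0 < η iY - η iV := by have := hVs iY hYV; linarith
    rcases lt_or_gt_of_ne hc12 with hcneg | hcpos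
    · -- c12 < 0
      have hcp : 0 < -c12 := neg_pos.mpr hcneg
      have e1 : ¬ (bb iX + bb iV ≤ 0) := by
        intro hle
        have hp := (hsign iX iV hXV).mpr hle
        rw [hmm12 iX iV] at hp
        nlinarith [mul_pos (mul_pos dXV1 dXV2) hcp]
      have e2 : bb iX + bb iU ≤ 0 := by
        apply (hsign iX iU hXU).mp
        rw [hmm12 iX iU]
        nlinarith [mul_pos (mul_pos dXU1 (neg_pos.mpr dXU2)) hcp]
      have e3 : ¬ (bb iY + bb iU ≤ 0) := by
        intro hle
        have hp := (hsign iY iU hYU).mpr hle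
        rw [hmm12 iY iU] at hp
        nlinarith [mul_pos (mul_pos (neg_pos.mpr dYU1) (neg_pos.mpr dYU2)) hcp]
      have e4 : bb iY + bb iV ≤ 0 := by
        apply (hsign iY iV hYV).mp
        rw [hmm12 iY iV]
        nlinarith [mul_pos (mul_pos (neg_pos.mpr dYV1) dYV2) hcp]
      push_neg at e1 e3
      linarith
    · -- c12 > 0
      have e1 : bb iX + bb iV ≤ 0 := by
        apply (hsign iX iV hXV).mp
        rw [hmm12 iX iV]
        nlinarith [mul_pos (mul_pos dXV1 dXV2) hcpos]
      have e2 : ¬ (bb iX + bb iU ≤ 0) := by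
        intro hle
        have hp := (hsign iX iU hXU).mpr hle
        rw [hmm12 iX iU] at hp
        nlinarith [mul_pos (mul_pos dXU1 (neg_pos.mpr dXU2)) hcpos]
      have e3 : bb iY + bb iU ≤ 0 := by
        apply (hsign iY iU hYU).mp
        rw [hmm12 iY iU]
        nlinarith [mul_pos (mul_pos (neg_pos.mpr dYU1) (neg_pos.mpr dYU2)) hcpos]
      have e4 : ¬ (bb iY + bb iV ≤ 0) := by
        intro hle
        have hp := (hsign iY iV hYV).mpr hle
        rw [hmm12 iY iV] at hp
        nlinarith [mul_pos (mul_pos (neg_pos.mpr dYV1) dYV2) hcpos]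
      push_neg at e2 e4
      linarith
end
end

section
/- Let Z be a subset of {1,2,3} with cardinality two, and for M ∈ ℝ^{3×2} let M^Z denote the 2×2 submatrix of M formed from the two rows indexed by the elements of Z. If an ordered family (X_1,…,X_N) ⊂ ℝ^{3×2} forms a T_N configuration and the set {X_1^Z,…,X_N^Z} does not contain rank-one connections (i.e., rank(X_i^Z − X_j^Z) ≠ 1 for all i ≠ j), then for every i ∈ {1,…,N} there exist indices j ≠ i and k ≠ i such that det(X_j^Z − X_i^Z) > 0 and det(X_k^Z − X_i^Z) < 0. -/
open Matrix

noncomputable section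

namespace StmtTwoAux

/-- A matrix of rank zero is zero. -/
lemma eq_zero_of_rank_eq_zero {m n : ℕ} (A : Matrix (Fin m) (Fin n) ℝ)
    (h : A.rank = 0) : A = 0 := by
  rw [Matrix.rank, Submodule.finrank_eq_zero] at h
  ext i j
  have h2 : A.mulVecLin (Pi.single j 1) = 0 := by
    have := LinearMap.range_eq_bot.mp h
    exact congrFun (congrArg DFunLike.coe this) _
  have h3 := congrFun h2 i
  simp [Matrix.mulVecLin_apply, Matrix.mulVec, dotProduct, Pi.single_apply] at h3
  simpa using h3

/-- If all columns of `A` are multiples of a fixed vector `u`, then `rank A ≤ 1`. -/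
lemma rank_le_one_of_cols {m n : ℕ} (A : Matrix (Fin m) (Fin n) ℝ) (u : Fin m → ℝ)
    (h : ∀ j, ∃ t : ℝ, (fun i' => A i' j) = t • u) : A.rank ≤ 1 := by
  rw [Matrix.rank_eq_finrank_span_cols]
  have hle : Submodule.span ℝ (Set.range Aᵀ) ≤ Submodule.span ℝ {u} := by
    rw [Submodule.span_le]
    rintro - ⟨j, rfl⟩
    obtain ⟨t, ht⟩ := h j
    have hA : Aᵀ j = t • u := by funext i'; exact congrFun ht i'
    rw [hA]
    exact Submodule.smul_mem _ t (Submodule.mem_span_singleton_self u)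
  refine (Submodule.finrank_mono hle).trans ?_
  by_cases hu : u = 0
  · rw [hu, Submodule.span_zero_singleton]
    simp
  · rw [finrank_span_singleton hu]

/-- Submatrix (row selection) does not increase rank. -/
lemma rank_submatrix_le' {l m n : ℕ} (f : Fin l → Fin m) (A : Matrix (Fin m) (Fin n) ℝ) :
    (A.submatrix f id).rank ≤ A.rank := by
  rw [show (id : Fin n → Fin n) = ⇑(Equiv.refl (Fin n)) from rfl, Matrix.rank, Matrix.rank,
    Matrix.mulVecLin_submatrix, LinearMap.range_comp, LinearMap.range_comp,
    show LinearMap.funLeft ℝ ℝ ⇑(Equiv.refl (Fin n)).symm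
      = (LinearEquiv.funCongrLeft ℝ ℝ (Equiv.refl (Fin n)).symm : (Fin n → ℝ) →ₗ[ℝ] _) from rfl,
    LinearEquiv.range, Submodule.map_top]
  exact Submodule.finrank_map_le _ _

lemma det_eq_zero_of_rank_le_one (D : Matrix (Fin 2) (Fin 2) ℝ) (h : D.rank ≤ 1) :
    D.det = 0 := by
  by_contra hd
  have hu : IsUnit D := D.isUnit_iff_isUnit_det.mpr (isUnit_iff_ne_zero.mpr hd)
  have h2 := Matrix.rank_of_isUnit D hu
  rw [Fintype.card_fin] at h2
  omega

lemma eq_zero_of_det_eq_zero_of_rank_ne_one (D : Matrix (Fin 2) (Fin 2) ℝ)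
    (hdet : D.det = 0) (hr : D.rank ≠ 1) : D = 0 := by
  rw [Matrix.det_fin_two] at hdet
  have hle : D.rank ≤ 1 := by
    by_cases h0 : (fun i' => D i' 0) = (0 : Fin 2 → ℝ)
    · refine rank_le_one_of_cols D (fun i' => D i' 1) ?_
      intro j
      fin_cases j
      · exact ⟨0, by simpa using h0⟩
      · exact ⟨1, by funext i'; simp⟩
    · refine rank_le_one_of_cols D (fun i' => D i' 0) ?_
      intro j
      fin_cases j
      · exact ⟨1, by funext i'; simp⟩
      · have hne : D 0 0 ≠ 0 ∨ D 1 0 ≠ 0 := by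
          by_contra hc
          push_neg at hc
          apply h0
          funext i'
          fin_cases i' <;> simp [hc.1, hc.2]
        rcases hne with hne | hne
        · refine ⟨D 0 1 / D 0 0, ?_⟩
          funext i'
          fin_cases i' <;> simp <;> field_simp <;> nlinarith [hdet]
        · refine ⟨D 1 1 / D 1 0, ?_⟩
          funext i'
          fin_cases i' <;> simp <;> field_simp <;> nlinarith [hdet]
  exact eq_zero_of_rank_eq_zero D (by omega)

/-- A nonzero 3×2 matrix supported on a single row has rank one. -/
lemma rank_eq_one_of_single_row (M : Matrix (Fin 3) (Fin 2) ℝ) (r : Fin 3)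
    (hM : M ≠ 0) (h : ∀ i j, i ≠ r → M i j = 0) : M.rank = 1 := by
  have hle : M.rank ≤ 1 := by
    refine rank_le_one_of_cols M (Pi.single r 1) ?_
    intro j
    refine ⟨M r j, ?_⟩
    funext i'
    by_cases hi : i' = r
    · subst hi; simp
    · simp [h i' j hi, Pi.single_apply, hi]
  have hne : M.rank ≠ 0 := fun h0 => hM (eq_zero_of_rank_eq_zero M h0)
  omega

lemma exists_r : ∀ (e : Fin 2 → Fin 3), Function.Injective e →
    ∃ r : Fin 3, ∀ i : Fin 3, i ≠ r → ∃ p, e p = i := by decide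

/-- Affine expansion of `det` along a direction of zero determinant. -/
lemma det_affine (A D : Matrix (Fin 2) (Fin 2) ℝ) (hD : D.det = 0) (s : ℝ) :
    (A + s • D).det = A.det + s * ((A + D).det - A.det) := by
  rw [Matrix.det_fin_two] at hD ⊢
  rw [Matrix.det_fin_two, Matrix.det_fin_two]
  simp only [Matrix.add_apply, Matrix.smul_apply, smul_eq_mul]
  linear_combination (s ^ 2 - s) * hD

open Fin.NatCast Fin.CommRing in
/-- The cyclic recursion argument: if `f a = g a + κ a * (g (a+1) - g a)` with `κ > 1`,
`g i = 0` and `f ≥ 0` everywhere, then `f ≡ 0`. -/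
lemma cyc {n : ℕ} (g f κ : Fin (n + 1) → ℝ) (hκ : ∀ a, 1 < κ a)
    (hrec : ∀ a, f a = g a + κ a * (g (a + 1) - g a)) (i : Fin (n + 1)) (hgi : g i = 0)
    (hf : ∀ j, 0 ≤ f j) : ∀ j, f j = 0 := by
  have hg' : ∀ a, κ a * g (a + 1) = (κ a - 1) * g a + f a := by
    intro a
    linear_combination -(hrec a)
  have fwd : ∀ t : ℕ, 0 ≤ g (i + (t : Fin (n + 1))) := by
    intro t
    induction t with
    | zero => simpa using hgi.ge
    | succ t ih =>
      have h1 : (((t + 1 : ℕ)) : Fin (n + 1)) = (t : Fin (n + 1)) + 1 := by push_cast; ring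
      rw [h1, ← add_assoc]
      set a := i + (t : Fin (n + 1)) with ha
      have hk := hκ a
      have h2 := hg' a
      nlinarith [hf a]
  have fwd' : ∀ j, 0 ≤ g j := by
    intro j
    have hj : j = i + (((j - i : Fin (n + 1)).val : ℕ) : Fin (n + 1)) := by
      rw [Fin.cast_val_eq_self]; ring
    rw [hj]; exact fwd _
  have back : ∀ s : ℕ, s ≤ n + 1 → g (i + ((n + 1 - s : ℕ) : Fin (n + 1))) = 0 := by
    intro s
    induction s with
    | zero => intro _; simpa [Fin.natCast_self] using hgi
    | succ s ih =>
      intro hs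
      have h0 := ih (by omega)
      rw [show (n + 1) - s = ((n + 1) - (s + 1)) + 1 from by omega] at h0
      rw [show (((n + 1 - (s + 1) + 1 : ℕ)) : Fin (n + 1))
          = ((n + 1 - (s + 1) : ℕ) : Fin (n + 1)) + 1 from by push_cast; ring,
        ← add_assoc] at h0
      set a := i + ((n + 1 - (s + 1) : ℕ) : Fin (n + 1)) with ha
      have hk := hκ a
      have h2 := hg' a
      have h3 := hf a
      have h4 := fwd' a
      have h5 : g a ≤ 0 := by nlinarith
      linarith
  have gz : ∀ t : ℕ, t ≤ n + 1 → g (i + (t : Fin (n + 1))) = 0 := by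
    intro t ht
    have h := back (n + 1 - t) (by omega)
    rwa [show (n + 1) - ((n + 1) - t) = t from by omega] at h
  intro j
  have hj : j = i + (((j - i : Fin (n + 1)).val : ℕ) : Fin (n + 1)) := by
    rw [Fin.cast_val_eq_self]; ring
  set t : ℕ := (j - i : Fin (n + 1)).val with ht
  have htlt : t < n + 1 := (j - i : Fin (n + 1)).is_lt
  have h1 : g (i + (t : Fin (n + 1))) = 0 := gz t (by omega)
  have h2 : g (i + (t : Fin (n + 1)) + 1) = 0 := by
    have h := gz (t + 1) (by omega)
    rwa [show (((t + 1 : ℕ)) : Fin (n + 1)) = (t : Fin (n + 1)) + 1 from by push_cast; ring,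
      ← add_assoc] at h
  rw [hj]
  have h := hrec (i + (t : Fin (n + 1)))
  rw [h1, h2] at h
  simpa using h

end StmtTwoAux

open StmtTwoAux in
/-- **Proposition (Székelyhidi; De Lellis et al.).** Let `Z ⊂ {1,2,3}` with `|Z| = 2`,
encoded by an injection `e : Fin 2 → Fin 3`, and for `M ∈ ℝ^{3×2}` let
`M^Z = M.submatrix e id` be the `2×2` submatrix picking the rows indexed by `Z`. If
`(X_1,…,X_N)` forms a `T_N` configuration and `{X_i^Z}` contains no rank-one connections,
then for every `i` there are `j ≠ i` and `k ≠ i` with `det(X_j^Z - X_i^Z) > 0` and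
`det(X_k^Z - X_i^Z) < 0`. -/
theorem stmt_2 {N : ℕ} (X : Fin N → Matrix (Fin 3) (Fin 2) ℝ)
    (hTN : IsTNConfig X)
    (e : Fin 2 → Fin 3) (he : Function.Injective e)
    (hnoZ : ∀ i j, i ≠ j → ((X i - X j).submatrix e id).rank ≠ 1) :
    ∀ i, (∃ j, j ≠ i ∧ 0 < ((X j - X i).submatrix e id).det) ∧
      (∃ k, k ≠ i ∧ ((X k - X i).submatrix e id).det < 0) := by
  obtain ⟨hN, hinj, hno1, B, C, κ, hκ, hC1, hCsum, hX⟩ := hTN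
  obtain ⟨n, rfl⟩ : ∃ n, N = n + 1 := ⟨N - 1, by omega⟩
  intro i
  set S : Fin (n + 1) → Matrix (Fin 3) (Fin 2) ℝ :=
    fun a => ∑ j ∈ Finset.univ.filter (fun j => j < a), C j with hSdef
  have hS : ∀ a, S (a + 1) = S a + C a := by
    intro a
    have ha := a.is_lt
    have hmem : a ∉ Finset.univ.filter (fun j => j < a) := by simp
    by_cases hlast : (a : ℕ) + 1 = n + 1
    · have hval : ((a + 1 : Fin (n + 1)) : ℕ) = 0 := by
        rw [Fin.val_add, Fin.val_one', Nat.mod_eq_of_lt (show 1 < n + 1 by omega), hlast,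
          Nat.mod_self]
      have h1 : Finset.univ.filter (fun j => j < a + 1) = (∅ : Finset (Fin (n + 1))) := by
        ext j
        simp only [Finset.mem_filter, Finset.mem_univ, true_and, Finset.notMem_empty, iff_false]
        intro hj
        rw [Fin.lt_def, hval] at hj
        omega
      have h2 : Finset.univ = insert a (Finset.univ.filter (fun j => j < a)) := by
        ext j
        simp only [Finset.mem_univ, Finset.mem_insert, Finset.mem_filter, true_and, true_iff]
        rcases lt_or_eq_of_le (show j ≤ a from by rw [Fin.le_def]; omega) with h | h
        · exact Or.inr h
        · exact Or.inl (Fin.ext (by rw [Fin.ext_iff] at h; omega))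
      rw [h2, Finset.sum_insert hmem] at hCsum
      simp only [hSdef, h1, Finset.sum_empty]
      rw [← hCsum]
      abel
    · have hval : ((a + 1 : Fin (n + 1)) : ℕ) = (a : ℕ) + 1 := by
        rw [Fin.val_add, Fin.val_one', Nat.mod_eq_of_lt (show 1 < n + 1 by omega),
          Nat.mod_eq_of_lt (by omega)]
      have h1 : Finset.univ.filter (fun j => j < a + 1)
          = insert a (Finset.univ.filter (fun j => j < a)) := by
        ext j
        simp only [Finset.mem_filter, Finset.mem_univ, true_and, Finset.mem_insert]
        rw [Fin.lt_def, Fin.lt_def, hval, Fin.ext_iff]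
        omega
      simp only [hSdef, h1]
      rw [Finset.sum_insert hmem]
      abel
  have hdC : ∀ a, ((C a).submatrix e id).det = 0 := by
    intro a
    refine det_eq_zero_of_rank_le_one _ ?_
    calc ((C a).submatrix e id).rank ≤ (C a).rank := rank_submatrix_le' e (C a)
      _ = 1 := hC1 a
  set g : Fin (n + 1) → ℝ := fun a => ((B + S a - X i).submatrix e id).det with hgdef
  set f : Fin (n + 1) → ℝ := fun a => ((X a - X i).submatrix e id).det with hfdef
  have hrec : ∀ a, f a = g a + κ a * (g (a + 1) - g a) := by
    intro a
    have e1 : (X a - X i).submatrix e id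
        = (B + S a - X i).submatrix e id + κ a • (C a).submatrix e id := by
      rw [hX a]
      ext p q
      simp only [hSdef, Matrix.submatrix_apply, Matrix.sub_apply, Matrix.add_apply,
        Matrix.smul_apply, smul_eq_mul]
      ring
    have e2 : (B + S (a + 1) - X i).submatrix e id
        = (B + S a - X i).submatrix e id + (C a).submatrix e id := by
      rw [hS a]
      ext p q
      simp only [Matrix.submatrix_apply, Matrix.sub_apply, Matrix.add_apply]
      ring
    have key := det_affine ((B + S a - X i).submatrix e id) ((C a).submatrix e id)
      (hdC a) (κ a)
    simp only [hfdef, hgdef]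
    rw [e1, key, e2]
  have hgi : g i = 0 := by
    have e3 : (B + S i - X i).submatrix e id = (-(κ i)) • (C i).submatrix e id := by
      rw [hX i]
      ext p q
      simp only [hSdef, Matrix.submatrix_apply, Matrix.sub_apply, Matrix.add_apply,
        Matrix.smul_apply, smul_eq_mul, Matrix.neg_apply]
      ring
    simp only [hgdef]
    rw [e3, Matrix.det_smul, hdC i, mul_zero]
  have hfi : f i = 0 := by
    simp only [hfdef]
    simp
  have hcontr : ¬ (∀ j, f j = 0) := by
    intro hall
    have hne : (i + 1 : Fin (n + 1)) ≠ i := by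
      intro hcon
      have h2 := congrArg Fin.val hcon
      rw [Fin.val_add, Fin.val_one', Nat.mod_eq_of_lt (show 1 < n + 1 by omega)] at h2
      have hlt := i.is_lt
      rcases Nat.lt_or_ge ((i : ℕ) + 1) (n + 1) with h | h
      · rw [Nat.mod_eq_of_lt h] at h2; omega
      · have hh : (i : ℕ) + 1 = n + 1 := by omega
        rw [hh, Nat.mod_self] at h2; omega
    set j := i + 1 with hjdef
    have hfj : ((X j - X i).submatrix e id).det = 0 := by
      have := hall j
      simpa [hfdef] using this
    have hD : (X j - X i).submatrix e id = 0 :=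
      eq_zero_of_det_eq_zero_of_rank_ne_one _ hfj (hnoZ j i hne)
    obtain ⟨r, hr⟩ := exists_r e he
    have hrows : ∀ i' j', i' ≠ r → (X j - X i) i' j' = 0 := by
      intro i' j' hi'
      obtain ⟨p, hp⟩ := hr i' hi'
      have h := congrFun (congrFun hD p) j'
      rw [← hp]
      simpa [Matrix.submatrix_apply] using h
    have hMne : X j - X i ≠ 0 := sub_ne_zero.mpr (fun hh => hne (hinj hh))
    have h1 : (X j - X i).rank = 1 :=
      rank_eq_one_of_single_row _ r hMne hrows
    exact hno1 j i hne h1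
  have hzero_of_nonneg : (∀ j, 0 ≤ f j) → ∀ j, f j = 0 := cyc g f κ hκ hrec i hgi
  have hzero_of_nonpos : (∀ j, f j ≤ 0) → ∀ j, f j = 0 := by
    intro h j
    have h2 := cyc (fun a => -g a) (fun a => -f a) κ hκ
      (by intro a
          show -f a = -g a + κ a * (-g (a + 1) - -g a)
          have := hrec a
          ring_nf
          ring_nf at this
          linarith)
      i (by simpa using hgi) (by intro j'; simpa using h j') j
    have h3 : -f j = 0 := h2
    linarith
  constructor
  · by_contra hcon
    push_neg at hcon
    apply hcontr
    apply hzero_of_nonpos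
    intro j'
    by_cases hji : j' = i
    · subst hji; exact hfi.le
    · have := hcon j' hji
      simpa [hfdef] using this
  · by_contra hcon
    push_neg at hcon
    apply hcontr
    apply hzero_of_nonneg
    intro j'
    by_cases hji : j' = i
    · subst hji; exact hfi.ge
    · have := hcon j' hji
      simpa [hfdef] using this
end
end

section
/- Suppose a ∈ C²(ℝ) satisfies a' > 0 and a'' > 0 on ℝ, and F satisfies F' = a. Let N ≥ 6 and X = {X_1,…,X_N} ⊂ K_a be a set of N distinct points with X_i = P(u_i, v_i). If X has an order that forms a T_N configuration, then the vectors u⃗ = (u_1,…,u_N) and v⃗ = (v_1,…,v_N) are linearly independent in ℝ^N, or the vectors u⃗ and 𝔞⃗ = (a(v_1),…,a(v_N)) are linearly independent in ℝ^N. -/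
open Matrix

noncomputable section

lemma filter_lt_succ' {N : ℕ} (n : ℕ) (h1 : n + 1 < N) :
    (Finset.univ.filter (fun j : Fin N => j < (⟨n+1, h1⟩ : Fin N))) =
      insert (⟨n, by omega⟩ : Fin N)
        (Finset.univ.filter (fun j => j < (⟨n, by omega⟩ : Fin N))) := by
  ext j
  simp only [Finset.mem_filter, Finset.mem_univ, true_and, Finset.mem_insert,
    Fin.lt_def, Fin.ext_iff]
  omega

lemma filter_lt_last' {N : ℕ} (hN : 0 < N) :
    (Finset.univ.filter (fun j : Fin N => j < (⟨N-1, by omega⟩ : Fin N))) =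
      Finset.univ.erase (⟨N-1, by omega⟩ : Fin N) := by
  ext j
  have hj := j.isLt
  simp only [Finset.mem_filter, Finset.mem_univ, true_and, Finset.mem_erase,
    Fin.lt_def, Fin.ext_iff, and_true]
  constructor
  · intro h heq
    rw [heq] at h
    exact absurd h (Nat.lt_irrefl _)
  · intro hne
    have : j.val ≠ N - 1 := fun h => hne (Fin.ext h)
    omega

lemma core_zero {N : ℕ} (hN : 0 < N) (κ c : Fin N → ℝ)
    (hκ : ∀ i, 1 < κ i) (b : ℝ)
    (h : ∀ i : Fin N,
      b + (∑ j ∈ Finset.univ.filter (fun j => j < i), c j) + κ i * c i = 0)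
    (hsum : ∑ i, c i = 0) : ∀ i, c i = 0 := by
  have hκ0 : ∀ i, (0:ℝ) < κ i := fun i => lt_trans one_pos (hκ i)
  have key : ∀ n (hn1 : n + 1 < N),
      κ ⟨n+1, hn1⟩ * c ⟨n+1, hn1⟩ = (κ ⟨n, by omega⟩ - 1) * c ⟨n, by omega⟩ := by
    intro n hn1
    have h1 := h ⟨n, by omega⟩
    have h2 := h ⟨n+1, hn1⟩
    rw [filter_lt_succ' n hn1, Finset.sum_insert (by simp [Fin.lt_def])] at h2
    linarith
  have pos : ∀ n (hn : n < N), ∃ r : ℝ, 0 < r ∧ c ⟨n, hn⟩ = r * c ⟨0, hN⟩ := by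
    intro n
    induction n with
    | zero => exact fun hn => ⟨1, one_pos, (one_mul _).symm⟩
    | succ m ih =>
      intro hn
      obtain ⟨r, hr, hc⟩ := ih (by omega)
      refine ⟨(κ ⟨m, by omega⟩ - 1) / κ ⟨m+1, hn⟩ * r, ?_, ?_⟩
      · exact mul_pos (div_pos (by linarith [hκ ⟨m, by omega⟩]) (hκ0 ⟨m+1, hn⟩)) hr
      · rw [div_mul_eq_mul_div, div_mul_eq_mul_div, eq_div_iff (ne_of_gt (hκ0 ⟨m+1, hn⟩))]
        rw [mul_comm, key m hn, hc]; ring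
  have hr' : ∀ i : Fin N, ∃ r : ℝ, 0 < r ∧ c i = r * c ⟨0, hN⟩ := fun i => by
    simpa using pos i.val i.isLt
  choose r hrpos hrc using hr'
  have hsum2 : (∑ i, r i) * c ⟨0, hN⟩ = 0 := by
    rw [Finset.sum_mul, ← hsum]
    exact Finset.sum_congr rfl fun i _ => (hrc i).symm
  have hs : 0 < ∑ i, r i :=
    Finset.sum_pos (fun i _ => hrpos i) ⟨⟨0, hN⟩, Finset.mem_univ _⟩
  have hc0 : c ⟨0, hN⟩ = 0 := by
    rcases mul_eq_zero.1 hsum2 with h' | h'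
    · exact absurd h' (ne_of_gt hs)
    · exact h'
  intro i
  rw [hrc i, hc0, mul_zero]

lemma step_diff {N : ℕ} [NeZero N] (κ c w : Fin N → ℝ) (b : ℝ)
    (h : ∀ i : Fin N,
      w i = b + (∑ j ∈ Finset.univ.filter (fun j => j < i), c j) + κ i * c i)
    (hsum : ∑ i, c i = 0) :
    ∀ i : Fin N, w (i+1) - w i = (1 - κ i) * c i + κ (i+1) * c (i+1) := by
  have hN : 0 < N := Nat.pos_of_ne_zero (NeZero.ne N)
  intro i
  by_cases hi : i.val + 1 < N
  · have hip : (i + 1 : Fin N) = ⟨i.val+1, hi⟩ := by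
      apply Fin.ext
      rw [Fin.add_def]
      dsimp only
      rw [Fin.val_one', Nat.mod_eq_of_lt (show 1 < N by omega),
        Nat.mod_eq_of_lt hi]
    have h1 := h i
    have h2 := h (i+1)
    rw [hip] at h2 ⊢
    rw [filter_lt_succ' i.val hi, Finset.sum_insert (by
      simp only [Finset.mem_filter, Finset.mem_univ, true_and]
      exact lt_irrefl _)] at h2
    simp only [Fin.eta] at h2
    rw [h1, h2]; ring
  · have hiv : i.val = N - 1 := by have := i.isLt; omega
    have hlast : i = ⟨N-1, by omega⟩ := Fin.ext hiv
    have hip : (i + 1 : Fin N) = ⟨0, hN⟩ := by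
      apply Fin.ext
      rw [Fin.add_def]
      dsimp only
      rw [Fin.val_one', hiv]
      rcases eq_or_lt_of_le (show 1 ≤ N by omega) with h1 | h1
      · rw [← h1]
      · rw [Nat.mod_eq_of_lt h1, Nat.sub_add_cancel (by omega), Nat.mod_self]
    have h1 := h i
    have h2 := h (i+1)
    rw [hip] at h2 ⊢
    rw [show (Finset.univ.filter (fun j : Fin N => j < (⟨0, hN⟩ : Fin N))) = ∅ by
      ext j
      simp only [Finset.mem_filter, Finset.mem_univ, true_and, Fin.lt_def,
        Finset.notMem_empty, iff_false, not_lt]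
      omega, Finset.sum_empty] at h2
    rw [hlast, filter_lt_last' hN,
      Finset.sum_erase_eq_sub (Finset.mem_univ _), hsum] at h1
    rw [hlast]
    rw [h1, h2]; ring


lemma minor_eq_of_rank_le_one {C : Matrix (Fin 3) (Fin 2) ℝ} (h : C.rank ≤ 1)
    (i i' : Fin 3) : C i 0 * C i' 1 = C i 1 * C i' 0 := by
  by_contra hne
  set x : Fin 3 → ℝ := fun k => C k 0 with hxdef
  set y : Fin 3 → ℝ := fun k => C k 1 with hydef
  have li : LinearIndependent ℝ ![x, y] := by
    rw [LinearIndependent.pair_iff]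
    intro s t hst
    have e1 : s * C i 0 + t * C i 1 = 0 := by
      have := congrFun hst i
      simpa [hxdef, hydef] using this
    have e2 : s * C i' 0 + t * C i' 1 = 0 := by
      have := congrFun hst i'
      simpa [hxdef, hydef] using this
    have hs : s * (C i 0 * C i' 1 - C i 1 * C i' 0) = 0 := by
      linear_combination C i' 1 * e1 - C i 1 * e2
    have ht : t * (C i 0 * C i' 1 - C i 1 * C i' 0) = 0 := by
      linear_combination -(C i' 0) * e1 + C i 0 * e2
    have hm : C i 0 * C i' 1 - C i 1 * C i' 0 ≠ 0 := fun h0 => hne (by linarith)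
    exact ⟨by rcases mul_eq_zero.1 hs with h'|h'; exact h'; exact absurd h' hm,
      by rcases mul_eq_zero.1 ht with h'|h'; exact h'; exact absurd h' hm⟩
  have hxr : x ∈ LinearMap.range C.mulVecLin :=
    ⟨Pi.single 0 1, by rw [Matrix.mulVecLin_apply, Matrix.mulVec_single_one]; rfl⟩
  have hyr : y ∈ LinearMap.range C.mulVecLin :=
    ⟨Pi.single 1 1, by rw [Matrix.mulVecLin_apply, Matrix.mulVec_single_one]; rfl⟩
  have hsp : Submodule.span ℝ (Set.range ![x, y]) ≤ LinearMap.range C.mulVecLin := by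
    rw [Submodule.span_le]
    rintro w ⟨k, rfl⟩
    fin_cases k
    · exact hxr
    · exact hyr
  have h2 : 2 ≤ C.rank := by
    have hf := finrank_span_eq_card li
    calc 2 = Module.finrank ℝ (Submodule.span ℝ (Set.range ![x, y])) := by
          rw [hf]; simp
    _ ≤ Module.finrank ℝ (LinearMap.range C.mulVecLin) := Submodule.finrank_mono hsp
    _ = C.rank := rfl
  omega

lemma slope_inj_of_strictConvex {f : ℝ → ℝ} (hf : StrictConvexOn ℝ Set.univ f)
    {m p r : ℝ} (hpm : p ≠ m) (hrm : r ≠ m) (hpr : p ≠ r)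
    (hsl : (f p - f m) * (r - m) = (f r - f m) * (p - m)) : False := by
  have heq : (f p - f m) / (p - m) = (f r - f m) / (r - m) :=
    (div_eq_div_iff (sub_ne_zero.2 hpm) (sub_ne_zero.2 hrm)).2 hsl
  rcases lt_or_gt_of_ne hpr with h | h
  · exact absurd heq
      (ne_of_lt (hf.secant_strict_mono trivial trivial trivial hpm hrm h))
  · exact absurd heq.symm
      (ne_of_lt (hf.secant_strict_mono trivial trivial trivial hrm hpm h))
open Fin.NatCast in
lemma fin_add_ne {N : ℕ} [NeZero N] (i : Fin N) (k : ℕ) (hk : 0 < k) (hkN : k < N) :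
    i + (k : Fin N) ≠ i := by
  intro heq
  have h0 : (k : Fin N) = 0 :=
    add_left_cancel (a := i) (b := (k : Fin N)) (c := 0) (by rw [heq, add_zero])
  have hv : ((k : ℕ) : Fin N).val = k := Fin.val_cast_of_lt hkN
  rw [h0] at hv
  simp at hv
  omega

open Fin.NatCast in
lemma no_TN_u_zero (a F : ℝ → ℝ) (hFc : StrictConvexOn ℝ Set.univ F)
    (hainj : Function.Injective a)
    (N : ℕ) (hN : 6 ≤ N) (v : Fin N → ℝ) (hvinj : Function.Injective v)
    (B : Matrix (Fin 3) (Fin 2) ℝ) (C : Fin N → Matrix (Fin 3) (Fin 2) ℝ)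
    (κ : Fin N → ℝ)
    (hκ : ∀ i, 1 < κ i) (hrank : ∀ i, (C i).rank = 1)
    (hCsum : ∀ r s, ∑ j, C j r s = 0)
    (hent : ∀ (i : Fin N) (r : Fin 3) (s : Fin 2), Pmat a F 0 (v i) r s
      = B r s + (∑ j ∈ Finset.univ.filter (fun j => j < i), C j r s) + κ i * C i r s) :
    False := by
  haveI : NeZero N := ⟨by omega⟩
  have hN0 : 0 < N := by omega
  have hvne : ∀ {i j : Fin N}, i ≠ j → v i ≠ v j := fun hij hv => hij (hvinj hv)
  have hne1 : ∀ i : Fin N, i + 1 ≠ i := fun i => by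
    have := fin_add_ne i 1 one_pos (by omega)
    simpa using this
  have hne2 : ∀ i : Fin N, i + 1 + 1 ≠ i := fun i => by
    have := fin_add_ne i 2 (by omega) (by omega)
    rw [show ((2:ℕ) : Fin N) = 1 + 1 by push_cast; exact one_add_one_eq_two.symm] at this
    rwa [← add_assoc] at this
  -- zero entries of all `C j`
  have h00 : ∀ j, C j 0 0 = 0 :=
    core_zero hN0 κ (fun j => C j 0 0) hκ (B 0 0)
      (fun i => by
        have h := hent i 0 0
        have hP : Pmat a F 0 (v i) 0 0 = 0 := rfl
        rw [hP] at h; linarith)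
      (hCsum 0 0)
  have h11 : ∀ j, C j 1 1 = 0 :=
    core_zero hN0 κ (fun j => C j 1 1) hκ (B 1 1)
      (fun i => by
        have h := hent i 1 1
        have hP : Pmat a F 0 (v i) 1 1 = 0 := rfl
        rw [hP] at h; linarith)
      (hCsum 1 1)
  have h20 : ∀ j, C j 2 0 = 0 :=
    core_zero hN0 κ (fun j => C j 2 0) hκ (B 2 0)
      (fun i => by
        have h := hent i 2 0
        have hP : Pmat a F 0 (v i) 2 0 = 0 := by
          show (0:ℝ) * a (v i) = 0; ring
        rw [hP] at h; linarith)
      (hCsum 2 0)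
  -- minors
  have mxy : ∀ j, C j 0 1 * C j 1 0 = 0 := fun j => by
    have h := minor_eq_of_rank_le_one (le_of_eq (hrank j)) 0 1
    rw [h00 j, h11 j] at h
    simpa using h.symm
  have myz : ∀ j, C j 1 0 * C j 2 1 = 0 := fun j => by
    have h := minor_eq_of_rank_le_one (le_of_eq (hrank j)) 1 2
    rw [h11 j, h20 j] at h
    simpa using h
  -- cyclic difference relations
  have dv : ∀ i : Fin N, v (i+1) - v i
      = (1 - κ i) * C i 0 1 + κ (i+1) * C (i+1) 0 1 :=
    step_diff κ (fun j => C j 0 1) (fun i => v i) (B 0 1)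
      (fun i => hent i 0 1) (hCsum 0 1)
  have da : ∀ i : Fin N, a (v (i+1)) - a (v i)
      = (1 - κ i) * C i 1 0 + κ (i+1) * C (i+1) 1 0 :=
    step_diff κ (fun j => C j 1 0) (fun i => a (v i)) (B 1 0)
      (fun i => hent i 1 0) (hCsum 1 0)
  have dF : ∀ i : Fin N, F (v (i+1)) - F (v i)
      = (1 - κ i) * C i 2 1 + κ (i+1) * C (i+1) 2 1 :=
    step_diff κ (fun j => C j 2 1) (fun i => F (v i)) (B 2 1)
      (fun i => by
        have h := hent i 2 1
        have hP : Pmat a F 0 (v i) 2 1 = F (v i) := by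
          show (0:ℝ) ^ 2 / 2 + F (v i) = F (v i); ring
        rw [hP] at h; exact h)
      (hCsum 2 1)
  -- some y-coordinate is nonzero
  have hy_ex : ∃ i : Fin N, C i 1 0 ≠ 0 := by
    by_contra hall
    push_neg at hall
    have h0 := da 0
    rw [hall 0, hall (0+1)] at h0
    simp only [mul_zero, add_zero] at h0
    exact hne1 0 (hvinj (hainj (sub_eq_zero.1 (by linarith))))
  obtain ⟨i0, hy0⟩ := hy_ex
  have hx0 : C i0 0 1 = 0 := by
    rcases mul_eq_zero.1 (mxy i0) with h | h
    · exact h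
    · exact absurd h hy0
  have hz0 : C i0 2 1 = 0 := by
    rcases mul_eq_zero.1 (myz i0) with h | h
    · exact absurd h hy0
    · exact h
  have hyq : C (i0+1) 1 0 = 0 := by
    by_contra hyq
    have hxq : C (i0+1) 0 1 = 0 := by
      rcases mul_eq_zero.1 (mxy (i0+1)) with h | h
      · exact h
      · exact absurd h hyq
    have h0 := dv i0
    rw [hx0, hxq] at h0
    simp only [mul_zero, add_zero] at h0
    exact hne1 i0 (hvinj (sub_eq_zero.1 (by linarith)))
  have hyq1 : C (i0+1+1) 1 0 ≠ 0 := by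
    intro hyq1
    have h0 := da (i0+1)
    rw [hyq, hyq1] at h0
    simp only [mul_zero, add_zero] at h0
    exact hne1 (i0+1) (hvinj (hainj (sub_eq_zero.1 (by linarith))))
  have hxq1 : C (i0+1+1) 0 1 = 0 := by
    rcases mul_eq_zero.1 (mxy (i0+1+1)) with h | h
    · exact h
    · exact absurd h hyq1
  have hzq1 : C (i0+1+1) 2 1 = 0 := by
    rcases mul_eq_zero.1 (myz (i0+1+1)) with h | h
    · exact absurd h hyq1
    · exact h
  -- the four secant relations
  have e1 : F (v (i0+1)) - F (v i0) = κ (i0+1) * C (i0+1) 2 1 := by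
    have h := dF i0; rw [hz0] at h; linarith
  have e2 : v (i0+1+1) - v (i0+1) = (1 - κ (i0+1)) * C (i0+1) 0 1 := by
    have h := dv (i0+1); rw [hxq1] at h; linarith
  have e3 : F (v (i0+1+1)) - F (v (i0+1)) = (1 - κ (i0+1)) * C (i0+1) 2 1 := by
    have h := dF (i0+1); rw [hzq1] at h; linarith
  have e4 : v (i0+1) - v i0 = κ (i0+1) * C (i0+1) 0 1 := by
    have h := dv i0; rw [hx0] at h; linarith
  have key : (F (v i0) - F (v (i0+1))) * (v (i0+1+1) - v (i0+1))
      = (F (v (i0+1+1)) - F (v (i0+1))) * (v i0 - v (i0+1)) := by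
    calc (F (v i0) - F (v (i0+1))) * (v (i0+1+1) - v (i0+1))
        = (-(κ (i0+1) * C (i0+1) 2 1)) * ((1 - κ (i0+1)) * C (i0+1) 0 1) := by
          rw [show F (v i0) - F (v (i0+1)) = -(κ (i0+1) * C (i0+1) 2 1) by
            linarith, e2]
    _ = ((1 - κ (i0+1)) * C (i0+1) 2 1) * (-(κ (i0+1) * C (i0+1) 0 1)) := by ring
    _ = (F (v (i0+1+1)) - F (v (i0+1))) * (v i0 - v (i0+1)) := by
          rw [← e3, show -(κ (i0+1) * C (i0+1) 0 1) = v i0 - v (i0+1) by linarith]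
  exact slope_inj_of_strictConvex hFc
    (hvne (hne1 i0).symm) (hvne (hne1 (i0+1))) (hvne (hne2 i0).symm) key

lemma no_TN_v_zero (a F : ℝ → ℝ) (ha0 : a 0 = 0)
    (N : ℕ) (hN : 6 ≤ N) (u : Fin N → ℝ) (huinj : Function.Injective u)
    (B : Matrix (Fin 3) (Fin 2) ℝ) (C : Fin N → Matrix (Fin 3) (Fin 2) ℝ)
    (κ : Fin N → ℝ)
    (hκ : ∀ i, 1 < κ i) (hrank : ∀ i, (C i).rank = 1)
    (hCsum : ∀ r s, ∑ j, C j r s = 0)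
    (hent : ∀ (i : Fin N) (r : Fin 3) (s : Fin 2), Pmat a F (u i) 0 r s
      = B r s + (∑ j ∈ Finset.univ.filter (fun j => j < i), C j r s) + κ i * C i r s) :
    False := by
  have hN0 : 0 < N := by omega
  have h01 : ∀ j, C j 0 1 = 0 :=
    core_zero hN0 κ (fun j => C j 0 1) hκ (B 0 1)
      (fun i => by
        have h := hent i 0 1
        have hP : Pmat a F (u i) 0 0 1 = 0 := rfl
        rw [hP] at h; linarith)
      (hCsum 0 1)
  have h10 : ∀ j, C j 1 0 = 0 :=
    core_zero hN0 κ (fun j => C j 1 0) hκ (B 1 0)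
      (fun i => by
        have h := hent i 1 0
        have hP : Pmat a F (u i) 0 1 0 = a 0 := rfl
        rw [hP, ha0] at h; linarith)
      (hCsum 1 0)
  have hd : ∀ j, C j 0 0 - C j 1 1 = 0 :=
    core_zero hN0 κ (fun j => C j 0 0 - C j 1 1) hκ (B 0 0 - B 1 1)
      (fun i => by
        have t1 := hent i 0 0
        have t2 := hent i 1 1
        have hP1 : Pmat a F (u i) 0 0 0 = u i := rfl
        have hP2 : Pmat a F (u i) 0 1 1 = u i := rfl
        rw [hP1] at t1; rw [hP2] at t2
        beta_reduce
        rw [Finset.sum_sub_distrib]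
        linarith)
      (by rw [Finset.sum_sub_distrib, hCsum 0 0, hCsum 1 1]; ring)
  have h00 : ∀ j, C j 0 0 = 0 := fun j => by
    have hm := minor_eq_of_rank_le_one (le_of_eq (hrank j)) 0 1
    rw [h01 j, h10 j] at hm
    have h11 : C j 1 1 = C j 0 0 := by linarith [hd j]
    rw [h11] at hm
    exact mul_self_eq_zero.1 (by linarith)
  have hcon : ∀ i : Fin N, u i = B 0 0 := fun i => by
    have h := hent i 0 0
    have hP1 : Pmat a F (u i) 0 0 0 = u i := rfl
    rw [hP1, Finset.sum_congr rfl (fun j _ => h00 j), Finset.sum_const_zero,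
      h00 i] at h
    simpa using h
  have hne : (⟨0, hN0⟩ : Fin N) ≠ ⟨1, by omega⟩ := by simp [Fin.ext_iff]
  exact hne (huinj ((hcon ⟨0, hN0⟩).trans (hcon ⟨1, by omega⟩).symm))


/-- **Lemma 5.** If `a ∈ C²` with `a' > 0`, `a'' > 0`, `F' = a`, `N ≥ 6`, and the `N`
distinct points `X_i = P(u_i, v_i) ∈ K_a` have an order forming a `T_N` configuration,
then `u⃗` and `v⃗` are linearly independent, or `u⃗` and `𝔞⃗ = (a(v_1),…,a(v_N))` are
linearly independent. -/
theorem stmt_3 (a F : ℝ → ℝ)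
    (ha : ContDiff ℝ 2 a)
    (ha' : ∀ x : ℝ, 0 < deriv a x)
    (ha'' : ∀ x : ℝ, 0 < deriv (deriv a) x)
    (hF : ∀ x : ℝ, HasDerivAt F (a x) x)
    (N : ℕ) (hN : 6 ≤ N)
    (u v : Fin N → ℝ)
    (X : Fin N → Matrix (Fin 3) (Fin 2) ℝ)
    (hX : ∀ i, X i = Pmat a F (u i) (v i))
    (hdist : Function.Injective X)
    (hTN : HasTNOrder X) :
    LinearIndependent ℝ ![u, v] ∨ LinearIndependent ℝ ![u, fun j => a (v j)] := by
  have hit2 : ∀ g : ℝ → ℝ, deriv^[2] g = deriv (deriv g) := fun g => rfl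
  have hconva : StrictConvexOn ℝ Set.univ a := by
    apply strictConvexOn_of_deriv2_pos convex_univ ha.continuous.continuousOn
    intro x _
    rw [hit2]
    exact ha'' x
  have hderivF : deriv F = a := funext fun x => (hF x).deriv
  have hconvF : StrictConvexOn ℝ Set.univ F := by
    have hFdiff : Differentiable ℝ F := fun x => (hF x).differentiableAt
    apply strictConvexOn_of_deriv2_pos convex_univ hFdiff.continuous.continuousOn
    intro x _
    rw [hit2, hderivF]
    exact ha' x
  have hainj : Function.Injective a := (strictMono_of_deriv_pos ha').injective
  by_contra hcon
  push_neg at hcon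
  obtain ⟨h1, h2⟩ := hcon
  rw [LinearIndependent.pair_iff] at h1 h2
  push_neg at h1 h2
  obtain ⟨s1, t1, hrel1, hst1⟩ := h1
  obtain ⟨s2, t2, hrel2, hst2⟩ := h2
  obtain ⟨σ, hN4, hinj, hnr, B, C, κ, hκ, hrank, hCsum, hXeq⟩ := hTN
  have hCsum' : ∀ (r : Fin 3) (s : Fin 2), ∑ j, C j r s = 0 := fun r s => by
    have h := congrFun (congrFun hCsum r) s
    simpa [Matrix.sum_apply] using h
  have hent : ∀ (i : Fin N) (r : Fin 3) (s : Fin 2),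
      Pmat a F (u (σ i)) (v (σ i)) r s
        = B r s + (∑ j ∈ Finset.univ.filter (fun j => j < i), C j r s)
          + κ i * C i r s := by
    intro i r s
    have h := congrFun (congrFun (hXeq i) r) s
    simpa [hX (σ i), Matrix.add_apply, Matrix.smul_apply, smul_eq_mul,
      Matrix.sum_apply] using h
  by_cases hu : u = 0
  · -- all `u` vanish: use the convexity of `F` along the curve
    have hvinj : Function.Injective fun i => v (σ i) := by
      intro i j hvv
      apply hinj
      show X (σ i) = X (σ j)
      rw [hX (σ i), hX (σ j), show u (σ i) = 0 from congrFun hu (σ i),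
        show u (σ j) = 0 from congrFun hu (σ j),
        show v (σ i) = v (σ j) from hvv]
    exact no_TN_u_zero a F hconvF hainj N hN
      (fun i => v (σ i)) hvinj B C κ hκ hrank hCsum'
      (fun i r s => by
        have h := hent i r s
        rwa [show u (σ i) = 0 from congrFun hu (σ i)] at h)
  · have ht1 : t1 ≠ 0 := by
      intro h
      rw [h, zero_smul, add_zero] at hrel1
      rcases smul_eq_zero.1 hrel1 with h' | h'
      · exact hst1 h' h
      · exact hu h'
    have ht2 : t2 ≠ 0 := by
      intro h
      rw [h, zero_smul, add_zero] at hrel2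
      rcases smul_eq_zero.1 hrel2 with h' | h'
      · exact hst2 h' h
      · exact hu h'
    set α : ℝ := -s1 / t1 with hαdef
    set β : ℝ := -s2 / t2 with hβdef
    have hva : ∀ j, v j = α * u j := by
      intro j
      have h := congrFun hrel1 j
      simp only [Pi.add_apply, Pi.smul_apply, smul_eq_mul, Pi.zero_apply] at h
      rw [hαdef, div_mul_eq_mul_div, eq_div_iff ht1]
      linarith
    have hab : ∀ j, a (v j) = β * u j := by
      intro j
      have h := congrFun hrel2 j
      simp only [Pi.add_apply, Pi.smul_apply, smul_eq_mul, Pi.zero_apply] at h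
      rw [hβdef, div_mul_eq_mul_div, eq_div_iff ht2]
      linarith
    have huinj : Function.Injective u := by
      intro i j hij
      apply hdist
      rw [hX i, hX j, hva i, hva j, hij]
    by_cases hα : α = 0
    · have hv0 : ∀ j, v j = 0 := fun j => by rw [hva j, hα, zero_mul]
      by_cases hβ : β = 0
      · have ha0 : a 0 = 0 := by
          have h := hab ⟨0, by omega⟩
          rwa [hv0 ⟨0, by omega⟩, hβ, zero_mul] at h
        have huinj' : Function.Injective fun i => u (σ i) := by
          intro i j hij
          exact σ.injective (huinj hij)
        exact no_TN_v_zero a F ha0 N hN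
          (fun i => u (σ i)) huinj' B C κ hκ hrank hCsum'
          (fun i r s => by
            have h := hent i r s
            rwa [hv0 (σ i)] at h)
      · have hc : ∀ j, β * u j = a 0 := fun j => by
          have h := hab j
          rw [hv0 j] at h
          linarith
        have h01 : (⟨0, by omega⟩ : Fin N) = ⟨1, by omega⟩ := by
          apply huinj
          have := (hc ⟨0, by omega⟩).trans (hc ⟨1, by omega⟩).symm
          exact mul_left_cancel₀ hβ this
        simp [Fin.ext_iff] at h01
    · -- three distinct collinear points on the graph of the strictly convex `a`
      have hj : ∀ j, α * a (α * u j) = β * (α * u j) := fun j => by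
        have h := hab j
        rw [hva j] at h
        rw [h]; ring
      have huij : ∀ (n m : ℕ) (hn : n < N) (hm : m < N), n ≠ m →
          α * u ⟨n, hn⟩ ≠ α * u ⟨m, hm⟩ := by
        intro n m hn hm hnm heq
        have := huinj (mul_left_cancel₀ hα heq)
        simp only [Fin.ext_iff] at this
        exact hnm this
      have e0 := hj ⟨0, by omega⟩
      have e1 := hj ⟨1, by omega⟩
      have e2 := hj ⟨2, by omega⟩
      have hE : α * ((a (α * u ⟨1, by omega⟩) - a (α * u ⟨0, by omega⟩))
            * (α * u ⟨2, by omega⟩ - α * u ⟨0, by omega⟩)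
          - (a (α * u ⟨2, by omega⟩) - a (α * u ⟨0, by omega⟩))
            * (α * u ⟨1, by omega⟩ - α * u ⟨0, by omega⟩)) = 0 := by
        linear_combination (α * u ⟨2, by omega⟩ - α * u ⟨0, by omega⟩) * e1
          - (α * u ⟨2, by omega⟩ - α * u ⟨0, by omega⟩) * e0
          - (α * u ⟨1, by omega⟩ - α * u ⟨0, by omega⟩) * e2
          + (α * u ⟨1, by omega⟩ - α * u ⟨0, by omega⟩) * e0
      have hE0 : (a (α * u ⟨1, by omega⟩) - a (α * u ⟨0, by omega⟩))
            * (α * u ⟨2, by omega⟩ - α * u ⟨0, by omega⟩)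
          = (a (α * u ⟨2, by omega⟩) - a (α * u ⟨0, by omega⟩))
            * (α * u ⟨1, by omega⟩ - α * u ⟨0, by omega⟩) := by
        rcases mul_eq_zero.1 hE with h' | h'
        · exact absurd h' hα
        · linarith
      exact slope_inj_of_strictConvex hconva
        (huij 1 0 (by omega) (by omega) (by omega))
        (huij 2 0 (by omega) (by omega) (by omega))
        (huij 1 2 (by omega) (by omega) (by omega)) hE0

end
end

section
/- Let a: ℝ → ℝ be differentiable, F satisfy F' = a, and let X = {X_1,…,X_N} ⊂ K_a with X_i = P(u_i, v_i). If the ordered family (X_1,…,X_N) forms a T_N configuration, then for every i = 1,…,N the ordered family (T_1^i,…,T_N^i) also forms a T_N configuration (not necessarily contained in K_a). -/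
open Matrix

noncomputable section

/-!
Everything is linear algebra: `T^i_j = M (X_j - X_i)` for the unimodular shear `M` with last row
`(-a(v_i), -u_i, 1)`, and `T_N` configurations are preserved by translations and by left
multiplication with invertible matrices, since both preserve rank-one connections and the
defining decomposition.
-/

namespace IsTNConfig

variable {m n N : ℕ} {X : Fin N → Matrix (Fin m) (Fin n) ℝ}

theorem add_const (hX : IsTNConfig X) (D : Matrix (Fin m) (Fin n) ℝ) :
    IsTNConfig (fun j => X j + D) := by
  obtain ⟨hN, hinj, hrank, B, C, κ, hκ, hC, hCsum, hdecomp⟩ := hX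
  refine ⟨hN, (add_left_injective D).comp hinj, fun i j hij => ?_,
    B + D, C, κ, hκ, hC, hCsum, fun i => ?_⟩
  · simpa only [add_sub_add_right_eq_sub] using hrank i j hij
  · simp only [hdecomp i]
    abel

theorem mul_left (hX : IsTNConfig X) {M : Matrix (Fin m) (Fin m) ℝ} (hM : IsUnit M.det) :
    IsTNConfig (fun j => M * X j) := by
  obtain ⟨hN, hinj, hrank, B, C, κ, hκ, hC, hCsum, hdecomp⟩ := hX
  refine ⟨hN, (mul_right_injective_of_inv M⁻¹ M (nonsing_inv_mul M hM)).comp hinj,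
    fun i j hij => ?_, M * B, fun j => M * C j, κ, hκ, fun i => ?_, ?_, fun i => ?_⟩
  · rw [← Matrix.mul_sub, rank_mul_eq_right_of_isUnit_det M _ hM]
    exact hrank i j hij
  · rw [rank_mul_eq_right_of_isUnit_det M _ hM]
    exact hC i
  · rw [← Matrix.mul_sum, hCsum, Matrix.mul_zero]
  · simp only [hdecomp i, Matrix.mul_add, Matrix.mul_sum, Matrix.mul_smul]

end IsTNConfig

def shearThird (α β : ℝ) : Matrix (Fin 3) (Fin 3) ℝ :=
  !![1, 0, 0; 0, 1, 0; -α, -β, 1]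

theorem det_shearThird (α β : ℝ) : (shearThird α β).det = 1 := by
  simp [shearThird, det_fin_three]

theorem Pmat_shift_eq_shearThird_mul_sub (a F : ℝ → ℝ) (u₀ v₀ u v : ℝ) :
    Pmat (fun t => a (t + v₀) - a v₀) (fun t => F (t + v₀) - F v₀ - a v₀ * t) (u - u₀) (v - v₀) =
      shearThird (a v₀) u₀ * (Pmat a F u v - Pmat a F u₀ v₀) := by
  ext p q
  fin_cases p <;> fin_cases q <;>
    simp [shearThird, Pmat, mul_apply, Fin.sum_univ_three] <;> ring

theorem stmt_4_general (a F : ℝ → ℝ)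
    {N : ℕ} (u v : Fin N → ℝ)
    (X : Fin N → Matrix (Fin 3) (Fin 2) ℝ)
    (hX : ∀ i, X i = Pmat a F (u i) (v i))
    (hTN : IsTNConfig X) :
    ∀ i, IsTNConfig (fun j =>
      Pmat (fun t => a (t + v i) - a (v i))
        (fun t => F (t + v i) - F (v i) - a (v i) * t)
        (u j - u i) (v j - v i)) := by
  intro i
  have hunit : IsUnit (shearThird (a (v i)) (u i)).det := by
    rw [det_shearThird]
    exact isUnit_one
  simp only [Pmat_shift_eq_shearThird_mul_sub, ← hX, ]
  simpa only [sub_eq_add_neg] using (hTN.add_const (-X i)).mul_left hunit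

/-- **Lemma 7 ([LP20on, Lemma 9]).** If `X_i = P(u_i, v_i) ∈ K_a` and `(X_1,…,X_N)`
forms a `T_N` configuration, then for every `i` the translated family
`(T^i_1,…,T^i_N)`, with `T^i_j` built from `h^i_j = u_j - u_i`, `r^i_j = v_j - v_i`,
`a^i(t) = a(t + v_i) - a(v_i)` and `F^i(t) = F(t + v_i) - F(v_i) - a(v_i) t`,
also forms a `T_N` configuration. -/
theorem stmt_4 (a F : ℝ → ℝ)
    (ha : Differentiable ℝ a)
    (hF : ∀ x : ℝ, HasDerivAt F (a x) x)
    {N : ℕ} (u v : Fin N → ℝ)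
    (X : Fin N → Matrix (Fin 3) (Fin 2) ℝ)
    (hX : ∀ i, X i = Pmat a F (u i) (v i))
    (hTN : IsTNConfig X) :
    ∀ i, IsTNConfig (fun j =>
      Pmat (fun t => a (t + v i) - a (v i))
        (fun t => F (t + v i) - F (v i) - a (v i) * t)
        (u j - u i) (v j - v i)) :=
  stmt_4_general a F u v X hX hTN
end
end

section
/- Suppose a ∈ C²(ℝ) satisfies a' > 0 and a'' > 0 on ℝ, F ∈ C³(ℝ) satisfies F' = a, and a(0) = F(0) = 0. Let λ₁, λ₂ ∈ ℝ with λ₁ = 0 or λ₂ = 0. Then the system of equations s·a(t) = λ₁·s + λ₂·a(t) and s²/2 + F(t) = λ₁·t + λ₂·s has at most 4 distinct solutions (s,t) ∈ ℝ². -/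
/-!
Since `F' = a` is strictly increasing, `F` is strictly convex, and a strictly convex function
agrees with an affine one at no more than two points. If `λ₁ = 0`, the first equation reads
`(s - λ₂) a(t) = 0`: either `t = 0` and then `s ∈ {0, 2λ₂}`, or `s = λ₂` and `F(t) = λ₂² / 2`.
If `λ₂ = 0`, it reads `s (a(t) - λ₁) = 0`: either `s = 0` and `F(t) = λ₁ t`, or `t` is the unique
solution of `a(t) = λ₁` and `s² = 2 (λ₁ t - F(t))`.
-/

open Set Function

theorem Set.encard_le_two_of_not_lt_lt {α : Type*} [LinearOrder α] {s : Set α}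
    (h : ∀ x ∈ s, ∀ y ∈ s, ∀ z ∈ s, ¬(x < y ∧ y < z)) : s.encard ≤ 2 := by
  by_contra! hs
  obtain ⟨t, hts, ht⟩ := exists_subset_encard_eq (Order.add_one_le_of_lt hs)
  have htfin : t.Finite := finite_of_encard_eq_coe ht
  have hcard : htfin.toFinset.card = 3 := by
    rw [← ncard_eq_toFinset_card t htfin, ncard_def, ht]; rfl
  let e := htfin.toFinset.orderEmbOfFin hcard
  have he : ∀ i, e i ∈ s := fun i =>
    hts (htfin.mem_toFinset.1 (Finset.orderEmbOfFin_mem _ hcard i))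
  exact h _ (he 0) _ (he 1) _ (he 2) ⟨e.strictMono (by decide), e.strictMono (by decide)⟩

theorem Set.exists_finset_card_le_of_encard_le {α : Type*} {s : Set α} {n : ℕ}
    (h : s.encard ≤ n) : ∃ S : Finset α, S.card ≤ n ∧ ∀ x ∈ s, x ∈ S := by
  have hfin : s.Finite := finite_of_encard_le_coe h
  refine ⟨hfin.toFinset, ?_, fun x hx => hfin.mem_toFinset.2 hx⟩
  rw [← ncard_eq_toFinset_card s hfin]
  exact (encard_le_coe_iff_finite_ncard_le.1 h).2

theorem Set.encard_pair_le {α : Type*} (x y : α) : ({x, y} : Set α).encard ≤ 2 :=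
  (encard_insert_le _ _).trans (by rw [encard_singleton]; rfl)

theorem StrictConvexOn.encard_eq_affine_le_two {𝕜 : Type*} [Field 𝕜] [LinearOrder 𝕜]
    [IsStrictOrderedRing 𝕜] {s : Set 𝕜} {f : 𝕜 → 𝕜} (hf : StrictConvexOn 𝕜 s f) (m c : 𝕜) : {x ∈ s | f x = m * x + c}.encard ≤ 2 := by
  have slope_affine (u v : 𝕜) (huv : u < v) : (m * v + c - (m * u + c)) / (v - u) = m := by
    rw [add_sub_add_right_eq_sub, ← mul_sub, mul_div_cancel_right₀ _ (sub_ne_zero.2 huv.ne')]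
  refine encard_le_two_of_not_lt_lt fun x ⟨hx, hfx⟩ y ⟨_, hfy⟩ z ⟨hz, hfz⟩ ⟨hxy, hyz⟩ => ?_
  have hslope := hf.slope_strict_mono_adjacent hx hz hxy hyz
  rw [hfx, hfy, hfz, slope_affine x y hxy, slope_affine y z hyz] at hslope
  exact hslope.false

theorem encard_setOf_eq_and_sq_eq_le_two {a g : ℝ → ℝ} (ha : Injective a) (c : ℝ) :
    {p : ℝ × ℝ | a p.2 = c ∧ p.1 ^ 2 = g p.2}.encard ≤ 2 := by
  rcases em (∃ t₀, a t₀ = c) with ⟨t₀, ht₀⟩ | hc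
  · have hsub : {p : ℝ × ℝ | a p.2 = c ∧ p.1 ^ 2 = g p.2} ⊆
        (fun s => (s, t₀)) '' {s ∈ univ | s ^ 2 = 0 * s + g t₀} := by
      rintro ⟨s, t⟩ ⟨hat, hs⟩
      obtain rfl : t = t₀ := ha (hat.trans ht₀.symm)
      exact ⟨s, ⟨trivial, by rw [hs, zero_mul, zero_add]⟩, rfl⟩
    exact (encard_le_encard hsub).trans <| (encard_image_le _ _).trans <|
      (even_two.strictConvexOn_pow two_ne_zero).encard_eq_affine_le_two 0 _
  · have hempty : {p : ℝ × ℝ | a p.2 = c ∧ p.1 ^ 2 = g p.2} = ∅ :=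
      eq_empty_of_forall_notMem fun p hp => hc ⟨p.2, hp.1⟩
    simp [hempty]

def solutionSet (a F : ℝ → ℝ) (l1 l2 : ℝ) : Set (ℝ × ℝ) :=
  {p | p.1 * a p.2 = l1 * p.1 + l2 * a p.2 ∧ p.1 ^ 2 / 2 + F p.2 = l1 * p.2 + l2 * p.1}

theorem encard_solutionSet_zero_left_le_four {a F : ℝ → ℝ} (hF : StrictConvexOn ℝ univ F)
    (ha : ∀ t, a t = 0 → t = 0) (hF0 : F 0 = 0) (l2 : ℝ) : (solutionSet a F 0 l2).encard ≤ 4 := by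
  have hsub : solutionSet a F 0 l2 ⊆
      {(0, 0), (2 * l2, 0)} ∪ (fun t => (l2, t)) '' {t ∈ univ | F t = 0 * t + l2 ^ 2 / 2} := by
    rintro ⟨s, t⟩ ⟨h1, h2⟩
    have hfactor : (s - l2) * a t = 0 := by linear_combination h1
    rcases mul_eq_zero.1 hfactor with hs | hat
    · obtain rfl : s = l2 := sub_eq_zero.1 hs
      exact Or.inr ⟨t, ⟨trivial, by linear_combination h2⟩, rfl⟩
    · obtain rfl := ha t hat
      have hfactor : s * (s - 2 * l2) = 0 := by linear_combination 2 * h2 - 2 * hF0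
      rcases mul_eq_zero.1 hfactor with rfl | hs
      · simp
      · simp [sub_eq_zero.1 hs]
  calc (solutionSet a F 0 l2).encard ≤ 2 + 2 :=
        (encard_le_encard hsub).trans <| (encard_union_le _ _).trans <| add_le_add
          (encard_pair_le _ _) ((encard_image_le _ _).trans (hF.encard_eq_affine_le_two _ _))
    _ = 4 := rfl

theorem encard_solutionSet_zero_right_le_four {a F : ℝ → ℝ} (hF : StrictConvexOn ℝ univ F)
    (ha : Injective a) (l1 : ℝ) : (solutionSet a F l1 0).encard ≤ 4 := by
  have hsub : solutionSet a F l1 0 ⊆ (fun t => (0, t)) '' {t ∈ univ | F t = l1 * t + 0} ∪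
      {p | a p.2 = l1 ∧ p.1 ^ 2 = 2 * (l1 * p.2 - F p.2)} := by
    rintro ⟨s, t⟩ ⟨h1, h2⟩
    have hfactor : s * (a t - l1) = 0 := by linear_combination h1
    rcases mul_eq_zero.1 hfactor with rfl | hat
    · exact Or.inl ⟨t, ⟨trivial, by linear_combination h2⟩, rfl⟩
    · exact Or.inr ⟨sub_eq_zero.1 hat, by linear_combination 2 * h2⟩
  calc (solutionSet a F l1 0).encard ≤ 2 + 2 :=
        (encard_le_encard hsub).trans <| (encard_union_le _ _).trans <| add_le_add
          ((encard_image_le _ _).trans (hF.encard_eq_affine_le_two _ _))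
          (encard_setOf_eq_and_sq_eq_le_two (g := fun t => 2 * (l1 * t - F t)) ha l1)
    _ = 4 := rfl

theorem stmt_5_general (a F : ℝ → ℝ)
    (ha' : ∀ x : ℝ, 0 < deriv a x)
    (hF : ∀ x : ℝ, HasDerivAt F (a x) x)
    (ha0 : a 0 = 0) (hF0 : F 0 = 0)
    (l1 l2 : ℝ) (hl : l1 = 0 ∨ l2 = 0) :
    ∃ S : Finset (ℝ × ℝ), S.card ≤ 4 ∧
      ∀ p : ℝ × ℝ,
        (p.1 * a p.2 = l1 * p.1 + l2 * a p.2 ∧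
          p.1 ^ 2 / 2 + F p.2 = l1 * p.2 + l2 * p.1) → p ∈ S := by
  have ha_mono : StrictMono a := strictMono_of_deriv_pos ha'
  have hF_deriv : deriv F = a := funext fun x => (hF x).deriv
  have hF_conv : StrictConvexOn ℝ univ F :=
    StrictMono.strictConvexOn_univ_of_deriv
      (continuous_iff_continuousAt.2 fun x => (hF x).continuousAt) (hF_deriv ▸ ha_mono)
  apply exists_finset_card_le_of_encard_le (s := solutionSet a F l1 l2)
  rcases hl with rfl | rfl
  · exact encard_solutionSet_zero_left_le_four hF_conv
      (fun t ht => ha_mono.injective (ht.trans ha0.symm)) hF0 l2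
  · exact encard_solutionSet_zero_right_le_four hF_conv ha_mono.injective l1

/-- **Lemma 8 ([LP20on, Lemma 19]).** If `a ∈ C²` with `a' > 0`, `a'' > 0`, `F ∈ C³`
with `F' = a`, `a(0) = F(0) = 0`, and `λ₁ = 0` or `λ₂ = 0`, then the system
`s·a(t) = λ₁ s + λ₂ a(t)`, `s²/2 + F(t) = λ₁ t + λ₂ s` has at most `4` distinct
solutions. -/
theorem stmt_5 (a F : ℝ → ℝ)
    (ha : ContDiff ℝ 2 a)
    (ha' : ∀ x : ℝ, 0 < deriv a x)
    (ha'' : ∀ x : ℝ, 0 < deriv (deriv a) x)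
    (hFc : ContDiff ℝ 3 F)
    (hF : ∀ x : ℝ, HasDerivAt F (a x) x)
    (ha0 : a 0 = 0) (hF0 : F 0 = 0)
    (l1 l2 : ℝ) (hl : l1 = 0 ∨ l2 = 0) :
    ∃ S : Finset (ℝ × ℝ), S.card ≤ 4 ∧
      ∀ p : ℝ × ℝ,
        (p.1 * a p.2 = l1 * p.1 + l2 * a p.2 ∧
          p.1 ^ 2 / 2 + F p.2 = l1 * p.2 + l2 * p.1) → p ∈ S :=
  stmt_5_general a F ha' hF ha0 hF0 l1 l2 hl
end

section
/- Let λ₁ and λ₂ be two nonzero real constants. Suppose a ∈ C²(ℝ) satisfies a' > 0 and a'' > 0 on ℝ, F ∈ C³(ℝ) satisfies F' = a, and a(0) = F(0) = 0. Then the system s·a(t) = λ₁·s + λ₂·a(t), s²/2 + F(t) = λ₁·t + λ₂·s has at most two distinct solutions (s,t) ∈ ℝ² satisfying a(t) < λ₁. -/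
/-- **Lemma 9(a) ([LP20on, Lemma 20]).** For nonzero `λ₁, λ₂`, `a ∈ C²` with `a' > 0`,
`a'' > 0`, `F ∈ C³` with `F' = a`, `a(0) = F(0) = 0`, the system
`s·a(t) = λ₁ s + λ₂ a(t)`, `s²/2 + F(t) = λ₁ t + λ₂ s` has at most two distinct
solutions satisfying `a(t) < λ₁`. -/
theorem stmt_6 (l1 l2 : ℝ) (hl1 : l1 ≠ 0) (hl2 : l2 ≠ 0)
    (a F : ℝ → ℝ)
    (ha : ContDiff ℝ 2 a)
    (ha' : ∀ x : ℝ, 0 < deriv a x)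
    (ha'' : ∀ x : ℝ, 0 < deriv (deriv a) x)
    (hFc : ContDiff ℝ 3 F)
    (hF : ∀ x : ℝ, HasDerivAt F (a x) x)
    (ha0 : a 0 = 0) (hF0 : F 0 = 0) :
    ∃ S : Finset (ℝ × ℝ), S.card ≤ 2 ∧
      ∀ p : ℝ × ℝ,
        (p.1 * a p.2 = l1 * p.1 + l2 * a p.2 ∧
          p.1 ^ 2 / 2 + F p.2 = l1 * p.2 + l2 * p.1 ∧
          a p.2 < l1) → p ∈ S := by
  classical
  -- basic differentiability facts
  have haDiff : Differentiable ℝ a := ha.differentiable (by norm_num)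
  have aStrict : StrictMono a := strictMono_of_deriv_pos ha'
  have a'Strict : StrictMono (deriv a) := strictMono_of_deriv_pos ha''
  set g : ℝ → ℝ := fun t => l2 * a t / (a t - l1) with hgdef
  set h : ℝ → ℝ := fun t => (g t) ^ 2 / 2 + F t - l1 * t - l2 * g t with hhdef
  set φ : ℝ → ℝ :=
    fun t => l1 ^ 2 * l2 ^ 2 * deriv a t / (l1 - a t) ^ 3 + (a t - l1) with hφdef
  set D : Set ℝ := {t | a t < l1} with hDdef
  have hDopen : IsOpen D := isOpen_lt haDiff.continuous continuous_const
  have hDconv : Convex ℝ D := by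
    rw [convex_iff_ordConnected]
    constructor
    intro x hx y hy z hz
    exact lt_of_le_of_lt (aStrict.monotone hz.2) hy
  have hne : ∀ t ∈ D, a t - l1 ≠ 0 := fun t ht => sub_ne_zero.mpr (ne_of_lt ht)
  -- derivative of h on D
  have hH : ∀ t ∈ D, HasDerivAt h (φ t) t := by
    intro t ht
    have hat : HasDerivAt a (deriv a t) t := (haDiff t).hasDerivAt
    have hg' : HasDerivAt g
        ((l2 * deriv a t * (a t - l1) - l2 * a t * deriv a t) / (a t - l1) ^ 2) t := by
      exact (hat.const_mul l2).div (hat.sub_const l1) (hne t ht)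
    set G := (l2 * deriv a t * (a t - l1) - l2 * a t * deriv a t) / (a t - l1) ^ 2 with hG
    have hh' : HasDerivAt h (g t * G + a t - l1 * 1 - l2 * G) t := by
      have h1 : HasDerivAt (fun t => (g t) ^ 2 / 2) (g t * G) t := by
        have := (hg'.pow 2).div_const 2
        simpa [mul_comm, mul_assoc, mul_div_assoc] using this
      have := ((h1.add (hF t)).sub ((hasDerivAt_id t).const_mul l1)).sub (hg'.const_mul l2)
      exact this.congr_of_eventuallyEq (Filter.Eventually.of_forall fun x => by simp [hhdef])
    have heq : g t * G + a t - l1 * 1 - l2 * G = φ t := by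
      have hne' := hne t ht
      have hne3 : (l1 - a t) ≠ 0 := by
        intro hz; exact hne' (by linarith [sub_eq_zero.mp hz])
      simp only [hG, hgdef, hφdef]
      field_simp
      ring
    rwa [heq] at hh'
  -- φ is strictly monotone on D
  have hφmono : StrictMonoOn φ D := by
    intro t1 h1 t2 h2 h12
    have h1' : a t1 < l1 := h1
    have h2' : a t2 < l1 := h2
    have hb1 : (0:ℝ) < l1 - a t1 := sub_pos.mpr h1'
    have hb2 : (0:ℝ) < l1 - a t2 := sub_pos.mpr h2'
    have hlt : a t1 < a t2 := aStrict h12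
    have hb21 : l1 - a t2 < l1 - a t1 := by linarith
    have hcube : (l1 - a t2) ^ 3 < (l1 - a t1) ^ 3 := by
      exact pow_lt_pow_left₀ hb21 hb2.le (by norm_num)
    have hcube2 : (0:ℝ) < (l1 - a t2) ^ 3 := by positivity
    have hnum : deriv a t1 < deriv a t2 := a'Strict h12
    have hc : (0:ℝ) < l1 ^ 2 * l2 ^ 2 := by positivity
    have hdiv : l1 ^ 2 * l2 ^ 2 * deriv a t1 / (l1 - a t1) ^ 3 <
        l1 ^ 2 * l2 ^ 2 * deriv a t2 / (l1 - a t2) ^ 3 := by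
      apply div_lt_div₀
      · nlinarith [(ha' t1).le]
      · exact hcube.le
      · exact mul_nonneg (by positivity) (ha' t2).le
      · exact hcube2
    have : a t1 - l1 < a t2 - l1 := by linarith
    simp only [hφdef]
    linarith
  -- h is strictly convex on D
  have hconv : StrictConvexOn ℝ D h := by
    apply StrictMonoOn.strictConvexOn_of_deriv hDconv
    · exact fun t ht => (hH t ht).continuousAt.continuousWithinAt
    · rw [hDopen.interior_eq]
      intro t1 h1 t2 h2 h12
      rw [(hH t1 h1).deriv, (hH t2 h2).deriv]
      exact hφmono h1 h2 h12
  -- zero set of h on D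
  set Z : Set ℝ := {t | t ∈ D ∧ h t = 0} with hZdef
  have key : ∀ x y z : ℝ, x < y → y < z → x ∈ Z → y ∈ Z → z ∈ Z → False := by
    intro x y z hxy hyz hx hy hz
    have hd : (0:ℝ) < z - x := by linarith
    set c1 : ℝ := (z - y) / (z - x) with hc1
    set c2 : ℝ := (y - x) / (z - x) with hc2
    have hd' : z - x ≠ 0 := ne_of_gt hd
    have hc1p : 0 < c1 := div_pos (by linarith) hd
    have hc2p : 0 < c2 := div_pos (by linarith) hd
    have hsum : c1 + c2 = 1 := by rw [hc1, hc2]; field_simp; ring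
    have hcomb : c1 * x + c2 * z = y := by rw [hc1, hc2]; field_simp; ring
    have := hconv.2 hx.1 hz.1 (by linarith : x ≠ z) hc1p hc2p hsum
    simp only [smul_eq_mul, hcomb] at this
    rw [hx.2, hy.2, hz.2] at this
    simp at this
  have tri : ∀ x y z : ℝ, x ∈ Z → y ∈ Z → z ∈ Z → x ≠ y → x ≠ z → y ≠ z → False := by
    intro x y z hx hy hz hxy hxz hyz
    rcases lt_trichotomy x y with h1 | h1 | h1
    · rcases lt_trichotomy y z with h2 | h2 | h2
      · exact key x y z h1 h2 hx hy hz
      · exact hyz h2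
      · rcases lt_trichotomy x z with h3 | h3 | h3
        · exact key x z y h3 h2 hx hz hy
        · exact hxz h3
        · exact key z x y h3 h1 hz hx hy
    · exact hxy h1
    · rcases lt_trichotomy x z with h2 | h2 | h2
      · exact key y x z h1 h2 hy hx hz
      · exact hxz h2
      · rcases lt_trichotomy y z with h3 | h3 | h3
        · exact key y z x h3 h2 hy hz hx
        · exact hyz h3
        · exact key z y x h3 h1 hz hy hx
  -- Z is contained in a two-element set
  obtain ⟨t1, t2, hsub⟩ : ∃ t1 t2 : ℝ, Z ⊆ {t1, t2} := by
    by_cases hZe : Z = ∅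
    · exact ⟨0, 0, by simp [hZe]⟩
    · obtain ⟨t1, ht1⟩ := Set.nonempty_iff_ne_empty.mpr hZe
      by_cases hZs : Z ⊆ {t1}
      · exact ⟨t1, t1, fun x hx => by simp [hZs hx]⟩
      · obtain ⟨t2, ht2, ht2ne⟩ : ∃ t2 ∈ Z, t2 ≠ t1 := by
          by_contra hc
          push_neg at hc
          exact hZs fun x hx => by simp [hc x hx]
        refine ⟨t1, t2, fun x hx => ?_⟩
        by_contra hxne
        simp only [Set.mem_insert_iff, Set.mem_singleton_iff, not_or] at hxne
        exact tri x t1 t2 hx ht1 ht2 hxne.1 hxne.2 ht2ne.symm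
  -- final finset
  refine ⟨{(g t1, t1), (g t2, t2)}, ?_, ?_⟩
  · exact (Finset.card_insert_le _ _).trans (by simp)
  · rintro ⟨s, t⟩ ⟨e1, e2, e3⟩
    simp only at e1 e2 e3
    have htD : t ∈ D := e3
    have hne' := hne t htD
    have hs : s = g t := by
      have : s * (a t - l1) = l2 * a t := by ring_nf; ring_nf at e1; linarith
      simp only [hgdef]
      rw [eq_div_iff hne']
      linarith [this]
    have hth : h t = 0 := by
      simp only [hhdef, ← hs]
      linarith [e2]
    have hz : t ∈ Z := ⟨htD, hth⟩
    have := hsub hz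
    simp only [Set.mem_insert_iff, Set.mem_singleton_iff] at this
    rcases this with rfl | rfl
    · simp [hs]
    · simp [hs]
end

section
/- Let λ₁ and λ₂ be two nonzero real constants. Suppose a ∈ C²(ℝ) satisfies a' > 0 and a'' > 0 on ℝ, F ∈ C³(ℝ) satisfies F' = a, and a(0) = F(0) = 0. Let (s,t) ≠ (0,0) be a solution of the system s·a(t) = λ₁·s + λ₂·a(t), s²/2 + F(t) = λ₁·t + λ₂·s, with s² − t·a(t) ≠ 0. If λ₁ > 0 and a(t) < λ₁, then s² − t·a(t) > 0; if λ₁ < 0 and a(t) > λ₁, then s² − t·a(t) < 0. -/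
/-- **Lemma 9(b) ([LP20on, Lemma 21]).** For nonzero `λ₁, λ₂`, `a ∈ C²` with `a' > 0`,
`a'' > 0`, `F ∈ C³` with `F' = a`, `a(0) = F(0) = 0`: if `(s,t) ≠ (0,0)` solves the
system `s·a(t) = λ₁ s + λ₂ a(t)`, `s²/2 + F(t) = λ₁ t + λ₂ s` and `s² - t·a(t) ≠ 0`,
then `λ₁ > 0` and `a(t) < λ₁` imply `s² - t·a(t) > 0`, while `λ₁ < 0` and `a(t) > λ₁`
imply `s² - t·a(t) < 0`. -/
theorem stmt_7 (l1 l2 : ℝ) (hl1 : l1 ≠ 0) (hl2 : l2 ≠ 0)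
    (a F : ℝ → ℝ)
    (ha : ContDiff ℝ 2 a)
    (ha' : ∀ x : ℝ, 0 < deriv a x)
    (ha'' : ∀ x : ℝ, 0 < deriv (deriv a) x)
    (hFc : ContDiff ℝ 3 F)
    (hF : ∀ x : ℝ, HasDerivAt F (a x) x)
    (ha0 : a 0 = 0) (hF0 : F 0 = 0)
    (s t : ℝ) (hst : (s, t) ≠ ((0 : ℝ), (0 : ℝ)))
    (heq1 : s * a t = l1 * s + l2 * a t)
    (heq2 : s ^ 2 / 2 + F t = l1 * t + l2 * s)
    (hnz : s ^ 2 - t * a t ≠ 0) :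
    (0 < l1 → a t < l1 → 0 < s ^ 2 - t * a t) ∧
      (l1 < 0 → l1 < a t → s ^ 2 - t * a t < 0) := by
  -- the algebraic identity
  have hid : 2 * l1 * (s ^ 2 - t * a t) = a t * (s ^ 2 - 2 * F t) := by
    linear_combination (2 * a t) * heq2 - 2 * s * heq1
  -- t ≠ 0
  have ht0 : t ≠ 0 := by
    intro h
    apply hnz
    have : a t = 0 := by rw [h]; exact ha0
    have h2 : 2 * l1 * (s ^ 2 - t * a t) = 0 := by rw [hid, this]; ring
    exact (mul_eq_zero.mp h2).resolve_left (mul_ne_zero two_ne_zero hl1)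
  -- differentiability facts
  have hda : Differentiable ℝ a := ha.differentiable (by norm_num)
  have hca : ContDiff ℝ 1 (deriv a) := by
    have := (contDiff_succ_iff_deriv (n := 1) (f := a)).mp (by
      exact ha)
    exact this.2.2
  have hda' : Differentiable ℝ (deriv a) := hca.differentiable (by norm_num)
  -- a is strictly monotone, so sign of a t matches sign of t
  have hmono : StrictMono a := strictMono_of_deriv_pos ha'
  -- g'(x) = x * a'(x) - a(x)
  have hg' : ∀ x : ℝ, HasDerivAt (fun y => y * deriv a y - a y) (x * deriv (deriv a) x) x := by
    intro x
    have h1 : HasDerivAt (fun y => y * deriv a y) (1 * deriv a x + x * deriv (deriv a) x) x :=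
      (hasDerivAt_id x).mul (hda' x).hasDerivAt
    have h2 := h1.sub (hda x).hasDerivAt
    exact h2.congr_deriv (by ring)
  have hg'c : Continuous (fun y => y * deriv a y - a y) :=
    (continuous_id.mul hca.continuous).sub hda.continuous
  have hg'deriv : ∀ x : ℝ, deriv (fun y => y * deriv a y - a y) x = x * deriv (deriv a) x :=
    fun x => (hg' x).deriv
  -- g' > 0 for x ≠ 0
  have hg'pos : ∀ x : ℝ, x ≠ 0 → 0 < x * deriv a x - a x := by
    intro x hx
    have h0 : (0 : ℝ) * deriv a 0 - a 0 = 0 := by rw [ha0]; ring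
    rcases hx.lt_or_gt with hneg | hpos
    · have : StrictAntiOn (fun y => y * deriv a y - a y) (Set.Iic 0) := by
        apply strictAntiOn_of_deriv_neg (convex_Iic 0) hg'c.continuousOn
        intro y hy
        rw [interior_Iic] at hy
        rw [hg'deriv]
        exact mul_neg_of_neg_of_pos hy (ha'' y)
      have := this (Set.mem_Iic.mpr hneg.le) (Set.mem_Iic.mpr le_rfl) hneg
      simpa [ha0] using this
    · have : StrictMonoOn (fun y => y * deriv a y - a y) (Set.Ici 0) := by
        apply strictMonoOn_of_deriv_pos (convex_Ici 0) hg'c.continuousOn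
        intro y hy
        rw [interior_Ici] at hy
        rw [hg'deriv]
        exact mul_pos hy (ha'' y)
      have := this (Set.mem_Ici.mpr le_rfl) (Set.mem_Ici.mpr hpos.le) hpos
      simpa [ha0] using this
  -- g(x) = x * a(x) - 2 F(x)
  have hg : ∀ x : ℝ, HasDerivAt (fun y => y * a y - 2 * F y) (x * deriv a x - a x) x := by
    intro x
    have h1 : HasDerivAt (fun y => y * a y) (1 * a x + x * deriv a x) x :=
      (hasDerivAt_id x).mul (hda x).hasDerivAt
    have h2 := h1.sub ((hF x).const_mul 2)
    exact h2.congr_deriv (by ring)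
  have hgc : Continuous (fun y => y * a y - 2 * F y) :=
    (continuous_id.mul hda.continuous).sub
      (continuous_const.mul hFc.continuous)
  have hgderiv : ∀ x : ℝ, deriv (fun y => y * a y - 2 * F y) x = x * deriv a x - a x :=
    fun x => (hg x).deriv
  have hg0 : (0 : ℝ) * a 0 - 2 * F 0 = 0 := by rw [ha0, hF0]; ring
  -- main sign fact: a t * (t * a t - 2 * F t) > 0
  have hkey : 0 < a t * (t * a t - 2 * F t) := by
    rcases ht0.lt_or_gt with hneg | hpos
    · have hat : a t < 0 := by
        have := hmono hneg
        rwa [ha0] at this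
      have hgmono : StrictMonoOn (fun y => y * a y - 2 * F y) (Set.Iic 0) := by
        apply strictMonoOn_of_deriv_pos (convex_Iic 0) hgc.continuousOn
        intro y hy
        rw [interior_Iic] at hy
        rw [hgderiv]
        exact hg'pos y hy.ne
      have := hgmono (Set.mem_Iic.mpr hneg.le) (Set.mem_Iic.mpr le_rfl) hneg
      simp only [hg0] at this
      exact mul_pos_of_neg_of_neg hat (by simpa using this)
    · have hat : 0 < a t := by
        have := hmono hpos
        rwa [ha0] at this
      have hgmono : StrictMonoOn (fun y => y * a y - 2 * F y) (Set.Ici 0) := by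
        apply strictMonoOn_of_deriv_pos (convex_Ici 0) hgc.continuousOn
        intro y hy
        rw [interior_Ici] at hy
        rw [hgderiv]
        exact hg'pos y (ne_of_gt hy)
      have := hgmono (Set.mem_Ici.mpr le_rfl) (Set.mem_Ici.mpr hpos.le) hpos
      simp only [hg0] at this
      exact mul_pos hat (by simpa using this)
  -- combine: (2 l1 - a t) * (s^2 - t a t) = a t * (t a t - 2 F t) > 0
  have hfinal : 0 < (2 * l1 - a t) * (s ^ 2 - t * a t) := by nlinarith [hid, hkey]
  constructor
  · intro h1 h2
    nlinarith [hfinal]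
  · intro h1 h2
    nlinarith [hfinal]
end

section
/- Let λ₁ > 0 and λ₂ ≠ 0 be real constants. Suppose a ∈ C²(ℝ) satisfies a' > 0 and a'' > 0 on ℝ, F ∈ C³(ℝ) satisfies F' = a, and a(0) = F(0) = 0. If (s₁,t₁) and (s₂,t₂) are two solutions of the system s·a(t) = λ₁·s + λ₂·a(t), s²/2 + F(t) = λ₁·t + λ₂·s, both different from (0,0), and λ₁ < a(t₁) < a(t₂), then s₁² − t₁·a(t₁) > s₂² − t₂·a(t₂). -/
/-- **Lemma 9(c) ([LP20on, Lemma 22]).** For `λ₁ > 0`, `λ₂ ≠ 0`, `a ∈ C²` with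
`a' > 0`, `a'' > 0`, `F ∈ C³` with `F' = a`, `a(0) = F(0) = 0`: if `(s₁,t₁)` and
`(s₂,t₂)` are two nontrivial solutions of the system `s·a(t) = λ₁ s + λ₂ a(t)`,
`s²/2 + F(t) = λ₁ t + λ₂ s` with `λ₁ < a(t₁) < a(t₂)`, then
`s₁² - t₁ a(t₁) > s₂² - t₂ a(t₂)`. -/
theorem stmt_8 (l1 l2 : ℝ) (hl1 : 0 < l1) (hl2 : l2 ≠ 0)
    (a F : ℝ → ℝ)
    (ha : ContDiff ℝ 2 a)
    (ha' : ∀ x : ℝ, 0 < deriv a x)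
    (ha'' : ∀ x : ℝ, 0 < deriv (deriv a) x)
    (hFc : ContDiff ℝ 3 F)
    (hF : ∀ x : ℝ, HasDerivAt F (a x) x)
    (ha0 : a 0 = 0) (hF0 : F 0 = 0)
    (s1 t1 s2 t2 : ℝ)
    (hst1 : (s1, t1) ≠ ((0 : ℝ), (0 : ℝ)))
    (hst2 : (s2, t2) ≠ ((0 : ℝ), (0 : ℝ)))
    (heq11 : s1 * a t1 = l1 * s1 + l2 * a t1)
    (heq12 : s1 ^ 2 / 2 + F t1 = l1 * t1 + l2 * s1)
    (heq21 : s2 * a t2 = l1 * s2 + l2 * a t2)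
    (heq22 : s2 ^ 2 / 2 + F t2 = l1 * t2 + l2 * s2)
    (hord : l1 < a t1 ∧ a t1 < a t2) :
    s2 ^ 2 - t2 * a t2 < s1 ^ 2 - t1 * a t1 := by
  obtain ⟨h1, h2⟩ := hord
  have hda : Differentiable ℝ a := ha.differentiable (by norm_num)
  have hca : Continuous a := hda.continuous
  have hcF : Continuous F := (hFc.differentiable (by norm_num)).continuous
  have hmono : StrictMono a := strictMono_of_deriv_pos ha'
  have ht12 : t1 < t2 := hmono.lt_iff_lt.mp h2
  have ht1pos : 0 < t1 := by
    by_contra h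
    push_neg at h
    have := hmono.monotone h
    rw [ha0] at this
    linarith
  have hagt : ∀ x, t1 ≤ x → l1 < a x := fun x hx => lt_of_lt_of_le h1 (hmono.monotone hx)
  set ψ : ℝ → ℝ := fun t => 2*l1*t + 2*l2^2 * a t / (a t - l1) - 2 * F t - t * a t with hψ
  have hne1 : a t1 - l1 ≠ 0 := sub_ne_zero.mpr (ne_of_gt h1)
  have hne2 : a t2 - l1 ≠ 0 := sub_ne_zero.mpr (ne_of_gt (lt_trans h1 h2))
  have hs1 : s1 * (a t1 - l1) = l2 * a t1 := by linear_combination heq11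
  have hs2 : s2 * (a t2 - l1) = l2 * a t2 := by linear_combination heq21
  have hval1 : ψ t1 = s1 ^ 2 - t1 * a t1 := by
    have hdiv : 2*l2^2 * a t1 / (a t1 - l1) = 2 * l2 * s1 := by
      field_simp
      linear_combination (-1)*hs1
    simp only [hψ]
    rw [hdiv]
    linarith
  have hval2 : ψ t2 = s2 ^ 2 - t2 * a t2 := by
    have hdiv : 2*l2^2 * a t2 / (a t2 - l1) = 2 * l2 * s2 := by
      field_simp
      linear_combination (-1)*hs2
    simp only [hψ]
    rw [hdiv]
    linarith
  have hderiv : ∀ x ∈ interior (Set.Ici t1),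
      deriv ψ x < 0 := by
    intro x hx
    rw [interior_Ici] at hx
    have hx1 : t1 < x := hx
    have hax : l1 < a x := hagt x hx1.le
    have hnex : a x - l1 ≠ 0 := sub_ne_zero.mpr (ne_of_gt hax)
    have hax' : 0 < deriv a x := ha' x
    have hda' : HasDerivAt a (deriv a x) x := (hda x).hasDerivAt
    have hd1 : HasDerivAt (fun t => 2*l2^2 * a t / (a t - l1))
        ((2*l2^2 * deriv a x * (a x - l1) - 2*l2^2 * a x * deriv a x) / (a x - l1)^2) x :=
      ((hda'.const_mul (2*l2^2)).div (hda'.sub_const l1) hnex)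
    have hdψ : HasDerivAt ψ
        (2*l1 - 3*a x - x * deriv a x - 2*l1*l2^2 * deriv a x / (a x - l1)^2) x := by
      have h := (((hasDerivAt_id x).const_mul (2*l1)).add hd1).sub ((hF x).const_mul 2)
        |>.sub ((hasDerivAt_id x).mul hda')
      refine h.congr_deriv ?_
      simp only [id]
      field_simp
      ring
    rw [hdψ.deriv]
    have hpos : 0 < 2*l1*l2^2 * deriv a x / (a x - l1)^2 := by
      apply div_pos
      · positivity
      · positivity
    nlinarith [mul_pos (lt_trans ht1pos hx1) hax']
  have hcont : ContinuousOn ψ (Set.Ici t1) := by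
    apply ContinuousOn.sub
    apply ContinuousOn.sub
    apply ContinuousOn.add
    · exact (continuous_const.mul continuous_id).continuousOn
    · exact ContinuousOn.div ((continuous_const.mul hca).continuousOn)
        ((hca.sub continuous_const).continuousOn)
        (fun x hx => sub_ne_zero.mpr (ne_of_gt (hagt x hx)))
    · exact (continuous_const.mul hcF).continuousOn
    · exact (continuous_id.mul hca).continuousOn
  have hanti : StrictAntiOn ψ (Set.Ici t1) :=
    strictAntiOn_of_deriv_neg (convex_Ici t1) hcont hderiv
  have := hanti (Set.self_mem_Ici) (Set.mem_Ici.mpr ht12.le) ht12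
  rw [hval1, hval2] at this
  exact this
end
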